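/- arXiv:2305.07548 — 13 statements merged into one kernel-verified Lean document; each statement's English description precedes it below -/
import Mathlib

section
/- Let ξ, μ, v be a Darboux frame along a curve in a Myller configuration with invariants G, K, T, where G² + K² ≠ 0. The curve is a ξ-helix with constant angle θ (i.e., ⟨ξ, d⟩ = cos θ for a fixed unit vector d) if and only if the axis d is given by d = (cos θ) ξ ∓ (sin θ)(K/√(G²+K²)) μ ± (sin θ)(G/√(G²+K²)) v. -/
open Real

lemma expand3 {e₀ e₁ e₂ : EuclideanSpace ℝ (Fin 3)}
    (h : Orthonormal ℝ ![e₀, e₁, e₂]) (d : EuclideanSpace ℝ (Fin 3)) :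
    d = (inner ℝ e₀ d : ℝ) • e₀ + (inner ℝ e₁ d : ℝ) • e₁ + (inner ℝ e₂ d : ℝ) • e₂ := by
  have hcard : Fintype.card (Fin 3) = Module.finrank ℝ (EuclideanSpace ℝ (Fin 3)) := by simp
  let B0 := basisOfOrthonormalOfCardEqFinrank h hcard
  have hB0 : (B0 : Fin 3 → EuclideanSpace ℝ (Fin 3)) = ![e₀, e₁, e₂] :=
    coe_basisOfOrthonormalOfCardEqFinrank h hcard
  have horth : Orthonormal ℝ (B0 : Fin 3 → EuclideanSpace ℝ (Fin 3)) := by rw [hB0]; exact h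
  let B := B0.toOrthonormalBasis horth
  have hB : ∀ i, B i = ![e₀, e₁, e₂] i := by
    intro i; rw [← hB0]; simp [B, Module.Basis.coe_toOrthonormalBasis]
  have := B.sum_repr' d
  rw [Fin.sum_univ_three] at this
  rw [hB 0, hB 1, hB 2] at this
  simpa using this.symm

theorem stmt2
    (ξ μ v : ℝ → EuclideanSpace ℝ (Fin 3)) (G K T : ℝ → ℝ)
    (hξs : ContDiff ℝ (⊤ : ℕ∞) ξ) (hμs : ContDiff ℝ (⊤ : ℕ∞) μ) (hvs : ContDiff ℝ (⊤ : ℕ∞) v)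
    (hGs : ContDiff ℝ (⊤ : ℕ∞) G) (hKs : ContDiff ℝ (⊤ : ℕ∞) K) (hTs : ContDiff ℝ (⊤ : ℕ∞) T)
    (huξ : ∀ s, ‖ξ s‖ = 1) (huμ : ∀ s, ‖μ s‖ = 1) (huv : ∀ s, ‖v s‖ = 1)
    (hξμ : ∀ s, (inner ℝ (ξ s) (μ s) : ℝ) = 0)
    (hξv : ∀ s, (inner ℝ (ξ s) (v s) : ℝ) = 0)
    (hμv : ∀ s, (inner ℝ (μ s) (v s) : ℝ) = 0)
    (hdξ : ∀ s, HasDerivAt ξ (G s • μ s + K s • v s) s)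
    (hdμ : ∀ s, HasDerivAt μ (-(G s) • ξ s + T s • v s) s)
    (hdv : ∀ s, HasDerivAt v (-(K s) • ξ s - T s • μ s) s)
    (hGK : ∀ s, G s ^ 2 + K s ^ 2 ≠ 0)
    (d : EuclideanSpace ℝ (Fin 3)) (θ : ℝ) (hd : ‖d‖ = 1) :
    (∀ s, (inner ℝ (ξ s) d : ℝ) = Real.cos θ) ↔
      (∃ ε : ℝ, (ε = 1 ∨ ε = -1) ∧ ∀ s,
        d = Real.cos θ • ξ s
            - (ε * Real.sin θ * (K s / Real.sqrt (G s ^ 2 + K s ^ 2))) • μ s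
            + (ε * Real.sin θ * (G s / Real.sqrt (G s ^ 2 + K s ^ 2))) • v s) := by
  have hξξ : ∀ s, (inner ℝ (ξ s) (ξ s) : ℝ) = 1 := by
    intro s; rw [real_inner_self_eq_norm_mul_norm, huξ s]; ring
  have hμμ : ∀ s, (inner ℝ (μ s) (μ s) : ℝ) = 1 := by
    intro s; rw [real_inner_self_eq_norm_mul_norm, huμ s]; ring
  have hvv : ∀ s, (inner ℝ (v s) (v s) : ℝ) = 1 := by
    intro s; rw [real_inner_self_eq_norm_mul_norm, huv s]; ring
  have hμξ : ∀ s, (inner ℝ (μ s) (ξ s) : ℝ) = 0 := fun s => by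
    rw [real_inner_comm]; exact hξμ s
  have hvξ : ∀ s, (inner ℝ (v s) (ξ s) : ℝ) = 0 := fun s => by
    rw [real_inner_comm]; exact hξv s
  have hvμ : ∀ s, (inner ℝ (v s) (μ s) : ℝ) = 0 := fun s => by
    rw [real_inner_comm]; exact hμv s
  constructor
  · intro hhel
    set b : ℝ → ℝ := fun s => (inner ℝ (μ s) d : ℝ) with hbdef
    set c : ℝ → ℝ := fun s => (inner ℝ (v s) d : ℝ) with hcdef
    have hon : ∀ s, Orthonormal ℝ ![ξ s, μ s, v s] := by
      intro s
      rw [orthonormal_iff_ite]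
      intro i j
      fin_cases i <;> fin_cases j
      · rw [if_pos (by decide)]; exact hξξ s
      · rw [if_neg (by decide)]; exact hξμ s
      · rw [if_neg (by decide)]; exact hξv s
      · rw [if_neg (by decide)]; exact hμξ s
      · rw [if_pos (by decide)]; exact hμμ s
      · rw [if_neg (by decide)]; exact hμv s
      · rw [if_neg (by decide)]; exact hvξ s
      · rw [if_neg (by decide)]; exact hvμ s
      · rw [if_pos (by decide)]; exact hvv s
    have hexp : ∀ s, d = Real.cos θ • ξ s + b s • μ s + c s • v s := by
      intro s
      have := expand3 (hon s) d
      rwa [hhel s] at this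
    have hnorm : ∀ s, Real.cos θ ^ 2 + b s ^ 2 + c s ^ 2 = 1 := by
      intro s
      have h1 : (inner ℝ d d : ℝ) = 1 := by
        rw [real_inner_self_eq_norm_mul_norm, hd]; ring
      nth_rewrite 1 [hexp s] at h1
      simp only [inner_add_left, real_inner_smul_left] at h1
      rw [hhel s] at h1
      nlinarith [h1]
    have hGbKc : ∀ s, G s * b s + K s * c s = 0 := by
      intro s
      have h1 : HasDerivAt (fun t => (inner ℝ (ξ t) d : ℝ))
          ((inner ℝ (ξ s) (0 : EuclideanSpace ℝ (Fin 3)) : ℝ) +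
            (inner ℝ (G s • μ s + K s • v s) d : ℝ)) s :=
        HasDerivAt.inner ℝ (hdξ s) (hasDerivAt_const s d)
      have h2 : HasDerivAt (fun t => (inner ℝ (ξ t) d : ℝ)) 0 s := by
        have : (fun t => (inner ℝ (ξ t) d : ℝ)) = fun _ => Real.cos θ := funext hhel
        rw [this]; exact hasDerivAt_const s _
      have h3 := h1.unique h2
      rw [inner_zero_right, inner_add_left, real_inner_smul_left, real_inner_smul_left] at h3
      simpa using h3
    set n : ℝ → ℝ := fun s => G s ^ 2 + K s ^ 2 with hndef
    have hnpos : ∀ s, 0 < n s := by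
      intro s
      rcases lt_or_eq_of_le (by positivity : (0:ℝ) ≤ n s) with h | h
      · exact h
      · exact absurd h.symm (hGK s)
    have hsq : ∀ s, Real.sqrt (n s) * Real.sqrt (n s) = n s := fun s =>
      Real.mul_self_sqrt (le_of_lt (hnpos s))
    have hsqne : ∀ s, Real.sqrt (n s) ≠ 0 := fun s =>
      ne_of_gt (Real.sqrt_pos.mpr (hnpos s))
    set l : ℝ → ℝ := fun s => (b s * K s - c s * G s) / Real.sqrt (n s) with hldef
    have hb : ∀ s, b s = l s * (K s / Real.sqrt (n s)) := by
      intro s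
      have key : l s * (K s / Real.sqrt (n s)) = (b s * K s - c s * G s) * K s / n s := by
        simp only [hldef]
        rw [div_mul_div_comm, hsq s]
      rw [key, eq_div_iff (ne_of_gt (hnpos s))]
      simp only [hndef]
      linear_combination G s * hGbKc s
    have hc : ∀ s, c s = -(l s * (G s / Real.sqrt (n s))) := by
      intro s
      have key : l s * (G s / Real.sqrt (n s)) = (b s * K s - c s * G s) * G s / n s := by
        simp only [hldef]
        rw [div_mul_div_comm, hsq s]
      rw [key, ← neg_div, eq_div_iff (ne_of_gt (hnpos s))]
      simp only [hndef]
      linear_combination K s * hGbKc s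
    have hl2 : ∀ s, l s ^ 2 = Real.sin θ ^ 2 := by
      intro s
      have hA : l s ^ 2 * n s = (b s * K s - c s * G s) ^ 2 := by
        have h5 : l s ^ 2 = (b s * K s - c s * G s) ^ 2 / n s := by
          simp only [hldef]
          rw [div_pow, Real.sq_sqrt (le_of_lt (hnpos s))]
        rw [h5, div_mul_cancel₀ _ (ne_of_gt (hnpos s))]
      have hB : (b s * K s - c s * G s) ^ 2 = (b s ^ 2 + c s ^ 2) * n s := by
        simp only [hndef]
        linear_combination (-(G s * b s + K s * c s)) * hGbKc s
      have hC : l s ^ 2 = b s ^ 2 + c s ^ 2 :=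
        mul_right_cancel₀ (ne_of_gt (hnpos s)) (by rw [hA, hB])
      rw [hC]
      have := Real.sin_sq_add_cos_sq θ
      linarith [hnorm s]
    have hlcont : Continuous l := by
      have hbc : Continuous b := hμs.continuous.inner continuous_const
      have hcc : Continuous c := hvs.continuous.inner continuous_const
      have hnc : Continuous n := by
        rw [hndef]; exact (hGs.continuous.pow 2).add (hKs.continuous.pow 2)
      exact ((hbc.mul hKs.continuous).sub (hcc.mul hGs.continuous)).div
        (Real.continuous_sqrt.comp hnc) (fun s => hsqne s)
    by_cases hsin : Real.sin θ = 0
    · refine ⟨1, Or.inl rfl, fun s => ?_⟩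
      have hl0 : l s = 0 := by
        have := hl2 s; rw [hsin] at this; nlinarith [this]
      have hb0 : b s = 0 := by rw [hb s, hl0]; ring
      have hc0 : c s = 0 := by rw [hc s, hl0]; ring
      have h := hexp s
      rw [hb0, hc0] at h
      rw [h, hsin]
      module
    · have hlconst : ∀ s, l s = l 0 := by
        intro s
        by_contra hne
        have hs2 := hl2 s
        have h02 := hl2 0
        have hfac : (l s - l 0) * (l s + l 0) = 0 := by linear_combination hs2 - h02
        have hls : l s = -(l 0) := by
          rcases mul_eq_zero.mp hfac with h | h
          · exact absurd (by linarith) hne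
          · linarith
        have hl0ne : l 0 ≠ 0 := by
          intro h; rw [h] at h02; exact hsin (by nlinarith [h02])
        have hmem : (0:ℝ) ∈ Set.uIcc (l 0) (l s) := by
          rw [hls, Set.mem_uIcc]
          rcases le_or_gt 0 (l 0) with h | h
          · right; constructor <;> linarith
          · left; constructor <;> linarith
        obtain ⟨t, _, ht⟩ := intermediate_value_uIcc (a := (0:ℝ)) (b := s)
          hlcont.continuousOn hmem
        have h2 := hl2 t
        rw [ht] at h2
        exact hsin (by nlinarith [h2])
      set ε : ℝ := -(l 0) / Real.sin θ with hεdef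
      have hεpm : ε = 1 ∨ ε = -1 := by
        have h02 := hl2 0
        have hfac : (l 0 - Real.sin θ) * (l 0 + Real.sin θ) = 0 := by linear_combination h02
        rcases mul_eq_zero.mp hfac with h | h
        · right
          rw [hεdef, show l 0 = Real.sin θ by linarith]
          field_simp
        · left
          rw [hεdef, show l 0 = -Real.sin θ by linarith]
          field_simp
      refine ⟨ε, hεpm, fun s => ?_⟩
      have hlval : l s = -(ε * Real.sin θ) := by
        rw [hlconst s, hεdef]
        field_simp
      rw [hexp s, hb s, hc s, hlval]
      module
  · rintro ⟨ε, hε, hform⟩ s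
    rw [hform s]
    rw [inner_add_right, inner_sub_right, real_inner_smul_right, real_inner_smul_right,
      real_inner_smul_right, hξξ s, hξμ s, hξv s]
    ring
end

section
/- Let ξ, μ, v be a Darboux frame with invariants G, K, T satisfying ξ' = Gμ + Kv, μ' = -Gξ + Tv, v' = -Kξ - Tμ, and suppose K ≡ 0 and G never vanishes. Then the curve is a ξ-helix if and only if T/G is constant. -/
open Real

theorem stmt3
    (ξ μ v : ℝ → EuclideanSpace ℝ (Fin 3)) (G K T : ℝ → ℝ)
    (hξs : ContDiff ℝ (⊤ : ℕ∞) ξ) (hμs : ContDiff ℝ (⊤ : ℕ∞) μ) (hvs : ContDiff ℝ (⊤ : ℕ∞) v)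
    (hGs : ContDiff ℝ (⊤ : ℕ∞) G) (hKs : ContDiff ℝ (⊤ : ℕ∞) K) (hTs : ContDiff ℝ (⊤ : ℕ∞) T)
    (huξ : ∀ s, ‖ξ s‖ = 1) (huμ : ∀ s, ‖μ s‖ = 1) (huv : ∀ s, ‖v s‖ = 1)
    (hξμ : ∀ s, (inner ℝ (ξ s) (μ s) : ℝ) = 0)
    (hξv : ∀ s, (inner ℝ (ξ s) (v s) : ℝ) = 0)
    (hμv : ∀ s, (inner ℝ (μ s) (v s) : ℝ) = 0)
    (hdξ : ∀ s, HasDerivAt ξ (G s • μ s + K s • v s) s)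
    (hdμ : ∀ s, HasDerivAt μ (-(G s) • ξ s + T s • v s) s)
    (hdv : ∀ s, HasDerivAt v (-(K s) • ξ s - T s • μ s) s)
    (hK0 : ∀ s, K s = 0) (hG0 : ∀ s, G s ≠ 0) :
    (∃ (d : EuclideanSpace ℝ (Fin 3)) (θ : ℝ), ‖d‖ = 1 ∧ ∀ s, (inner ℝ (ξ s) d : ℝ) = Real.cos θ) ↔ (∀ s₁ s₂ : ℝ, (fun s => T s / G s) s₁ = (fun s => T s / G s) s₂) := by
  constructor
  · rintro ⟨d, θ, hd1, hdc⟩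
    -- step 1 : inner ℝ (μ s) d = 0
    have hg0 : ∀ s, (inner ℝ (μ s) d : ℝ) = 0 := by
      intro s
      have h1 : HasDerivAt (fun t => (inner ℝ (ξ t) d : ℝ))
          ((inner ℝ (ξ s) (0 : EuclideanSpace ℝ (Fin 3)) : ℝ)
            + inner ℝ (G s • μ s + K s • v s) d) s :=
        (hdξ s).inner ℝ (hasDerivAt_const s d)
      have h2 : HasDerivAt (fun t => (inner ℝ (ξ t) d : ℝ)) 0 s := by
        have he : (fun t => (inner ℝ (ξ t) d : ℝ)) = fun _ => Real.cos θ := funext hdc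
        rw [he]; exact hasDerivAt_const s _
      have hu := h1.unique h2
      simp only [inner_zero_right, zero_add, inner_add_left, real_inner_smul_left,
        hK0 s, zero_mul, add_zero] at hu
      exact (mul_eq_zero.mp hu).resolve_left (hG0 s)
    -- step 2 : T s * inner ℝ (v s) d = G s * cos θ
    have hTh : ∀ s, T s * (inner ℝ (v s) d : ℝ) = G s * Real.cos θ := by
      intro s
      have h1 : HasDerivAt (fun t => (inner ℝ (μ t) d : ℝ))
          ((inner ℝ (μ s) (0 : EuclideanSpace ℝ (Fin 3)) : ℝ)
            + inner ℝ (-(G s) • ξ s + T s • v s) d) s :=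
        (hdμ s).inner ℝ (hasDerivAt_const s d)
      have h2 : HasDerivAt (fun t => (inner ℝ (μ t) d : ℝ)) 0 s := by
        have he : (fun t => (inner ℝ (μ t) d : ℝ)) = fun _ => (0:ℝ) := funext hg0
        rw [he]; exact hasDerivAt_const s _
      have hu := h1.unique h2
      simp only [inner_zero_right, zero_add, inner_add_left, real_inner_smul_left,
        hdc s] at hu
      linarith [hu]
    -- step 3 : inner ℝ (v s) d is constant
    have hhc : ∀ s, (inner ℝ (v s) d : ℝ) = (inner ℝ (v 0) d : ℝ) := by
      have hder : ∀ s, HasDerivAt (fun t => (inner ℝ (v t) d : ℝ)) 0 s := by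
        intro s
        have h1 : HasDerivAt (fun t => (inner ℝ (v t) d : ℝ))
            ((inner ℝ (v s) (0 : EuclideanSpace ℝ (Fin 3)) : ℝ)
              + inner ℝ (-(K s) • ξ s - T s • μ s) d) s :=
          (hdv s).inner ℝ (hasDerivAt_const s d)
        have h0 : (inner ℝ (v s) (0 : EuclideanSpace ℝ (Fin 3)) : ℝ)
            + inner ℝ (-(K s) • ξ s - T s • μ s) d = 0 := by
          rw [inner_zero_right, zero_add, inner_sub_left, real_inner_smul_left,
            real_inner_smul_left, hK0 s, hg0 s]
          ring
        rwa [h0] at h1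
      intro s
      exact is_const_of_deriv_eq_zero (fun t => (hder t).differentiableAt)
        (fun t => (hder t).deriv) s 0
    set c : ℝ := (inner ℝ (v 0) d : ℝ) with hc_def
    -- step 4 : Pythagoras at 0
    have hsum : Real.cos θ * Real.cos θ + c * c = 1 := by
      set b : Fin 3 → EuclideanSpace ℝ (Fin 3) := ![ξ 0, μ 0, v 0] with hb
      have honb : Orthonormal ℝ b := by
        constructor
        · intro i
          fin_cases i
          · exact huξ 0
          · exact huμ 0
          · exact huv 0
        · intro i j hij
          fin_cases i <;> fin_cases j
          · exact absurd rfl hij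
          · exact hξμ 0
          · exact hξv 0
          · show (inner ℝ (μ 0) (ξ 0) : ℝ) = 0
            rw [real_inner_comm]; exact hξμ 0
          · exact absurd rfl hij
          · exact hμv 0
          · show (inner ℝ (v 0) (ξ 0) : ℝ) = 0
            rw [real_inner_comm]; exact hξv 0
          · show (inner ℝ (v 0) (μ 0) : ℝ) = 0
            rw [real_inner_comm]; exact hμv 0
          · exact absurd rfl hij
      have hcard : Fintype.card (Fin 3) = Module.finrank ℝ (EuclideanSpace ℝ (Fin 3)) := by
        simp
      let B : Module.Basis (Fin 3) ℝ (EuclideanSpace ℝ (Fin 3)) :=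
        basisOfOrthonormalOfCardEqFinrank honb hcard
      have hBb : ⇑B = b := coe_basisOfOrthonormalOfCardEqFinrank honb hcard
      have honB : Orthonormal ℝ B := by rwa [hBb]
      let OB := B.toOrthonormalBasis honB
      have hOB : ⇑OB = b := by
        rw [Module.Basis.coe_toOrthonormalBasis, hBb]
      have hs := OB.sum_inner_mul_inner d d
      rw [real_inner_self_eq_norm_sq, hd1] at hs
      rw [Fin.sum_univ_three] at hs
      simp only [hOB] at hs
      have hb0 : b 0 = ξ 0 := rfl
      have hb1 : b 1 = μ 0 := rfl
      have hb2 : b 2 = v 0 := rfl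
      rw [hb0, hb1, hb2] at hs
      rw [real_inner_comm (ξ 0) d, real_inner_comm (μ 0) d, real_inner_comm (v 0) d,
        hdc 0, hg0 0] at hs
      rw [← hc_def] at hs
      nlinarith [hs]
    have hcne : c ≠ 0 := by
      intro hc0
      have h1 := hTh 0
      rw [← hc_def, hc0, mul_zero] at h1
      have hcos : Real.cos θ = 0 := by
        rcases mul_eq_zero.mp h1.symm with h | h
        · exact absurd h (hG0 0)
        · exact h
      rw [hcos, hc0] at hsum
      norm_num at hsum
    intro s₁ s₂
    simp only
    have key : ∀ s, T s / G s = Real.cos θ / c := by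
      intro s
      rw [div_eq_div_iff (hG0 s) hcne]
      have h2 := hTh s
      rw [hhc s] at h2
      linarith [h2]
    rw [key s₁, key s₂]
  · intro hTG
    set a : ℝ := T 0 / G 0 with ha
    have hTa : ∀ s, T s = a * G s := by
      intro s
      have h := hTG s 0
      simp only at h
      rw [← ha] at h
      exact (div_eq_iff (hG0 s)).mp h
    set r : ℝ := Real.sqrt (1 + a ^ 2) with hrdef
    have hr2 : r ^ 2 = 1 + a ^ 2 := Real.sq_sqrt (by positivity)
    have hrpos : 0 < r := Real.sqrt_pos.mpr (by positivity)
    have hrne : r ≠ 0 := ne_of_gt hrpos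
    set α : ℝ := a / r with hα
    set β : ℝ := 1 / r with hβ
    have hαβ : α ^ 2 + β ^ 2 = 1 := by
      rw [hα, hβ]
      field_simp
      linarith [hr2]
    set w : ℝ → EuclideanSpace ℝ (Fin 3) := fun s => α • ξ s + β • v s with hw
    have hw' : ∀ s, HasDerivAt w 0 s := by
      intro s
      have h1 := ((hdξ s).const_smul α).add ((hdv s).const_smul β)
      have h0 : α • (G s • μ s + K s • v s) + β • (-(K s) • ξ s - T s • μ s) = 0 := by
        rw [hK0 s, hTa s, hα, hβ]
        match_scalars <;> field_simp <;> ring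
      rwa [h0] at h1
    have hwc : ∀ s, w s = w 0 := fun s =>
      is_const_of_deriv_eq_zero (fun t => (hw' t).differentiableAt)
        (fun t => (hw' t).deriv) s 0
    have hwin : ∀ s, (inner ℝ (w s) (w s) : ℝ) = 1 := by
      intro s
      rw [hw]
      simp only [inner_add_left, inner_add_right, real_inner_smul_left, real_inner_smul_right]
      rw [real_inner_self_eq_norm_sq, real_inner_self_eq_norm_sq, huξ s, huv s,
        real_inner_comm (ξ s) (v s), hξv s]
      linear_combination hαβ
    have hα1 : -1 ≤ α ∧ α ≤ 1 := by
      constructor <;> nlinarith [hαβ, sq_nonneg β]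
    refine ⟨w 0, Real.arccos α, ?_, ?_⟩
    · rw [norm_eq_sqrt_real_inner, hwin 0, Real.sqrt_one]
    · intro s
      rw [Real.cos_arccos hα1.1 hα1.2, ← hwc s, hw]
      simp only [inner_add_right, real_inner_smul_right]
      rw [real_inner_self_eq_norm_sq, huξ s, hξv s]
      ring
end

section
/- Let ξ, μ, v be a Darboux frame with invariants G, K, T satisfying the Darboux equations, and suppose G ≡ 0 and K never vanishes. Then the curve is a ξ-helix if and only if T/K is constant. -/
open Real

theorem stmt4
    (ξ μ v : ℝ → EuclideanSpace ℝ (Fin 3)) (G K T : ℝ → ℝ)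
    (hξs : ContDiff ℝ (⊤ : ℕ∞) ξ) (hμs : ContDiff ℝ (⊤ : ℕ∞) μ) (hvs : ContDiff ℝ (⊤ : ℕ∞) v)
    (hGs : ContDiff ℝ (⊤ : ℕ∞) G) (hKs : ContDiff ℝ (⊤ : ℕ∞) K) (hTs : ContDiff ℝ (⊤ : ℕ∞) T)
    (huξ : ∀ s, ‖ξ s‖ = 1) (huμ : ∀ s, ‖μ s‖ = 1) (huv : ∀ s, ‖v s‖ = 1)
    (hξμ : ∀ s, (inner ℝ (ξ s) (μ s) : ℝ) = 0)
    (hξv : ∀ s, (inner ℝ (ξ s) (v s) : ℝ) = 0)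
    (hμv : ∀ s, (inner ℝ (μ s) (v s) : ℝ) = 0)
    (hdξ : ∀ s, HasDerivAt ξ (G s • μ s + K s • v s) s)
    (hdμ : ∀ s, HasDerivAt μ (-(G s) • ξ s + T s • v s) s)
    (hdv : ∀ s, HasDerivAt v (-(K s) • ξ s - T s • μ s) s)
    (hG0 : ∀ s, G s = 0) (hK0 : ∀ s, K s ≠ 0) :
    (∃ (d : EuclideanSpace ℝ (Fin 3)) (θ : ℝ), ‖d‖ = 1 ∧ ∀ s, (inner ℝ (ξ s) d : ℝ) = Real.cos θ) ↔ (∀ s₁ s₂ : ℝ, (fun s => T s / K s) s₁ = (fun s => T s / K s) s₂) := by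
  constructor
  · rintro ⟨d, θ, hd1, hθ⟩
    -- w s = ⟪v s, d⟫ is zero
    have hw0 : ∀ s, (inner ℝ (v s) d : ℝ) = 0 := by
      intro s
      have h1 : HasDerivAt (fun s => (inner ℝ (ξ s) d : ℝ))
          ((inner ℝ (G s • μ s + K s • v s) d : ℝ)) s := by
        simpa using HasDerivAt.inner ℝ (hdξ s) (hasDerivAt_const s d)
      have h2 : HasDerivAt (fun s => (inner ℝ (ξ s) d : ℝ)) 0 s := by
        have : (fun s => (inner ℝ (ξ s) d : ℝ)) = fun _ => Real.cos θ := funext hθ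
        rw [this]; exact hasDerivAt_const s _
      have := h1.unique h2
      rw [inner_add_left, inner_smul_left, inner_smul_left, hG0] at this
      simp only [RCLike.inner_apply, conj_trivial, zero_mul, zero_add] at this
      rcases mul_eq_zero.1 this with h | h
      · exact absurd h (hK0 s)
      · exact h
    -- b s = ⟪μ s, d⟫ is constant
    have hbd : ∀ s, HasDerivAt (fun s => (inner ℝ (μ s) d : ℝ)) 0 s := by
      intro s
      have h1 : HasDerivAt (fun s => (inner ℝ (μ s) d : ℝ))
          ((inner ℝ (-(G s) • ξ s + T s • v s) d : ℝ)) s := by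
        simpa using HasDerivAt.inner ℝ (hdμ s) (hasDerivAt_const s d)
      have : (inner ℝ (-(G s) • ξ s + T s • v s) d : ℝ) = 0 := by
        rw [inner_add_left, inner_smul_left, inner_smul_left, hG0, hw0]
        simp
      rwa [this] at h1
    have hbconst : ∀ s, (inner ℝ (μ s) d : ℝ) = (inner ℝ (μ 0) d : ℝ) := by
      intro s
      have := is_const_of_deriv_eq_zero (f := fun s => (inner ℝ (μ s) d : ℝ))
        (fun x => (hbd x).differentiableAt) (fun x => (hbd x).deriv) s 0
      exact this
    set c : ℝ := (inner ℝ (μ 0) d : ℝ) with hc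
    -- key relation: K s * cos θ + T s * c = 0
    have hkey : ∀ s, K s * Real.cos θ + T s * c = 0 := by
      intro s
      have h1 : HasDerivAt (fun s => (inner ℝ (v s) d : ℝ))
          ((inner ℝ (-(K s) • ξ s - T s • μ s) d : ℝ)) s := by
        simpa using HasDerivAt.inner ℝ (hdv s) (hasDerivAt_const s d)
      have h2 : HasDerivAt (fun s => (inner ℝ (v s) d : ℝ)) 0 s := by
        have : (fun s => (inner ℝ (v s) d : ℝ)) = fun _ => (0:ℝ) := funext hw0
        rw [this]; exact hasDerivAt_const s _
      have h3 := h1.unique h2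
      rw [inner_sub_left, inner_smul_left, inner_smul_left, hθ, hbconst] at h3
      simp only [RCLike.inner_apply, conj_trivial] at h3
      nlinarith [h3]
    -- c ≠ 0
    have hcne : c ≠ 0 := by
      intro hcz
      have hcos : Real.cos θ = 0 := by
        have := hkey 0
        rw [hcz, mul_zero, add_zero] at this
        exact (mul_eq_zero.1 this).resolve_left (hK0 0)
      -- build orthonormal basis at 0
      have hon : Orthonormal ℝ ![ξ 0, μ 0, v 0] := by
        rw [orthonormal_iff_ite]
        have n1 : (inner ℝ (ξ 0) (ξ 0) : ℝ) = 1 := by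
          rw [real_inner_self_eq_norm_sq, huξ 0]; norm_num
        have n2 : (inner ℝ (μ 0) (μ 0) : ℝ) = 1 := by
          rw [real_inner_self_eq_norm_sq, huμ 0]; norm_num
        have n3 : (inner ℝ (v 0) (v 0) : ℝ) = 1 := by
          rw [real_inner_self_eq_norm_sq, huv 0]; norm_num
        intro i j
        fin_cases i <;> fin_cases j <;>
          simp only [Matrix.cons_val_zero, Matrix.cons_val_one, Matrix.head_cons,
            Matrix.cons_val_two, Matrix.tail_cons] <;>
          first
            | (rw [if_pos (by decide)]; first | exact n1 | exact n2 | exact n3)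
            | (rw [if_neg (by decide)]; first
                | exact hξμ 0 | exact hξv 0 | exact hμv 0
                | (rw [real_inner_comm]
                   first | exact hξμ 0 | exact hξv 0 | exact hμv 0))
      have hcard : Fintype.card (Fin 3) = Module.finrank ℝ (EuclideanSpace ℝ (Fin 3)) := by
        simp [finrank_euclideanSpace]
      let B := basisOfLinearIndependentOfCardEqFinrank hon.linearIndependent hcard
      have hBcoe : ⇑B = ![ξ 0, μ 0, v 0] :=
        coe_basisOfLinearIndependentOfCardEqFinrank _ _
      have honB : Orthonormal ℝ ⇑B := by rw [hBcoe]; exact hon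
      let onb : OrthonormalBasis (Fin 3) ℝ (EuclideanSpace ℝ (Fin 3)) :=
        OrthonormalBasis.mk honB (by rw [B.span_eq])
      have honbcoe : ⇑onb = ![ξ 0, μ 0, v 0] := by
        rw [OrthonormalBasis.coe_mk, hBcoe]
      have hd0 : d = 0 := by
        have := onb.sum_repr' d
        rw [honbcoe] at this
        rw [← this]
        have e0 : (inner ℝ (ξ 0) d : ℝ) = 0 := by rw [hθ 0, hcos]
        have e1 : (inner ℝ (μ 0) d : ℝ) = 0 := hcz
        have e2 : (inner ℝ (v 0) d : ℝ) = 0 := hw0 0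
        rw [Fin.sum_univ_three]
        simp [e0, e1, e2]
      rw [hd0] at hd1
      simp at hd1
    intro s₁ s₂
    have h1 := hkey s₁
    have h2 := hkey s₂
    show T s₁ / K s₁ = T s₂ / K s₂
    rw [div_eq_div_iff (hK0 s₁) (hK0 s₂)]
    have hcc : c * (T s₁ * K s₂) = c * (T s₂ * K s₁) := by
      linear_combination K s₂ * h1 - K s₁ * h2
    exact mul_left_cancel₀ hcne hcc
  · intro h
    set c : ℝ := T 0 / K 0 with hc
    have hTc : ∀ s, T s = c * K s := by
      intro s
      have := h s 0
      simp only at this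
      rw [hc]
      exact (div_eq_iff (hK0 s)).1 this
    set r : ℝ := Real.sqrt (c ^ 2 + 1) with hr
    have hrpos : 0 < r := Real.sqrt_pos.2 (by positivity)
    have hr2 : r ^ 2 = c ^ 2 + 1 := Real.sq_sqrt (by positivity)
    -- D s is constant
    have hD : ∀ s, HasDerivAt (fun s => r⁻¹ • (c • ξ s - μ s)) 0 s := by
      intro s
      have h1 : HasDerivAt (fun s => c • ξ s - μ s)
          (c • (G s • μ s + K s • v s) - (-(G s) • ξ s + T s • v s)) s :=
        ((hdξ s).const_smul c).sub (hdμ s)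
      have h2 := h1.const_smul r⁻¹
      have : r⁻¹ • (c • (G s • μ s + K s • v s) - (-(G s) • ξ s + T s • v s)) = 0 := by
        rw [hG0, hTc]
        simp [smul_smul]
      rwa [this] at h2
    have hDconst : ∀ s, r⁻¹ • (c • ξ s - μ s) = r⁻¹ • (c • ξ 0 - μ 0) := by
      intro s
      exact is_const_of_deriv_eq_zero (f := fun s => r⁻¹ • (c • ξ s - μ s))
        (fun x => (hD x).differentiableAt) (fun x => (hD x).deriv) s 0
    refine ⟨r⁻¹ • (c • ξ 0 - μ 0), Real.arccos (c / r), ?_, ?_⟩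
    · rw [norm_smul]
      have : ‖c • ξ 0 - μ 0‖ ^ 2 = c ^ 2 + 1 := by
        rw [norm_sub_sq_real]
        rw [inner_smul_left]
        simp [norm_smul, hξμ 0, huξ 0, huμ 0, mul_pow, abs_mul]
      have hnn : ‖c • ξ 0 - μ 0‖ = r := by
        rw [hr]
        rw [← this]
        rw [Real.sqrt_sq (norm_nonneg _)]
      rw [hnn, norm_inv, Real.norm_eq_abs, abs_of_pos hrpos,
        inv_mul_cancel₀ (ne_of_gt hrpos)]
    · intro s
      have hcr : |c / r| ≤ 1 := by
        rw [abs_div, abs_of_pos hrpos, div_le_one hrpos]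
        have : c ^ 2 ≤ r ^ 2 := by rw [hr2]; linarith
        calc |c| = Real.sqrt (c ^ 2) := (Real.sqrt_sq_eq_abs c).symm
        _ ≤ Real.sqrt (r ^ 2) := Real.sqrt_le_sqrt (by linarith)
        _ = r := Real.sqrt_sq hrpos.le
      rw [Real.cos_arccos (abs_le.1 hcr).1 (abs_le.1 hcr).2]
      have := hDconst s
      rw [← this]
      rw [inner_smul_right, inner_sub_right, inner_smul_right, hξμ,
        real_inner_self_eq_norm_sq, huξ]
      field_simp
      simp
end

section
/- Let ξ, μ, v be a Darboux frame with invariants G, K, T satisfying the Darboux equations, with T ≡ 0 and G² + K² never zero. Then the curve is a ξ-helix if and only if (G'K - GK')/(G²+K²)^(3/2) is constant. -/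
open Real

lemma aux_inner {E : Type*} [NormedAddCommGroup E] [InnerProductSpace ℝ E]
    {e₁ e₂ e₃ : E} (h1 : ‖e₁‖ = 1)
    (h12 : (inner ℝ e₁ e₂ : ℝ) = 0) (h13 : (inner ℝ e₁ e₃ : ℝ) = 0)
    (x y z : ℝ) : (inner ℝ e₁ (x • e₁ + y • e₂ + z • e₃) : ℝ) = x := by
  simp only [inner_add_right, real_inner_smul_right, h12, h13, mul_zero, add_zero]
  rw [real_inner_self_eq_norm_sq, h1]
  ring

lemma aux_norm {E : Type*} [NormedAddCommGroup E] [InnerProductSpace ℝ E]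
    {e₁ e₂ e₃ : E} (h1 : ‖e₁‖ = 1) (h2 : ‖e₂‖ = 1) (h3 : ‖e₃‖ = 1)
    (h12 : (inner ℝ e₁ e₂ : ℝ) = 0) (h13 : (inner ℝ e₁ e₃ : ℝ) = 0)
    (h23 : (inner ℝ e₂ e₃ : ℝ) = 0)
    (x y z : ℝ) : ‖x • e₁ + y • e₂ + z • e₃‖ ^ 2 = x ^ 2 + y ^ 2 + z ^ 2 := by
  have h21 : (inner ℝ e₂ e₁ : ℝ) = 0 := by rw [real_inner_comm]; exact h12
  have h31 : (inner ℝ e₃ e₁ : ℝ) = 0 := by rw [real_inner_comm]; exact h13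
  have h32 : (inner ℝ e₃ e₂ : ℝ) = 0 := by rw [real_inner_comm]; exact h23
  rw [← real_inner_self_eq_norm_sq]
  simp only [inner_add_left, inner_add_right, real_inner_smul_left, real_inner_smul_right,
    h12, h13, h23, h21, h31, h32, mul_zero, add_zero, zero_add]
  rw [real_inner_self_eq_norm_sq, real_inner_self_eq_norm_sq, real_inner_self_eq_norm_sq,
    h1, h2, h3]
  ring

lemma aux_four {E : Type*} [NormedAddCommGroup E] [InnerProductSpace ℝ E]
    [FiniteDimensional ℝ E] (hdim : Module.finrank ℝ E = 3)
    {e₁ e₂ e₃ d : E} (h1 : ‖e₁‖ = 1) (h2 : ‖e₂‖ = 1) (h3 : ‖e₃‖ = 1) (h4 : ‖d‖ = 1)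
    (h12 : (inner ℝ e₁ e₂ : ℝ) = 0) (h13 : (inner ℝ e₁ e₃ : ℝ) = 0)
    (h23 : (inner ℝ e₂ e₃ : ℝ) = 0)
    (h1d : (inner ℝ e₁ d : ℝ) = 0) (h2d : (inner ℝ e₂ d : ℝ) = 0)
    (h3d : (inner ℝ e₃ d : ℝ) = 0) : False := by
  have h21 : (inner ℝ e₂ e₁ : ℝ) = 0 := by rw [real_inner_comm]; exact h12
  have h31 : (inner ℝ e₃ e₁ : ℝ) = 0 := by rw [real_inner_comm]; exact h13
  have h32 : (inner ℝ e₃ e₂ : ℝ) = 0 := by rw [real_inner_comm]; exact h23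
  have hd1 : (inner ℝ d e₁ : ℝ) = 0 := by rw [real_inner_comm]; exact h1d
  have hd2 : (inner ℝ d e₂ : ℝ) = 0 := by rw [real_inner_comm]; exact h2d
  have hd3 : (inner ℝ d e₃ : ℝ) = 0 := by rw [real_inner_comm]; exact h3d
  have hs1 : (inner ℝ e₁ e₁ : ℝ) = 1 := by rw [real_inner_self_eq_norm_sq, h1]; norm_num
  have hs2 : (inner ℝ e₂ e₂ : ℝ) = 1 := by rw [real_inner_self_eq_norm_sq, h2]; norm_num
  have hs3 : (inner ℝ e₃ e₃ : ℝ) = 1 := by rw [real_inner_self_eq_norm_sq, h3]; norm_num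
  have hs4 : (inner ℝ d d : ℝ) = 1 := by rw [real_inner_self_eq_norm_sq, h4]; norm_num
  have hon : Orthonormal ℝ ![e₁, e₂, e₃, d] := by
    rw [orthonormal_iff_ite]
    intro i j
    fin_cases i <;> fin_cases j <;>
      simp [h12, h13, h23, h21, h31, h32, h1d, h2d, h3d, hd1, hd2, hd3, hs1, hs2, hs3, hs4, h1, h2, h3, h4]
  have hcard := hon.linearIndependent.fintype_card_le_finrank
  rw [hdim] at hcard
  simp at hcard

theorem stmt5
    (ξ μ v : ℝ → EuclideanSpace ℝ (Fin 3)) (G K T : ℝ → ℝ)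
    (hξs : ContDiff ℝ (⊤ : ℕ∞) ξ) (hμs : ContDiff ℝ (⊤ : ℕ∞) μ) (hvs : ContDiff ℝ (⊤ : ℕ∞) v)
    (hGs : ContDiff ℝ (⊤ : ℕ∞) G) (hKs : ContDiff ℝ (⊤ : ℕ∞) K) (hTs : ContDiff ℝ (⊤ : ℕ∞) T)
    (huξ : ∀ s, ‖ξ s‖ = 1) (huμ : ∀ s, ‖μ s‖ = 1) (huv : ∀ s, ‖v s‖ = 1)
    (hξμ : ∀ s, (inner ℝ (ξ s) (μ s) : ℝ) = 0)
    (hξv : ∀ s, (inner ℝ (ξ s) (v s) : ℝ) = 0)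
    (hμv : ∀ s, (inner ℝ (μ s) (v s) : ℝ) = 0)
    (hdξ : ∀ s, HasDerivAt ξ (G s • μ s + K s • v s) s)
    (hdμ : ∀ s, HasDerivAt μ (-(G s) • ξ s + T s • v s) s)
    (hdv : ∀ s, HasDerivAt v (-(K s) • ξ s - T s • μ s) s)
    (hT0 : ∀ s, T s = 0) (hGK : ∀ s, G s ^ 2 + K s ^ 2 ≠ 0) :
    (∃ (d : EuclideanSpace ℝ (Fin 3)) (θ : ℝ), ‖d‖ = 1 ∧ ∀ s, (inner ℝ (ξ s) d : ℝ) = Real.cos θ) ↔ (∀ s₁ s₂ : ℝ, (fun s => (deriv G s * K s - G s * deriv K s) / (G s ^ 2 + K s ^ 2) ^ ((3 : ℝ) / 2)) s₁ = (fun s => (deriv G s * K s - G s * deriv K s) / (G s ^ 2 + K s ^ 2) ^ ((3 : ℝ) / 2)) s₂) := by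
  have hGd : Differentiable ℝ G := hGs.differentiable (by simp)
  have hKd : Differentiable ℝ K := hKs.differentiable (by simp)
  have hdG : ∀ s, HasDerivAt G (deriv G s) s := fun s => (hGd s).hasDerivAt
  have hdK : ∀ s, HasDerivAt K (deriv K s) s := fun s => (hKd s).hasDerivAt
  set w : ℝ → ℝ := fun s => Real.sqrt (G s ^ 2 + K s ^ 2) with hwdef
  have hwpos : ∀ s, 0 < w s := fun s =>
    Real.sqrt_pos.2 (lt_of_le_of_ne (by positivity) (Ne.symm (hGK s)))
  have hw2 : ∀ s, w s ^ 2 = G s ^ 2 + K s ^ 2 := fun s => Real.sq_sqrt (by positivity)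
  have hw3 : ∀ s, (G s ^ 2 + K s ^ 2) ^ ((3 : ℝ) / 2) = w s ^ 3 := fun s => by
    rw [show ((3:ℝ)/2) = (1/2)*(3:ℕ) by norm_num, Real.rpow_mul (by positivity),
      Real.rpow_natCast, ← Real.sqrt_eq_rpow]
  have hdw : ∀ s, HasDerivAt w ((G s * deriv G s + K s * deriv K s) / w s) s := by
    intro s
    have h1 : HasDerivAt (fun t => G t ^ 2 + K t ^ 2)
        (2 * G s ^ 1 * deriv G s + 2 * K s ^ 1 * deriv K s) s :=
      ((hdG s).pow 2).add ((hdK s).pow 2)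
    have h2 := (Real.hasDerivAt_sqrt (hGK s)).comp s h1
    refine HasDerivAt.congr_deriv h2 (Eq.symm ?_)
    have := (hwpos s).ne'
    show (G s * deriv G s + K s * deriv K s) / w s = 1 / (2 * w s) * (2 * G s ^ 1 * deriv G s + 2 * K s ^ 1 * deriv K s)
    field_simp
  constructor
  · -- forward: helix → invariant constant
    rintro ⟨d, θ, hd1, hdθ⟩
    have hfa : ∀ s, HasDerivAt (fun t => (inner ℝ (ξ t) d : ℝ))
        (G s * (inner ℝ (μ s) d : ℝ) + K s * (inner ℝ (v s) d : ℝ)) s := by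
      intro s
      have h := (hdξ s).inner ℝ (hasDerivAt_const s d)
      refine HasDerivAt.congr_deriv h (Eq.symm ?_)
      simp only [inner_zero_right, zero_add, inner_add_left, real_inner_smul_left]
    have hGaKb : ∀ s, G s * (inner ℝ (μ s) d : ℝ) + K s * (inner ℝ (v s) d : ℝ) = 0 := by
      intro s
      have h0 : HasDerivAt (fun t => (inner ℝ (ξ t) d : ℝ)) 0 s := by
        have : (fun t => (inner ℝ (ξ t) d : ℝ)) = fun _ => Real.cos θ := funext hdθ
        rw [this]; exact hasDerivAt_const s _
      exact (hfa s).unique h0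
    have ha' : ∀ s, HasDerivAt (fun t => (inner ℝ (μ t) d : ℝ)) (-(G s) * Real.cos θ) s := by
      intro s
      have h := (hdμ s).inner ℝ (hasDerivAt_const s d)
      refine HasDerivAt.congr_deriv h (Eq.symm ?_)
      simp only [inner_zero_right, zero_add, inner_add_left, real_inner_smul_left,
        hT0 s, zero_smul, inner_zero_left, add_zero, hdθ s]
    have hb' : ∀ s, HasDerivAt (fun t => (inner ℝ (v t) d : ℝ)) (-(K s) * Real.cos θ) s := by
      intro s
      have h := (hdv s).inner ℝ (hasDerivAt_const s d)
      refine HasDerivAt.congr_deriv h (Eq.symm ?_)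
      simp only [inner_zero_right, zero_add, inner_sub_left, inner_add_left,
        real_inner_smul_left, hT0 s, zero_smul, inner_zero_left, sub_zero, hdθ s]
    set a : ℝ → ℝ := fun s => (inner ℝ (μ s) d : ℝ) with hadef
    set b : ℝ → ℝ := fun s => (inner ℝ (v s) d : ℝ) with hbdef
    set p : ℝ → ℝ := fun s => b s * G s - a s * K s with hpdef
    have hp' : ∀ s, HasDerivAt p (b s * deriv G s - a s * deriv K s) s := by
      intro s
      have h := ((hb' s).mul (hdG s)).sub ((ha' s).mul (hdK s))
      refine HasDerivAt.congr_deriv h (Eq.symm ?_)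
      ring
    have ha2 : ∀ s, a s * (G s ^ 2 + K s ^ 2) = -(p s * K s) := by
      intro s; simp only [hpdef]; linear_combination G s * hGaKb s
    have hb2 : ∀ s, b s * (G s ^ 2 + K s ^ 2) = p s * G s := by
      intro s; simp only [hpdef]; linear_combination K s * hGaKb s
    have hm : ∀ s, HasDerivAt (fun t => p t / w t) 0 s := by
      intro s
      have h := (hp' s).div (hdw s) (hwpos s).ne'
      refine HasDerivAt.congr_deriv h (Eq.symm ?_)
      have hwne := (hwpos s).ne'
      field_simp
      linear_combination (-(b s * deriv G s - a s * deriv K s)) * hw2 s - deriv G s * hb2 s + deriv K s * ha2 s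
    have hmc : ∀ s, p s / w s = p 0 / w 0 := fun s =>
      is_const_of_deriv_eq_zero (𝕜 := ℝ) (fun t => (hm t).differentiableAt)
        (fun t => (hm t).deriv) s 0
    have hg' : ∀ s, HasDerivAt (fun t => G t * a t + K t * b t)
        (deriv G s * a s + deriv K s * b s - (G s ^ 2 + K s ^ 2) * Real.cos θ) s := by
      intro s
      have h := ((hdG s).mul (ha' s)).add ((hdK s).mul (hb' s))
      refine HasDerivAt.congr_deriv h (Eq.symm ?_)
      ring
    have hrel : ∀ s, deriv G s * a s + deriv K s * b s
        = (G s ^ 2 + K s ^ 2) * Real.cos θ := by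
      intro s
      have h0 : HasDerivAt (fun t => G t * a t + K t * b t) 0 s := by
        have he : (fun t => G t * a t + K t * b t) = fun _ => (0:ℝ) := funext hGaKb
        rw [he]; exact hasDerivAt_const s _
      have := (hg' s).unique h0
      linarith
    have hrel2 : ∀ s, p s * (G s * deriv K s - K s * deriv G s)
        = (G s ^ 2 + K s ^ 2) ^ 2 * Real.cos θ := by
      intro s
      linear_combination (G s ^ 2 + K s ^ 2) * hrel s - deriv G s * ha2 s - deriv K s * hb2 s
    by_cases hp0 : p 0 = 0
    · exfalso
      have hps0 : p 0 / w 0 = 0 := by rw [hp0]; simp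
      have hcos : Real.cos θ = 0 := by
        have h := hrel2 0
        rw [hp0] at h
        have h2 : (G 0 ^ 2 + K 0 ^ 2) ^ 2 ≠ 0 := pow_ne_zero 2 (hGK 0)
        simp only [zero_mul] at h
        exact (mul_eq_zero.1 h.symm).resolve_left h2
      have ha0 : a 0 = 0 := by
        have h := ha2 0; rw [hp0] at h
        simp only [zero_mul, neg_zero] at h
        exact (mul_eq_zero.1 h).resolve_right (hGK 0)
      have hb0 : b 0 = 0 := by
        have h := hb2 0; rw [hp0] at h
        simp only [zero_mul] at h
        exact (mul_eq_zero.1 h).resolve_right (hGK 0)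
      have hf0 : (inner ℝ (ξ 0) d : ℝ) = 0 := by rw [hdθ 0, hcos]
      exact aux_four (finrank_euclideanSpace_fin) (huξ 0) (huμ 0) (huv 0) hd1
        (hξμ 0) (hξv 0) (hμv 0) hf0 ha0 hb0
    · have hm0 : p 0 / w 0 ≠ 0 := div_ne_zero hp0 (hwpos 0).ne'
      have key : ∀ s, (deriv G s * K s - G s * deriv K s) / (w s ^ 3)
          = -Real.cos θ / (p 0 / w 0) := by
        intro s
        have hwne := (hwpos s).ne'
        have hps : p s = (p 0 / w 0) * w s := by
          have h := hmc s
          rw [div_eq_div_iff hwne (hwpos 0).ne'] at h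
          rw [div_mul_eq_mul_div, eq_div_iff (hwpos 0).ne']
          linear_combination h
        have hA : (p 0 / w 0) * (G s * deriv K s - K s * deriv G s)
            = w s ^ 3 * Real.cos θ := by
          have h := hrel2 s
          rw [hps, ← hw2 s] at h
          apply mul_left_cancel₀ hwne
          linear_combination h
        rw [div_eq_div_iff (pow_ne_zero 3 hwne) hm0]
        linear_combination -hA
      intro s₁ s₂
      simp only
      rw [hw3 s₁, hw3 s₂, key s₁, key s₂]
  · -- reverse: invariant constant → helix
    intro hc
    set c : ℝ := (deriv G 0 * K 0 - G 0 * deriv K 0) / (G 0 ^ 2 + K 0 ^ 2) ^ ((3:ℝ)/2)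
      with hcdef
    have hcs : ∀ s, deriv G s * K s - G s * deriv K s = c * w s ^ 3 := by
      intro s
      have h := hc s 0
      simp only at h
      rw [hw3 s, ← hcdef] at h
      have hwne : w s ^ 3 ≠ 0 := pow_ne_zero 3 (hwpos s).ne'
      rw [div_eq_iff hwne] at h
      linarith [h]
    set r : ℝ := Real.sqrt (1 + c ^ 2) with hrdef
    have hrpos : 0 < r := Real.sqrt_pos.2 (by positivity)
    have hr2 : r ^ 2 = 1 + c ^ 2 := Real.sq_sqrt (by positivity)
    have hβ' : ∀ s, HasDerivAt (fun t => -(K t) / w t / r) (G s * c / r) s := by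
      intro s
      have hwne := (hwpos s).ne'
      have h := ((hdK s).neg.div (hdw s) hwne).div_const r
      refine HasDerivAt.congr_deriv h (Eq.symm ?_)
      simp only [Pi.neg_apply]
      rw [div_left_inj' hrpos.ne']
      field_simp
      linear_combination (-(G s)) * hcs s + deriv K s * hw2 s
    have hγ' : ∀ s, HasDerivAt (fun t => G t / w t / r) (K s * c / r) s := by
      intro s
      have hwne := (hwpos s).ne'
      have h := ((hdG s).div (hdw s) hwne).div_const r
      refine HasDerivAt.congr_deriv h (Eq.symm ?_)
      rw [div_left_inj' hrpos.ne']
      field_simp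
      linear_combination (-(K s)) * hcs s - deriv G s * hw2 s
    set D : ℝ → EuclideanSpace ℝ (Fin 3) :=
      fun s => (-c / r) • ξ s + (-(K s) / w s / r) • μ s + (G s / w s / r) • v s with hDdef
    have hdD : ∀ s, HasDerivAt D 0 s := by
      intro s
      have h := (((hdξ s).const_smul (-c / r)).add ((hβ' s).smul (hdμ s))).add
        ((hγ' s).smul (hdv s))
      have h0 : ((-c / r) • (G s • μ s + K s • v s) +
          ((-(K s) / w s / r) • (-(G s) • ξ s + T s • v s) + (G s * c / r) • μ s)) +
          ((G s / w s / r) • (-(K s) • ξ s - T s • μ s) + (K s * c / r) • v s) = 0 := by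
        rw [hT0 s]
        module
      rw [h0] at h
      exact h
    have hDc : ∀ s, D s = D 0 :=
      fun s => is_const_of_deriv_eq_zero (𝕜 := ℝ) (fun t => (hdD t).differentiableAt)
        (fun t => (hdD t).deriv) s 0
    have hcr : -r ≤ -c ∧ -c ≤ r := by
      constructor <;> nlinarith [sq_nonneg (c - r), sq_nonneg (c + r)]
    have hα1 : -1 ≤ -c / r := by
      rw [le_div_iff₀ hrpos]; linarith
    have hα2 : -c / r ≤ 1 := by
      rw [div_le_one hrpos]; linarith
    refine ⟨D 0, Real.arccos (-c / r), ?_, ?_⟩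
    · have hn : ‖D 0‖ ^ 2 = 1 := by
        rw [hDdef]
        simp only
        rw [aux_norm (huξ 0) (huμ 0) (huv 0) (hξμ 0) (hξv 0) (hμv 0)]
        have hwne := (hwpos 0).ne'
        have h2 := hw2 0
        have hrne := hrpos.ne'
        have e : (-c / r) ^ 2 + (-K 0 / w 0 / r) ^ 2 + (G 0 / w 0 / r) ^ 2 = (c ^ 2 + (G 0 ^ 2 + K 0 ^ 2) / w 0 ^ 2) / r ^ 2 := by ring
        rw [e, ← hw2 0, div_self (pow_ne_zero 2 hwne), hr2, add_comm (c ^ 2)]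
        exact div_self (by positivity)
      rw [← Real.sqrt_sq (norm_nonneg (D 0)), hn, Real.sqrt_one]
    · intro s
      rw [Real.cos_arccos hα1 hα2, ← hDc s, hDdef]
      exact aux_inner (huξ s) (hξμ s) (hξv s) _ _ _
end

section
/- Let ξ₁, ξ₂, ξ₃ be a Frenet-type frame of a versor field (C, ξ) satisfying ξ₁' = K₁ξ₂, ξ₂' = -K₁ξ₁ + K₂ξ₃, ξ₃' = -K₂ξ₂ with K₁ > 0. Then ξ₁ makes a constant angle with a fixed unit direction (i.e., the curve is a ξ₁-helix) if and only if K₂/K₁ is constant. -/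
open Real

theorem stmt6
    (ξ₁ ξ₂ ξ₃ : ℝ → EuclideanSpace ℝ (Fin 3)) (K₁ K₂ : ℝ → ℝ)
    (h1s : ContDiff ℝ (⊤ : ℕ∞) ξ₁) (h2s : ContDiff ℝ (⊤ : ℕ∞) ξ₂) (h3s : ContDiff ℝ (⊤ : ℕ∞) ξ₃)
    (hK1s : ContDiff ℝ (⊤ : ℕ∞) K₁) (hK2s : ContDiff ℝ (⊤ : ℕ∞) K₂)
    (hu1 : ∀ s, ‖ξ₁ s‖ = 1) (hu2 : ∀ s, ‖ξ₂ s‖ = 1) (hu3 : ∀ s, ‖ξ₃ s‖ = 1)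
    (h12 : ∀ s, (inner ℝ (ξ₁ s) (ξ₂ s) : ℝ) = 0)
    (h13 : ∀ s, (inner ℝ (ξ₁ s) (ξ₃ s) : ℝ) = 0)
    (h23 : ∀ s, (inner ℝ (ξ₂ s) (ξ₃ s) : ℝ) = 0)
    (hd1 : ∀ s, HasDerivAt ξ₁ (K₁ s • ξ₂ s) s)
    (hd2 : ∀ s, HasDerivAt ξ₂ (-(K₁ s) • ξ₁ s + K₂ s • ξ₃ s) s)
    (hd3 : ∀ s, HasDerivAt ξ₃ (-(K₂ s) • ξ₂ s) s)
    (hK1 : ∀ s, 0 < K₁ s) :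
    (∃ (d : EuclideanSpace ℝ (Fin 3)) (θ : ℝ), ‖d‖ = 1 ∧
        ∀ s, (inner ℝ (ξ₁ s) d : ℝ) = Real.cos θ) ↔
      (∀ s₁ s₂ : ℝ, (fun s => K₂ s / K₁ s) s₁ = (fun s => K₂ s / K₁ s) s₂) := by
  constructor
  · rintro ⟨d, θ, hdn, hcd⟩
    -- step 1 : ⟪ξ₂, d⟫ = 0
    have hg2 : ∀ s, (inner ℝ (ξ₂ s) d : ℝ) = 0 := by
      intro s
      have h1 : HasDerivAt (fun t => (inner ℝ (ξ₁ t) d : ℝ))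
          ((inner ℝ (ξ₁ s) (0 : EuclideanSpace ℝ (Fin 3)) : ℝ) + inner ℝ (K₁ s • ξ₂ s) d) s :=
        (hd1 s).inner ℝ (hasDerivAt_const s d)
      have h2 : HasDerivAt (fun t => (inner ℝ (ξ₁ t) d : ℝ)) 0 s := by
        have he : (fun t => (inner ℝ (ξ₁ t) d : ℝ)) = fun _ => Real.cos θ := funext hcd
        rw [he]; exact hasDerivAt_const s _
      have hu := h1.unique h2
      rw [inner_zero_right, zero_add, real_inner_smul_left] at hu
      rcases mul_eq_zero.mp hu with h | h
      · exact absurd h (ne_of_gt (hK1 s))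
      · exact h
    -- step 2 : ⟪ξ₃, d⟫ is constant
    have hg3c : ∀ s, (inner ℝ (ξ₃ s) d : ℝ) = (inner ℝ (ξ₃ 0) d : ℝ) := by
      intro s
      have hder : ∀ t, HasDerivAt (fun u => (inner ℝ (ξ₃ u) d : ℝ)) 0 t := by
        intro t
        have h1 : HasDerivAt (fun u => (inner ℝ (ξ₃ u) d : ℝ))
            ((inner ℝ (ξ₃ t) (0 : EuclideanSpace ℝ (Fin 3)) : ℝ) + inner ℝ (-(K₂ t) • ξ₂ t) d) t :=
          (hd3 t).inner ℝ (hasDerivAt_const t d)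
        have : (inner ℝ (ξ₃ t) (0 : EuclideanSpace ℝ (Fin 3)) : ℝ) + inner ℝ (-(K₂ t) • ξ₂ t) d = 0 := by
          rw [inner_zero_right, zero_add, real_inner_smul_left, hg2, mul_zero]
        rwa [this] at h1
      exact is_const_of_deriv_eq_zero (fun t => (hder t).differentiableAt)
        (fun t => (hder t).deriv) s 0
    set a : ℝ := (inner ℝ (ξ₃ 0) d : ℝ) with ha
    -- step 3 : K₂ s * a = K₁ s * cos θ
    have hkey : ∀ s, K₂ s * a = K₁ s * Real.cos θ := by
      intro s
      have h1 : HasDerivAt (fun t => (inner ℝ (ξ₂ t) d : ℝ))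
          ((inner ℝ (ξ₂ s) (0 : EuclideanSpace ℝ (Fin 3)) : ℝ)
            + inner ℝ (-(K₁ s) • ξ₁ s + K₂ s • ξ₃ s) d) s :=
        (hd2 s).inner ℝ (hasDerivAt_const s d)
      have h2 : HasDerivAt (fun t => (inner ℝ (ξ₂ t) d : ℝ)) 0 s := by
        have he : (fun t => (inner ℝ (ξ₂ t) d : ℝ)) = fun _ => (0 : ℝ) := funext hg2
        rw [he]; exact hasDerivAt_const s _
      have hu := h1.unique h2
      rw [inner_zero_right, zero_add, inner_add_left, real_inner_smul_left,
        real_inner_smul_left, hcd, hg3c] at hu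
      linarith
    -- step 4 : a ≠ 0
    have hane : a ≠ 0 := by
      intro ha0
      have hcos : Real.cos θ = 0 := by
        have h0 : (0 : ℝ) = K₁ 0 * Real.cos θ := by
          have := hkey 0
          rw [ha0, mul_zero] at this
          exact this
        rcases mul_eq_zero.mp h0.symm with h | h
        · exact absurd h (ne_of_gt (hK1 0))
        · exact h
      have e1 : (inner ℝ (ξ₁ 0) d : ℝ) = 0 := by rw [hcd 0, hcos]
      have e2 : (inner ℝ (ξ₂ 0) d : ℝ) = 0 := hg2 0
      have e3 : (inner ℝ (ξ₃ 0) d : ℝ) = 0 := by rw [← ha]; exact ha0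
      have hdne : d ≠ 0 := fun h0 => by simp [h0] at hdn
      have n1 : ξ₁ 0 ≠ 0 := fun h0 => by simpa [h0] using hu1 0
      have n2 : ξ₂ 0 ≠ 0 := fun h0 => by simpa [h0] using hu2 0
      have n3 : ξ₃ 0 ≠ 0 := fun h0 => by simpa [h0] using hu3 0
      have hli : LinearIndependent ℝ ![ξ₁ 0, ξ₂ 0, ξ₃ 0, d] := by
        apply linearIndependent_of_ne_zero_of_inner_eq_zero
        · intro i
          fin_cases i <;>
            simp only [Matrix.cons_val_zero, Matrix.cons_val_one, Matrix.head_cons,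
              Matrix.cons_val_two, Matrix.tail_cons, Matrix.cons_val_three] <;>
            assumption
        · intro i j hij
          fin_cases i <;> fin_cases j <;>
            simp only [Matrix.cons_val_zero, Matrix.cons_val_one, Matrix.head_cons,
              Matrix.cons_val_two, Matrix.tail_cons, Matrix.cons_val_three] <;>
            first
              | exact absurd rfl hij
              | exact h12 0 | exact h13 0 | exact h23 0 | exact e1 | exact e2 | exact e3
              | (rw [real_inner_comm] ; first
                  | exact h12 0 | exact h13 0 | exact h23 0 | exact e1 | exact e2 | exact e3)
      have hle := hli.fintype_card_le_finrank
      rw [finrank_euclideanSpace_fin] at hle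
      simp at hle
    intro s₁ s₂
    have hr : ∀ s, K₂ s / K₁ s = Real.cos θ / a := by
      intro s
      have := hkey s
      have hk := (hK1 s).ne'
      field_simp
      linarith
    simp only [hr]
  · intro h
    set c : ℝ := K₂ 0 / K₁ 0 with hc
    have hck : ∀ s, K₂ s = c * K₁ s := by
      intro s
      have hs : K₂ s / K₁ s = c := h s 0
      rw [div_eq_iff (hK1 s).ne'] at hs
      exact hs
    have hr2 : Real.sqrt (c ^ 2 + 1) ^ 2 = c ^ 2 + 1 :=
      Real.sq_sqrt (by positivity)
    have hrpos : (0 : ℝ) < Real.sqrt (c ^ 2 + 1) := Real.sqrt_pos.mpr (by positivity)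
    set r : ℝ := Real.sqrt (c ^ 2 + 1) with hrdef
    have habs : |c| ≤ r := by nlinarith [abs_nonneg c, sq_abs c]
    set D : ℝ → EuclideanSpace ℝ (Fin 3) := fun s => r⁻¹ • (c • ξ₁ s + ξ₃ s) with hD
    have hDd : ∀ s, HasDerivAt D 0 s := by
      intro s
      have h1 : HasDerivAt (fun t => c • ξ₁ t + ξ₃ t)
          (c • (K₁ s • ξ₂ s) + -(K₂ s) • ξ₂ s) s := ((hd1 s).const_smul c).add (hd3 s)
      have h2 := h1.const_smul r⁻¹
      have he : r⁻¹ • (c • (K₁ s • ξ₂ s) + -(K₂ s) • ξ₂ s) = (0 : EuclideanSpace ℝ (Fin 3)) := by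
        rw [smul_smul, ← hck s, neg_smul, add_neg_cancel, smul_zero]
      rwa [he] at h2
    have hDc : ∀ s, D s = D 0 := fun s =>
      is_const_of_deriv_eq_zero (fun t => (hDd t).differentiableAt)
        (fun t => (hDd t).deriv) s 0
    refine ⟨D 0, Real.arccos (c / r), ?_, ?_⟩
    · have hsq : ‖D 0‖ ^ 2 = 1 := by
        show ‖r⁻¹ • (c • ξ₁ 0 + ξ₃ 0)‖ ^ 2 = 1
        rw [norm_smul, mul_pow, norm_add_sq_real, norm_smul, real_inner_smul_left, h13 0,
          hu1 0, hu3 0, mul_zero]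
        simp only [norm_inv, Real.norm_eq_abs]
        rw [abs_of_pos hrpos, inv_pow, hr2, mul_one, sq_abs]
        norm_num
        rw [add_comm (c^2) 1] at *
        exact inv_mul_cancel₀ (by positivity)
      nlinarith [norm_nonneg (D 0)]
    · intro s
      have hcosval : Real.cos (Real.arccos (c / r)) = c / r := by
        apply Real.cos_arccos
        · rw [le_div_iff₀ hrpos]
          have := neg_abs_le c
          linarith
        · rw [div_le_one hrpos]
          exact (le_abs_self c).trans habs
      rw [hcosval, ← hDc s]
      show (inner ℝ (ξ₁ s) (r⁻¹ • (c • ξ₁ s + ξ₃ s)) : ℝ) = c / r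
      rw [real_inner_smul_right, inner_add_right, real_inner_smul_right, h13 s,
        real_inner_self_eq_norm_sq, hu1 s]
      rw [one_pow, mul_one, add_zero, mul_comm]
      exact (div_eq_mul_inv c r).symm
end

section
/- Let ξ, μ, v be a Darboux frame with invariants G, K, T satisfying the Darboux equations, with G² + K² never zero, and let W_n = -Kμ + Gv be the normal-type Darboux vector with unit vector W̄_n = W_n/‖W_n‖. Then W̄_n makes a constant angle with a fixed unit direction (the curve is a W_n-helix) if and only if ξ makes a constant angle with a fixed unit direction (the curve is a ξ-helix); moreover, if the constant angles are φ and θ respectively with σ_ξ = cot θ ≠ 0, then cot φ = ∓ 1/σ_ξ. -/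
open Real

noncomputable section Stmt8Aux

structure DF where
  xi : ℝ → EuclideanSpace ℝ (Fin 3)
  mu : ℝ → EuclideanSpace ℝ (Fin 3)
  nu : ℝ → EuclideanSpace ℝ (Fin 3)
  G : ℝ → ℝ
  K : ℝ → ℝ
  T : ℝ → ℝ
  hGs : ContDiff ℝ (⊤ : ℕ∞) G
  hKs : ContDiff ℝ (⊤ : ℕ∞) K
  hTs : ContDiff ℝ (⊤ : ℕ∞) T
  huxi : ∀ s, ‖xi s‖ = 1
  humu : ∀ s, ‖mu s‖ = 1
  hunu : ∀ s, ‖nu s‖ = 1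
  hxm : ∀ s, (inner ℝ (xi s) (mu s) : ℝ) = 0
  hxn : ∀ s, (inner ℝ (xi s) (nu s) : ℝ) = 0
  hmn : ∀ s, (inner ℝ (mu s) (nu s) : ℝ) = 0
  hdxi : ∀ s, HasDerivAt xi (G s • mu s + K s • nu s) s
  hdmu : ∀ s, HasDerivAt mu (-(G s) • xi s + T s • nu s) s
  hdnu : ∀ s, HasDerivAt nu (-(K s) • xi s - T s • mu s) s
  hGK : ∀ s, G s ^ 2 + K s ^ 2 ≠ 0

namespace DF

variable (F : DF)

def rho (s : ℝ) : ℝ := Real.sqrt (F.G s ^ 2 + F.K s ^ 2)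

def sg (s : ℝ) : ℝ :=
  (deriv F.G s * F.K s - F.G s * deriv F.K s - (F.G s ^ 2 + F.K s ^ 2) * F.T s) /
    (F.G s ^ 2 + F.K s ^ 2)

def lam (s : ℝ) : ℝ :=
  (F.G s * deriv F.G s + F.K s * deriv F.K s) / (F.G s ^ 2 + F.K s ^ 2)

def ee (s : ℝ) : EuclideanSpace ℝ (Fin 3) := (F.rho s)⁻¹ • (F.G s • F.mu s + F.K s • F.nu s)

def bb (s : ℝ) : EuclideanSpace ℝ (Fin 3) := (F.rho s)⁻¹ • (-(F.K s) • F.mu s + F.G s • F.nu s)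

def p (l : EuclideanSpace ℝ (Fin 3)) (s : ℝ) : ℝ := inner ℝ (F.xi s) l
def q (l : EuclideanSpace ℝ (Fin 3)) (s : ℝ) : ℝ := inner ℝ (F.ee s) l
def r (l : EuclideanSpace ℝ (Fin 3)) (s : ℝ) : ℝ := inner ℝ (F.bb s) l

lemma GKpos (s : ℝ) : 0 < F.G s ^ 2 + F.K s ^ 2 :=
  lt_of_le_of_ne (by positivity) (Ne.symm (F.hGK s))

lemma rpos (s : ℝ) : 0 < F.rho s := Real.sqrt_pos.2 (F.GKpos s)

lemma rne (s : ℝ) : F.rho s ≠ 0 := (F.rpos s).ne'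

lemma rsq (s : ℝ) : F.rho s ^ 2 = F.G s ^ 2 + F.K s ^ 2 := Real.sq_sqrt (F.GKpos s).le

lemma hdG (s : ℝ) : HasDerivAt F.G (deriv F.G s) s :=
  ((F.hGs.differentiable (by simp)) s).hasDerivAt

lemma hdK (s : ℝ) : HasDerivAt F.K (deriv F.K s) s :=
  ((F.hKs.differentiable (by simp)) s).hasDerivAt

lemma hdrho (s : ℝ) : HasDerivAt F.rho (F.rho s * F.lam s) s := by
  have h := (((F.hdG s).pow 2).add ((F.hdK s).pow 2)).sqrt (F.hGK s)
  refine h.congr_deriv ?_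
  symm
  have h2 := F.rsq s
  have h0 := F.rne s
  simp only [DF.lam, Pi.add_apply, Pi.pow_apply]
  rw [show Real.sqrt (F.G s ^ 2 + F.K s ^ 2) = F.rho s from rfl, ← h2]
  field_simp
  ring

lemma hdinv (s : ℝ) : HasDerivAt (fun t => (F.rho t)⁻¹) (-((F.rho s)⁻¹ * F.lam s)) s := by
  have h := (F.hdrho s).inv (F.rne s)
  refine h.congr_deriv ?_
  symm
  have h0 := F.rne s
  field_simp

lemma hdee (s : ℝ) :
    HasDerivAt F.ee (-(F.rho s) • F.xi s - F.sg s • F.bb s) s := by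
  have h1 := ((F.hdG s).smul (F.hdmu s)).add ((F.hdK s).smul (F.hdnu s))
  have h2 := (F.hdinv s).smul h1
  refine h2.congr_deriv ?_
  symm
  have hr2 := F.rsq s
  have h0 := F.rne s
  have hgk := F.hGK s
  simp only [DF.sg, DF.bb, DF.ee, DF.lam, Pi.add_apply, Pi.smul_apply', Pi.neg_apply]
  match_scalars
  · field_simp
    linear_combination (-1 : ℝ) * hr2
  · field_simp
    ring
  · field_simp
    ring

lemma hdbb (s : ℝ) : HasDerivAt F.bb (F.sg s • F.ee s) s := by
  have h1 := (((F.hdK s).neg).smul (F.hdmu s)).add ((F.hdG s).smul (F.hdnu s))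
  have h2 := (F.hdinv s).smul h1
  refine h2.congr_deriv ?_
  symm
  have hr2 := F.rsq s
  have h0 := F.rne s
  have hgk := F.hGK s
  simp only [DF.sg, DF.bb, DF.ee, DF.lam, Pi.add_apply, Pi.smul_apply', Pi.neg_apply]
  match_scalars
  · field_simp
    ring
  · field_simp
    ring
  · field_simp
    ring

lemma imm (s : ℝ) : (inner ℝ (F.mu s) (F.mu s) : ℝ) = 1 := by
  rw [real_inner_self_eq_norm_mul_norm, F.humu s]; norm_num

lemma inn (s : ℝ) : (inner ℝ (F.nu s) (F.nu s) : ℝ) = 1 := by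
  rw [real_inner_self_eq_norm_mul_norm, F.hunu s]; norm_num

lemma ixx (s : ℝ) : (inner ℝ (F.xi s) (F.xi s) : ℝ) = 1 := by
  rw [real_inner_self_eq_norm_mul_norm, F.huxi s]; norm_num

lemma hmx (s : ℝ) : (inner ℝ (F.mu s) (F.xi s) : ℝ) = 0 := by
  rw [real_inner_comm]; exact F.hxm s

lemma hnx (s : ℝ) : (inner ℝ (F.nu s) (F.xi s) : ℝ) = 0 := by
  rw [real_inner_comm]; exact F.hxn s

lemma hnm (s : ℝ) : (inner ℝ (F.nu s) (F.mu s) : ℝ) = 0 := by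
  rw [real_inner_comm]; exact F.hmn s

lemma ixe (s : ℝ) : (inner ℝ (F.xi s) (F.ee s) : ℝ) = 0 := by
  simp only [DF.ee, inner_add_right, real_inner_smul_right, F.hxm s, F.hxn s]
  ring

lemma ixb (s : ℝ) : (inner ℝ (F.xi s) (F.bb s) : ℝ) = 0 := by
  simp only [DF.bb, inner_add_right, real_inner_smul_right, inner_neg_right,
    F.hxm s, F.hxn s]
  ring

lemma iee (s : ℝ) : (inner ℝ (F.ee s) (F.ee s) : ℝ) = 1 := by
  have h2 := F.rsq s
  have h0 := F.rne s
  simp only [DF.ee, inner_add_right, inner_add_left, real_inner_smul_right,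
    real_inner_smul_left, F.hmn s, F.hnm s, F.imm s, F.inn s]
  field_simp
  linarith [h2]

lemma ibb (s : ℝ) : (inner ℝ (F.bb s) (F.bb s) : ℝ) = 1 := by
  have h2 := F.rsq s
  have h0 := F.rne s
  simp only [DF.bb, inner_add_right, inner_add_left, real_inner_smul_right,
    real_inner_smul_left, inner_neg_neg, inner_neg_left, inner_neg_right,
    F.hmn s, F.hnm s, F.imm s, F.inn s]
  field_simp
  linarith [h2]

lemma ieb (s : ℝ) : (inner ℝ (F.ee s) (F.bb s) : ℝ) = 0 := by
  simp only [DF.ee, DF.bb, inner_add_right, inner_add_left, real_inner_smul_right,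
    real_inner_smul_left, inner_neg_left, inner_neg_right,
    F.hmn s, F.hnm s, F.imm s, F.inn s]
  ring

lemma ibe (s : ℝ) : (inner ℝ (F.bb s) (F.ee s) : ℝ) = 0 := by
  rw [real_inner_comm]; exact F.ieb s

lemma iex (s : ℝ) : (inner ℝ (F.ee s) (F.xi s) : ℝ) = 0 := by
  rw [real_inner_comm]; exact F.ixe s

lemma ibx (s : ℝ) : (inner ℝ (F.bb s) (F.xi s) : ℝ) = 0 := by
  rw [real_inner_comm]; exact F.ixb s

lemma on3 (s : ℝ) : Orthonormal ℝ ![F.xi s, F.ee s, F.bb s] := by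
  have hne : ‖F.ee s‖ = 1 := by
    have h := F.iee s
    rw [real_inner_self_eq_norm_mul_norm] at h
    nlinarith [norm_nonneg (F.ee s)]
  have hnb : ‖F.bb s‖ = 1 := by
    have h := F.ibb s
    rw [real_inner_self_eq_norm_mul_norm] at h
    nlinarith [norm_nonneg (F.bb s)]
  rw [orthonormal_iff_ite]
  intro i j
  fin_cases i <;> fin_cases j <;>
    simp [F.huxi s, hne, hnb, F.ixx s, F.iee s, F.ibb s, F.ixe s, F.ixb s, F.ieb s, F.ibe s, F.iex s, F.ibx s]

lemma parseval {l : EuclideanSpace ℝ (Fin 3)} (hl : ‖l‖ = 1) (s : ℝ) :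
    F.p l s ^ 2 + F.q l s ^ 2 + F.r l s ^ 2 = 1 := by
  have hcard : Fintype.card (Fin 3) = Module.finrank ℝ (EuclideanSpace ℝ (Fin 3)) := by
    simp [finrank_euclideanSpace_fin]
  set bas := basisOfOrthonormalOfCardEqFinrank (F.on3 s) hcard with hbas
  have hco : ⇑bas = ![F.xi s, F.ee s, F.bb s] := coe_basisOfOrthonormalOfCardEqFinrank _ _
  have hob : Orthonormal ℝ ⇑bas := by rw [hco]; exact F.on3 s
  have hsum := (bas.toOrthonormalBasis hob).sum_inner_mul_inner l l
  have hb : ⇑(bas.toOrthonormalBasis hob) = ![F.xi s, F.ee s, F.bb s] := by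
    rw [Module.Basis.coe_toOrthonormalBasis, hco]
  rw [hb] at hsum
  rw [Fin.sum_univ_three] at hsum
  have hll : (inner ℝ l l : ℝ) = 1 := by
    rw [real_inner_self_eq_norm_mul_norm, hl]; norm_num
  simp only [Matrix.cons_val_zero, Matrix.cons_val_one, Matrix.head_cons,
    Matrix.cons_val_two, Matrix.tail_cons, hll] at hsum
  simp only [DF.p, DF.q, DF.r]
  rw [real_inner_comm l (F.xi s), real_inner_comm l (F.ee s), real_inner_comm l (F.bb s)] at hsum
  rw [real_inner_comm l (F.xi s), real_inner_comm l (F.ee s), real_inner_comm l (F.bb s)]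
  linear_combination hsum

lemma hdp (l : EuclideanSpace ℝ (Fin 3)) (s : ℝ) :
    HasDerivAt (F.p l) (F.rho s * F.q l s) s := by
  have h := HasDerivAt.inner ℝ (F.hdxi s) (hasDerivAt_const s l)
  refine h.congr_deriv ?_
  symm
  have h0 := F.rne s
  simp only [DF.q, DF.ee, inner_zero_right, zero_add, real_inner_smul_left, inner_add_left]
  field_simp

lemma hdq (l : EuclideanSpace ℝ (Fin 3)) (s : ℝ) :
    HasDerivAt (F.q l) (-(F.rho s * F.p l s) - F.sg s * F.r l s) s := by
  have h := HasDerivAt.inner ℝ (F.hdee s) (hasDerivAt_const s l)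
  refine h.congr_deriv ?_
  symm
  simp only [DF.p, DF.r, inner_zero_right, inner_sub_left, inner_neg_left,
    real_inner_smul_left]
  ring

lemma hdr (l : EuclideanSpace ℝ (Fin 3)) (s : ℝ) :
    HasDerivAt (F.r l) (F.sg s * F.q l s) s := by
  have h := HasDerivAt.inner ℝ (F.hdbb s) (hasDerivAt_const s l)
  refine h.congr_deriv ?_
  symm
  simp only [DF.q, inner_zero_right, real_inner_smul_left]
  ring

lemma csg : Continuous F.sg := by
  have hg' := F.hGs.continuous_deriv (by simp)
  have hk' := F.hKs.continuous_deriv (by simp)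
  exact Continuous.div
    (((hg'.mul F.hKs.continuous).sub (F.hGs.continuous.mul hk')).sub
      (((F.hGs.continuous.pow 2).add (F.hKs.continuous.pow 2)).mul F.hTs.continuous))
    ((F.hGs.continuous.pow 2).add (F.hKs.continuous.pow 2)) F.hGK

lemma crho : Continuous F.rho :=
  Real.continuous_sqrt.comp ((F.hGs.continuous.pow 2).add (F.hKs.continuous.pow 2))

lemma cp (l : EuclideanSpace ℝ (Fin 3)) : Continuous (F.p l) :=
  Differentiable.continuous (fun s => (F.hdp l s).differentiableAt)

lemma cq (l : EuclideanSpace ℝ (Fin 3)) : Continuous (F.q l) :=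
  Differentiable.continuous (fun s => (F.hdq l s).differentiableAt)

lemma cr (l : EuclideanSpace ℝ (Fin 3)) : Continuous (F.r l) :=
  Differentiable.continuous (fun s => (F.hdr l s).differentiableAt)

end DF

lemma deriv_eq_zero_of_const {f : ℝ → ℝ} {c : ℝ} (h : ∀ s, f s = c) {f' : ℝ} {s : ℝ}
    (hd : HasDerivAt f f' s) : f' = 0 :=
  (hd.congr_of_eventuallyEq (Filter.Eventually.of_forall fun t => (h t).symm)).unique
    (hasDerivAt_const s c)

lemma deriv_eq_zero_of_eventually {f : ℝ → ℝ} {s : ℝ} (h : ∀ᶠ t in nhds s, f t = 0) {f' : ℝ}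
    (hd : HasDerivAt f f' s) : f' = 0 :=
  (hd.congr_of_eventuallyEq (h.mono fun t ht => ht.symm)).unique (hasDerivAt_const s 0)

namespace DF

variable (F : DF)

lemma keylem (l : EuclideanSpace ℝ (Fin 3)) {c : ℝ} (hr : ∀ s, F.r l s = c) {s : ℝ}
    (hs : F.sg s ≠ 0) :
    F.q l s = 0 ∧ F.rho s * F.p l s + F.sg s * c = 0 := by
  have hσq : ∀ t, F.sg t * F.q l t = 0 := fun t => deriv_eq_zero_of_const hr (F.hdr l t)
  have hq : ∀ᶠ t in nhds s, F.q l t = 0 :=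
    ((F.csg.continuousAt).eventually_ne hs).mono
      (fun t ht => (mul_eq_zero.mp (hσq t)).resolve_left ht)
  have hq'0 : -(F.rho s * F.p l s) - F.sg s * F.r l s = 0 :=
    deriv_eq_zero_of_eventually hq (F.hdq l s)
  refine ⟨hq.self_of_nhds, ?_⟩
  rw [hr s] at hq'0
  linarith

lemma norm_bb (s : ℝ) : ‖F.bb s‖ = 1 := by
  have h := F.ibb s
  rw [real_inner_self_eq_norm_mul_norm] at h
  nlinarith [norm_nonneg (F.bb s)]

lemma forward (l : EuclideanSpace ℝ (Fin 3)) (φ : ℝ) (hl : ‖l‖ = 1)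
    (hr : ∀ s, F.r l s = Real.cos φ) :
    ∃ d θ, ‖d‖ = 1 ∧ ∀ s, F.p d s = Real.cos θ := by
  by_cases hσ : ∀ s, F.sg s = 0
  · refine ⟨F.bb 0, Real.pi / 2, F.norm_bb 0, fun s => ?_⟩
    have hBconst : ∀ t, F.bb t = F.bb 0 := by
      have hdiff : Differentiable ℝ F.bb := fun t => (F.hdbb t).differentiableAt
      intro t
      exact is_const_of_deriv_eq_zero hdiff
        (fun u => by rw [(F.hdbb u).deriv, hσ u, zero_smul]) t 0
    rw [Real.cos_pi_div_two]
    show (inner ℝ (F.xi s) (F.bb 0) : ℝ) = 0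
    rw [← hBconst s]
    exact F.ixb s
  · push_neg at hσ
    obtain ⟨s₀, hs₀⟩ := hσ
    obtain ⟨hq0, heq0⟩ := F.keylem l hr hs₀
    by_cases hφ : Real.cos φ = 0
    · exfalso
      have hp0 : F.p l s₀ = 0 := by
        rw [hφ, mul_zero, add_zero] at heq0
        exact (mul_eq_zero.mp heq0).resolve_left (F.rne s₀)
      have hP := F.parseval hl s₀
      rw [hp0, hq0, hr s₀, hφ] at hP
      norm_num at hP
    · have hσq : ∀ t, F.sg t * F.q l t = 0 := fun t => deriv_eq_zero_of_const hr (F.hdr l t)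
      have hdF : ∀ t, HasDerivAt (fun u => F.p l u ^ 2 + F.q l u ^ 2) 0 t := by
        intro t
        have h := ((F.hdp l t).pow 2).add ((F.hdq l t).pow 2)
        refine h.congr_deriv ?_
        symm
        rw [hr t]
        linear_combination (2 * Real.cos φ * F.q l t) * (hσq t) - 2 * F.q l t * Real.cos φ * (hσq t) + (2 * Real.cos φ) * hσq t
      have hFconst : ∀ t, F.p l t ^ 2 + F.q l t ^ 2 = F.p l s₀ ^ 2 + F.q l s₀ ^ 2 := fun t =>
        is_const_of_deriv_eq_zero (fun u => (hdF u).differentiableAt)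
          (fun u => (hdF u).deriv) t s₀
      have hps₀ : F.p l s₀ ≠ 0 := by
        intro h0
        rw [h0, mul_zero, zero_add] at heq0
        exact hφ ((mul_eq_zero.mp heq0).resolve_left hs₀)
      have hUV : {t | F.sg t ≠ 0} =
          {t | F.q l t = 0 ∧ F.rho t * F.p l t + F.sg t * Real.cos φ = 0} := by
        ext t
        constructor
        · exact fun ht => F.keylem l hr ht
        · rintro ⟨hqt, het⟩ 
          intro hszero
          rw [hszero, zero_mul, add_zero] at het
          have hpt : F.p l t = 0 := (mul_eq_zero.mp het).resolve_left (F.rne t)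
          have h1 := hFconst t
          rw [hpt, hqt, hq0] at h1
          have : F.p l s₀ ^ 2 = 0 := by linarith
          exact hps₀ (by nlinarith)
      have hUopen : IsOpen {t | F.sg t ≠ 0} := by
        have : IsOpen (F.sg ⁻¹' {(0 : ℝ)}ᶜ) := (isOpen_compl_singleton).preimage F.csg
        exact this
      have hVclosed : IsClosed {t | F.q l t = 0 ∧ F.rho t * F.p l t + F.sg t * Real.cos φ = 0} :=
        IsClosed.inter (isClosed_eq (F.cq l) continuous_const)
          (isClosed_eq ((F.crho.mul (F.cp l)).add (F.csg.mul continuous_const)) continuous_const)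
      have hclopen : IsClopen {t | F.sg t ≠ 0} := ⟨hUV ▸ hVclosed, hUopen⟩
      have huniv : {t | F.sg t ≠ 0} = Set.univ := by
        rcases isClopen_iff.mp hclopen with h | h
        · exact absurd (h ▸ hs₀ : s₀ ∈ (∅ : Set ℝ)) (Set.notMem_empty s₀)
        · exact h
      have hqall : ∀ t, F.q l t = 0 := fun t =>
        (F.keylem l hr (show t ∈ {t | F.sg t ≠ 0} from huniv ▸ Set.mem_univ t)).1
      have hpconst : ∀ t, F.p l t = F.p l 0 := fun t =>
        is_const_of_deriv_eq_zero (fun u => (F.hdp l u).differentiableAt)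
          (fun u => by rw [(F.hdp l u).deriv, hqall u, mul_zero]) t 0
      have hP := F.parseval hl 0
      have hb1 : -1 ≤ F.p l 0 := by nlinarith
      have hb2 : F.p l 0 ≤ 1 := by nlinarith
      exact ⟨l, Real.arccos (F.p l 0), hl, fun s => by
        rw [Real.cos_arccos hb1 hb2, hpconst s]⟩

lemma backward (d : EuclideanSpace ℝ (Fin 3)) (θ : ℝ) (hd : ‖d‖ = 1)
    (hp : ∀ s, F.p d s = Real.cos θ) :
    ∃ l φ, ‖l‖ = 1 ∧ ∀ s, F.r l s = Real.cos φ := by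
  have hq : ∀ s, F.q d s = 0 := fun s =>
    (mul_eq_zero.mp (deriv_eq_zero_of_const hp (F.hdp d s))).resolve_left (F.rne s)
  have hrconst : ∀ s, F.r d s = F.r d 0 := fun s =>
    is_const_of_deriv_eq_zero (fun u => (F.hdr d u).differentiableAt)
      (fun u => by rw [(F.hdr d u).deriv, hq u, mul_zero]) s 0
  have hP := F.parseval hd 0
  have hb1 : -1 ≤ F.r d 0 := by nlinarith
  have hb2 : F.r d 0 ≤ 1 := by nlinarith
  exact ⟨d, Real.arccos (F.r d 0), hd, fun s => by
    rw [Real.cos_arccos hb1 hb2, hrconst s]⟩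

lemma part2 (θ φ : ℝ) (d l : EuclideanSpace ℝ (Fin 3)) (hd : ‖d‖ = 1) (hl : ‖l‖ = 1)
    (hp : ∀ s, F.p d s = Real.cos θ) (hct : Real.cot θ ≠ 0)
    (hrl : ∀ s, F.r l s = Real.cos φ) :
    Real.cot φ = 1 / Real.cot θ ∨ Real.cot φ = -(1 / Real.cot θ) := by
  have hsθ : Real.sin θ ≠ 0 := by
    intro h; rw [Real.cot_eq_cos_div_sin, h, div_zero] at hct; exact hct rfl
  have hcθ : Real.cos θ ≠ 0 := by
    intro h; rw [Real.cot_eq_cos_div_sin, h, zero_div] at hct; exact hct rfl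
  have hqd : ∀ s, F.q d s = 0 := fun s =>
    (mul_eq_zero.mp (deriv_eq_zero_of_const hp (F.hdp d s))).resolve_left (F.rne s)
  have heqd : ∀ s, F.rho s * Real.cos θ + F.sg s * F.r d s = 0 := by
    intro s
    have h0 : -(F.rho s * F.p d s) - F.sg s * F.r d s = 0 :=
      deriv_eq_zero_of_const hqd (F.hdq d s)
    rw [hp s] at h0
    linarith
  have hσ0 : F.sg 0 ≠ 0 := by
    intro h
    have := heqd 0
    rw [h, zero_mul, add_zero] at this
    exact hcθ ((mul_eq_zero.mp this).resolve_left (F.rne 0))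
  have hrd0 : F.r d 0 ≠ 0 := by
    intro h
    have := heqd 0
    rw [h, mul_zero, add_zero] at this
    exact hcθ ((mul_eq_zero.mp this).resolve_left (F.rne 0))
  obtain ⟨hql0, heql0⟩ := F.keylem l hrl hσ0
  have hPd := F.parseval hd 0
  rw [hp 0, hqd 0] at hPd
  have hPl := F.parseval hl 0
  rw [hql0, hrl 0] at hPl
  have hpr : F.p l 0 * F.r d 0 = Real.cos θ * Real.cos φ := by
    apply mul_left_cancel₀ (F.rne 0)
    linear_combination (F.r d 0) * heql0 - Real.cos φ * (heqd 0)
  have hr2 : F.r d 0 ^ 2 = Real.sin θ ^ 2 := by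
    have := Real.sin_sq_add_cos_sq θ
    nlinarith
  have hpl0 : F.p l 0 ≠ 0 := by
    intro h
    rw [h, zero_mul] at hpr
    have hcφ : Real.cos φ = 0 := by
      rcases mul_eq_zero.mp hpr.symm with h1 | h1
      · exact absurd h1 hcθ
      · exact h1
    rw [h, hcφ] at hPl
    norm_num at hPl
  have hsφ2 : Real.sin φ ^ 2 = F.p l 0 ^ 2 := by
    have := Real.sin_sq_add_cos_sq φ
    nlinarith
  have hsφ : Real.sin φ ≠ 0 := by
    intro h
    rw [h] at hsφ2
    exact hpl0 (by nlinarith)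
  have key : Real.cos φ ^ 2 * Real.cos θ ^ 2 = Real.sin φ ^ 2 * Real.sin θ ^ 2 := by
    rw [hsφ2, ← hr2]
    linear_combination (-(F.p l 0 * F.r d 0 + Real.cos θ * Real.cos φ)) * hpr
  have hc2 : Real.cot φ ^ 2 = (1 / Real.cot θ) ^ 2 := by
    rw [Real.cot_eq_cos_div_sin, Real.cot_eq_cos_div_sin]
    rw [one_div_div]
    rw [div_pow, div_pow]
    rw [div_eq_div_iff (by positivity) (by positivity)]
    linear_combination key
  have hfac : (Real.cot φ - 1 / Real.cot θ) * (Real.cot φ + 1 / Real.cot θ) = 0 := by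
    linear_combination hc2
  rcases mul_eq_zero.mp hfac with h | h
  · left; linarith
  · right; linarith

end DF


theorem stmt8
    (ξ μ v : ℝ → EuclideanSpace ℝ (Fin 3)) (G K T : ℝ → ℝ)
    (hξs : ContDiff ℝ (⊤ : ℕ∞) ξ) (hμs : ContDiff ℝ (⊤ : ℕ∞) μ) (hvs : ContDiff ℝ (⊤ : ℕ∞) v)
    (hGs : ContDiff ℝ (⊤ : ℕ∞) G) (hKs : ContDiff ℝ (⊤ : ℕ∞) K) (hTs : ContDiff ℝ (⊤ : ℕ∞) T)
    (huξ : ∀ s, ‖ξ s‖ = 1) (huμ : ∀ s, ‖μ s‖ = 1) (huv : ∀ s, ‖v s‖ = 1)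
    (hξμ : ∀ s, (inner ℝ (ξ s) (μ s) : ℝ) = 0)
    (hξv : ∀ s, (inner ℝ (ξ s) (v s) : ℝ) = 0)
    (hμv : ∀ s, (inner ℝ (μ s) (v s) : ℝ) = 0)
    (hdξ : ∀ s, HasDerivAt ξ (G s • μ s + K s • v s) s)
    (hdμ : ∀ s, HasDerivAt μ (-(G s) • ξ s + T s • v s) s)
    (hdv : ∀ s, HasDerivAt v (-(K s) • ξ s - T s • μ s) s)
    (hGK : ∀ s, G s ^ 2 + K s ^ 2 ≠ 0) :
    ((∃ (l : EuclideanSpace ℝ (Fin 3)) (φ : ℝ), ‖l‖ = 1 ∧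
        ∀ s, (inner ℝ ((Real.sqrt (G s ^ 2 + K s ^ 2))⁻¹ • (-(K s) • μ s + G s • v s)) l : ℝ) = Real.cos φ) ↔
      (∃ (d : EuclideanSpace ℝ (Fin 3)) (θ : ℝ), ‖d‖ = 1 ∧ ∀ s, (inner ℝ (ξ s) d : ℝ) = Real.cos θ)) ∧
    (∀ (θ φ : ℝ) (d l : EuclideanSpace ℝ (Fin 3)),
      ‖d‖ = 1 → ‖l‖ = 1 →
      (∀ s, (inner ℝ (ξ s) d : ℝ) = Real.cos θ) →
      (∀ s, (K s ^ 2 * deriv (fun t => G t / K t) s - (G s ^ 2 + K s ^ 2) * T s) / (G s ^ 2 + K s ^ 2) ^ ((3 : ℝ) / 2) = Real.cot θ) →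
      Real.cot θ ≠ 0 →
      (∀ s, (inner ℝ ((Real.sqrt (G s ^ 2 + K s ^ 2))⁻¹ • (-(K s) • μ s + G s • v s)) l : ℝ) = Real.cos φ) →
      Real.cot φ = 1 / Real.cot θ ∨ Real.cot φ = -(1 / Real.cot θ)) := by
  set F : DF := ⟨ξ, μ, v, G, K, T, hGs, hKs, hTs, huξ, huμ, huv, hξμ, hξv, hμv, hdξ, hdμ, hdv, hGK⟩
    with hF
  constructor
  · constructor
    · rintro ⟨l, φ, hl, hc⟩
      exact F.forward l φ hl (fun s => hc s)
    · rintro ⟨d, θ, hd, hc⟩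
      obtain ⟨l, φ, hl, hc'⟩ := F.backward d θ hd (fun s => hc s)
      exact ⟨l, φ, hl, fun s => hc' s⟩
  · intro θ φ d l hd hl hpθ _ hct hrφ
    exact F.part2 θ φ d l hd hl (fun s => hpθ s) hct (fun s => hrφ s)

end Stmt8Aux
end

section
/- Let ξ, μ, v be a Darboux frame with invariants G, K, T and G² + T² never zero, and suppose the curve is a μ-helix with constant angle η (⟨μ, d⟩ = cos η for a fixed unit vector d). Then the axis is d = ∓(sin η)(T/√(G²+T²)) ξ + (cos η) μ ∓ (sin η)(G/√(G²+T²)) v. -/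
open Real

lemma expand3_s11 (e1 e2 e3 d : EuclideanSpace ℝ (Fin 3))
    (h1 : ‖e1‖ = 1) (h2 : ‖e2‖ = 1) (h3 : ‖e3‖ = 1)
    (h12 : (inner ℝ e1 e2 : ℝ) = 0) (h13 : (inner ℝ e1 e3 : ℝ) = 0)
    (h23 : (inner ℝ e2 e3 : ℝ) = 0) :
    d = (inner ℝ e1 d : ℝ) • e1 + (inner ℝ e2 d : ℝ) • e2 + (inner ℝ e3 d : ℝ) • e3 := by
  have he1 : (inner ℝ e1 e1 : ℝ) = 1 := by rw [real_inner_self_eq_norm_sq, h1]; norm_num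
  have he2 : (inner ℝ e2 e2 : ℝ) = 1 := by rw [real_inner_self_eq_norm_sq, h2]; norm_num
  have he3 : (inner ℝ e3 e3 : ℝ) = 1 := by rw [real_inner_self_eq_norm_sq, h3]; norm_num
  have h21 : (inner ℝ e2 e1 : ℝ) = 0 := by rw [real_inner_comm]; exact h12
  have h31 : (inner ℝ e3 e1 : ℝ) = 0 := by rw [real_inner_comm]; exact h13
  have h32 : (inner ℝ e3 e2 : ℝ) = 0 := by rw [real_inner_comm]; exact h23
  have hON : Orthonormal ℝ ![e1, e2, e3] := by
    rw [orthonormal_iff_ite]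
    intro i j
    fin_cases i <;> fin_cases j <;> simp [h1, h2, h3, h12, h13, h23, h21, h31, h32]
  have hspan : Submodule.span ℝ (Set.range ![e1, e2, e3]) = ⊤ :=
    hON.linearIndependent.span_eq_top_of_card_eq_finrank
      (by simp [finrank_euclideanSpace_fin])
  have hdmem : d ∈ Submodule.span ℝ (Set.range ![e1, e2, e3]) := hspan ▸ Submodule.mem_top
  rw [Submodule.mem_span_range_iff_exists_fun] at hdmem
  obtain ⟨x, hx⟩ := hdmem
  rw [Fin.sum_univ_three] at hx
  simp only [Matrix.cons_val_zero, Matrix.cons_val_one, Matrix.head_cons,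
    Matrix.cons_val_two, Matrix.tail_cons] at hx
  have hx0 : (inner ℝ e1 d : ℝ) = x 0 := by
    rw [← hx, inner_add_right, inner_add_right, real_inner_smul_right,
      real_inner_smul_right, real_inner_smul_right, he1, h12, h13]; ring
  have hx1 : (inner ℝ e2 d : ℝ) = x 1 := by
    rw [← hx, inner_add_right, inner_add_right, real_inner_smul_right,
      real_inner_smul_right, real_inner_smul_right, he2, h21, h23]; ring
  have hx2 : (inner ℝ e3 d : ℝ) = x 2 := by
    rw [← hx, inner_add_right, inner_add_right, real_inner_smul_right,
      real_inner_smul_right, real_inner_smul_right, he3, h31, h32]; ring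
  rw [hx0, hx1, hx2, hx]

theorem stmt11
    (ξ μ v : ℝ → EuclideanSpace ℝ (Fin 3)) (G K T : ℝ → ℝ)
    (hξs : ContDiff ℝ (⊤ : ℕ∞) ξ) (hμs : ContDiff ℝ (⊤ : ℕ∞) μ) (hvs : ContDiff ℝ (⊤ : ℕ∞) v)
    (hGs : ContDiff ℝ (⊤ : ℕ∞) G) (hKs : ContDiff ℝ (⊤ : ℕ∞) K) (hTs : ContDiff ℝ (⊤ : ℕ∞) T)
    (huξ : ∀ s, ‖ξ s‖ = 1) (huμ : ∀ s, ‖μ s‖ = 1) (huv : ∀ s, ‖v s‖ = 1)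
    (hξμ : ∀ s, (inner ℝ (ξ s) (μ s) : ℝ) = 0)
    (hξv : ∀ s, (inner ℝ (ξ s) (v s) : ℝ) = 0)
    (hμv : ∀ s, (inner ℝ (μ s) (v s) : ℝ) = 0)
    (hdξ : ∀ s, HasDerivAt ξ (G s • μ s + K s • v s) s)
    (hdμ : ∀ s, HasDerivAt μ (-(G s) • ξ s + T s • v s) s)
    (hdv : ∀ s, HasDerivAt v (-(K s) • ξ s - T s • μ s) s)
    (hGT : ∀ s, G s ^ 2 + T s ^ 2 ≠ 0)
    (d : EuclideanSpace ℝ (Fin 3)) (η : ℝ) (hd : ‖d‖ = 1)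
    (hhelix : ∀ s, (inner ℝ (μ s) d : ℝ) = Real.cos η) :
    ∃ ε : ℝ, (ε = 1 ∨ ε = -1) ∧ ∀ s,
      d = -(ε * Real.sin η * (T s / Real.sqrt (G s ^ 2 + T s ^ 2))) • ξ s
          + Real.cos η • μ s
          - (ε * Real.sin η * (G s / Real.sqrt (G s ^ 2 + T s ^ 2))) • v s := by
  obtain ⟨a, ha⟩ : ∃ a : ℝ → ℝ, ∀ s, a s = (inner ℝ (ξ s) d : ℝ) := ⟨_, fun _ => rfl⟩
  obtain ⟨c, hc⟩ : ∃ c : ℝ → ℝ, ∀ s, c s = (inner ℝ (v s) d : ℝ) := ⟨_, fun _ => rfl⟩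
  have hq : ∀ s, 0 < G s ^ 2 + T s ^ 2 := fun s =>
    lt_of_le_of_ne (by positivity) (Ne.symm (hGT s))
  have hr : ∀ s, 0 < Real.sqrt (G s ^ 2 + T s ^ 2) := fun s => Real.sqrt_pos.mpr (hq s)
  -- expansion of d in the frame
  have hexp : ∀ s, d = a s • ξ s + Real.cos η • μ s + c s • v s := by
    intro s
    have h := expand3_s11 (ξ s) (μ s) (v s) d (huξ s) (huμ s) (huv s) (hξμ s) (hξv s) (hμv s)
    rwa [hhelix s, ← ha s, ← hc s] at h
  -- norm identity
  have hpyth : ∀ s, a s ^ 2 + c s ^ 2 = Real.sin η ^ 2 := by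
    intro s
    have h1 : (inner ℝ d d : ℝ) = 1 := by rw [real_inner_self_eq_norm_sq, hd]; norm_num
    nth_rewrite 2 [hexp s] at h1
    have e1 : (inner ℝ d (ξ s) : ℝ) = a s := by rw [real_inner_comm]; exact (ha s).symm
    have e2 : (inner ℝ d (μ s) : ℝ) = Real.cos η := by rw [real_inner_comm]; exact hhelix s
    have e3 : (inner ℝ d (v s) : ℝ) = c s := by rw [real_inner_comm]; exact (hc s).symm
    rw [inner_add_right, inner_add_right, real_inner_smul_right, real_inner_smul_right,
      real_inner_smul_right, e1, e2, e3] at h1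
    have h2 := Real.sin_sq_add_cos_sq η
    nlinarith [h1, h2]
  -- constraint from differentiating the helix condition
  have hcons : ∀ s, T s * c s = G s * a s := by
    intro s
    have h1 := (hdμ s).inner ℝ (hasDerivAt_const s d)
    have h2 : HasDerivAt (fun t => (inner ℝ (μ t) d : ℝ)) 0 s := by
      have he : (fun t => (inner ℝ (μ t) d : ℝ)) = fun _ => Real.cos η := funext hhelix
      rw [he]; exact hasDerivAt_const s _
    have h3 := h1.unique h2
    rw [inner_zero_right, inner_add_left, real_inner_smul_left, real_inner_smul_left,
      ← ha s, ← hc s] at h3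
    linarith
  -- the function f
  obtain ⟨f, hf⟩ : ∃ f : ℝ → ℝ, ∀ s,
      f s = (a s * T s + c s * G s) / Real.sqrt (G s ^ 2 + T s ^ 2) := ⟨_, fun _ => rfl⟩
  have hsqrt_sq : ∀ s, Real.sqrt (G s ^ 2 + T s ^ 2) ^ 2 = G s ^ 2 + T s ^ 2 :=
    fun s => Real.sq_sqrt (hq s).le
  have hfsq : ∀ s, f s ^ 2 = Real.sin η ^ 2 := by
    intro s
    rw [hf s, div_pow, hsqrt_sq s]
    rw [div_eq_iff (hGT s)]
    nlinarith [hcons s, hpyth s]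
  have haf : ∀ s, a s * Real.sqrt (G s ^ 2 + T s ^ 2) = T s * f s := by
    intro s
    rw [hf s, mul_div_assoc']
    rw [eq_div_iff (hr s).ne']
    linear_combination a s * hsqrt_sq s - G s * hcons s
  have hcf : ∀ s, c s * Real.sqrt (G s ^ 2 + T s ^ 2) = G s * f s := by
    intro s
    rw [hf s, mul_div_assoc']
    rw [eq_div_iff (hr s).ne']
    linear_combination c s * hsqrt_sq s + T s * hcons s
  -- continuity of f
  have hfc : Continuous f := by
    have hfe : f = fun s => (a s * T s + c s * G s) / Real.sqrt (G s ^ 2 + T s ^ 2) :=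
      funext hf
    have hac : Continuous a := by
      have : a = fun s => (inner ℝ (ξ s) d : ℝ) := funext ha
      rw [this]; exact hξs.continuous.inner continuous_const
    have hcc : Continuous c := by
      have : c = fun s => (inner ℝ (v s) d : ℝ) := funext hc
      rw [this]; exact hvs.continuous.inner continuous_const
    rw [hfe]
    exact ((hac.mul hTs.continuous).add (hcc.mul hGs.continuous)).div
      (((hGs.continuous.pow 2).add (hTs.continuous.pow 2)).sqrt)
      (fun s => (hr s).ne')
  -- f is constant
  have hfconst : ∀ s, f s = f 0 := by
    intro s
    by_contra hne
    have hcase : f s = f 0 ∨ f s = -f 0 := by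
      have := (hfsq s).trans (hfsq 0).symm
      exact sq_eq_sq_iff_eq_or_eq_neg.mp this
    have hneg : f s = -f 0 := hcase.resolve_left hne
    have hf0ne : f 0 ≠ 0 := by
      intro h0
      rw [h0, neg_zero] at hneg
      exact hne (hneg.trans h0.symm)
    have h0mem : (0 : ℝ) ∈ Set.uIcc (f 0) (f s) := by
      rw [Set.mem_uIcc]
      rcases lt_or_gt_of_ne hf0ne with h | h
      · left; constructor <;> linarith [hneg]
      · right; constructor <;> linarith [hneg]
    obtain ⟨x, -, hx0⟩ := intermediate_value_uIcc (hfc.continuousOn) h0mem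
    have := hfsq x
    rw [hx0] at this
    have hsin0 : Real.sin η = 0 := by nlinarith
    have : f 0 = 0 := by nlinarith [hfsq 0]
    exact hf0ne this
  by_cases hsin : Real.sin η = 0
  · refine ⟨1, Or.inl rfl, fun s => ?_⟩
    have hf0 : f s = 0 := by
      have := hfsq s; rw [hsin] at this
      nlinarith
    have ha0 : a s = 0 := by
      have h := haf s; rw [hf0, mul_zero] at h
      exact (mul_eq_zero.mp h).resolve_right (hr s).ne'
    have hc0 : c s = 0 := by
      have h := hcf s; rw [hf0, mul_zero] at h
      exact (mul_eq_zero.mp h).resolve_right (hr s).ne'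
    rw [hexp s, ha0, hc0, hsin]
    simp
  · refine ⟨-(f 0) / Real.sin η, ?_, fun s => ?_⟩
    · rcases sq_eq_sq_iff_eq_or_eq_neg.mp ((hfsq 0).trans rfl) with h | h
      · right; rw [h]; field_simp
      · left; rw [h]; field_simp
    · have hface : -((-(f 0) / Real.sin η) * Real.sin η) = f s := by
        rw [hfconst s]; field_simp
      have haX : a s = -(-(f 0) / Real.sin η * Real.sin η *
          (T s / Real.sqrt (G s ^ 2 + T s ^ 2))) := by
        have h1 := haf s
        rw [show -(-(f 0) / Real.sin η * Real.sin η * (T s / Real.sqrt (G s ^ 2 + T s ^ 2)))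
          = -((-(f 0) / Real.sin η) * Real.sin η) * (T s / Real.sqrt (G s ^ 2 + T s ^ 2)) by ring,
          hface]
        rw [eq_comm, mul_div_assoc', div_eq_iff (hr s).ne']
        linarith [h1]
      have hcX : c s = -(-(f 0) / Real.sin η * Real.sin η *
          (G s / Real.sqrt (G s ^ 2 + T s ^ 2))) := by
        have h1 := hcf s
        rw [show -(-(f 0) / Real.sin η * Real.sin η * (G s / Real.sqrt (G s ^ 2 + T s ^ 2)))
          = -((-(f 0) / Real.sin η) * Real.sin η) * (G s / Real.sqrt (G s ^ 2 + T s ^ 2)) by ring,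
          hface]
        rw [eq_comm, mul_div_assoc', div_eq_iff (hr s).ne']
        linarith [h1]
      rw [hexp s, haX, hcX]
      module
end

section
/- Let ξ, μ, v be a Darboux frame with invariants G, K, T satisfying the Darboux equations, with K ≡ 0 and G² + T² never zero. Then the curve is a μ-helix if and only if (T'G - TG')/(G²+T²)^(3/2) is constant. -/
open Real

set_option maxHeartbeats 2000000 in
theorem stmt12
    (ξ μ v : ℝ → EuclideanSpace ℝ (Fin 3)) (G K T : ℝ → ℝ)
    (hξs : ContDiff ℝ (⊤ : ℕ∞) ξ) (hμs : ContDiff ℝ (⊤ : ℕ∞) μ) (hvs : ContDiff ℝ (⊤ : ℕ∞) v)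
    (hGs : ContDiff ℝ (⊤ : ℕ∞) G) (hKs : ContDiff ℝ (⊤ : ℕ∞) K) (hTs : ContDiff ℝ (⊤ : ℕ∞) T)
    (huξ : ∀ s, ‖ξ s‖ = 1) (huμ : ∀ s, ‖μ s‖ = 1) (huv : ∀ s, ‖v s‖ = 1)
    (hξμ : ∀ s, (inner ℝ (ξ s) (μ s) : ℝ) = 0)
    (hξv : ∀ s, (inner ℝ (ξ s) (v s) : ℝ) = 0)
    (hμv : ∀ s, (inner ℝ (μ s) (v s) : ℝ) = 0)
    (hdξ : ∀ s, HasDerivAt ξ (G s • μ s + K s • v s) s)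
    (hdμ : ∀ s, HasDerivAt μ (-(G s) • ξ s + T s • v s) s)
    (hdv : ∀ s, HasDerivAt v (-(K s) • ξ s - T s • μ s) s)
    (hK0 : ∀ s, K s = 0) (hGT : ∀ s, G s ^ 2 + T s ^ 2 ≠ 0) :
    (∃ (d : EuclideanSpace ℝ (Fin 3)) (η : ℝ), ‖d‖ = 1 ∧ ∀ s, (inner ℝ (μ s) d : ℝ) = Real.cos η) ↔ (∀ s₁ s₂ : ℝ, (fun s => (deriv T s * G s - T s * deriv G s) / (G s ^ 2 + T s ^ 2) ^ ((3 : ℝ) / 2)) s₁ = (fun s => (deriv T s * G s - T s * deriv G s) / (G s ^ 2 + T s ^ 2) ^ ((3 : ℝ) / 2)) s₂) := by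
  have hpos : ∀ s, 0 < G s ^ 2 + T s ^ 2 := fun s =>
    lt_of_le_of_ne (by positivity) (Ne.symm (hGT s))
  set ρ : ℝ → ℝ := fun s => Real.sqrt (G s ^ 2 + T s ^ 2) with hρdef
  have hρpos : ∀ s, 0 < ρ s := fun s => Real.sqrt_pos.mpr (hpos s)
  have hρsq : ∀ s, ρ s ^ 2 = G s ^ 2 + T s ^ 2 := fun s => Real.sq_sqrt (hpos s).le
  have hμξ : ∀ s, (inner ℝ (μ s) (ξ s) : ℝ) = 0 := fun s => by
    rw [real_inner_comm]; exact hξμ s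
  have hvξ : ∀ s, (inner ℝ (v s) (ξ s) : ℝ) = 0 := fun s => by
    rw [real_inner_comm]; exact hξv s
  have hvμ : ∀ s, (inner ℝ (v s) (μ s) : ℝ) = 0 := fun s => by
    rw [real_inner_comm]; exact hμv s
  have hξξ : ∀ s, (inner ℝ (ξ s) (ξ s) : ℝ) = 1 := fun s => by
    rw [real_inner_self_eq_norm_sq, huξ s]; norm_num
  have hμμ : ∀ s, (inner ℝ (μ s) (μ s) : ℝ) = 1 := fun s => by
    rw [real_inner_self_eq_norm_sq, huμ s]; norm_num
  have hvv : ∀ s, (inner ℝ (v s) (v s) : ℝ) = 1 := fun s => by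
    rw [real_inner_self_eq_norm_sq, huv s]; norm_num
  have hG' : ∀ s, HasDerivAt G (deriv G s) s := fun s =>
    ((hGs.differentiable (by simp)) s).hasDerivAt
  have hT' : ∀ s, HasDerivAt T (deriv T s) s := fun s =>
    ((hTs.differentiable (by simp)) s).hasDerivAt
  have hsq : ∀ s, HasDerivAt (fun s => G s ^ 2 + T s ^ 2)
      (2 * G s * deriv G s + 2 * T s * deriv T s) s := by
    intro s
    have := (((hG' s).pow 2).add ((hT' s).pow 2))
    refine this.congr_deriv (Eq.symm ?_); push_cast; ring
  have hρd : ∀ s, HasDerivAt ρ ((G s * deriv G s + T s * deriv T s) / ρ s) s := by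
    intro s
    have h := (Real.hasDerivAt_sqrt (hpos s).ne').comp s (hsq s)
    refine h.congr_deriv (Eq.symm ?_)
    field_simp
    ring
  have hr : ∀ s, (G s ^ 2 + T s ^ 2) ^ ((3:ℝ)/2) = ρ s ^ 3 := by
    intro s
    show _ = Real.sqrt (G s ^ 2 + T s ^ 2) ^ 3
    rw [Real.sqrt_eq_rpow, ← Real.rpow_natCast _ 3, ← Real.rpow_mul (hpos s).le]
    norm_num
  constructor
  · -- forward
    rintro ⟨d, η, hd1, hdc⟩
    set c : ℝ := Real.cos η with hcdef
    set a : ℝ → ℝ := fun s => (inner ℝ (ξ s) d : ℝ) with hadef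
    set b : ℝ → ℝ := fun s => (inner ℝ (v s) d : ℝ) with hbdef
    have ha' : ∀ s, HasDerivAt a (G s * c) s := by
      intro s
      have h := HasDerivAt.inner ℝ (hdξ s) (hasDerivAt_const s d)
      refine h.congr_deriv (Eq.symm ?_)
      rw [inner_zero_right, inner_add_left, real_inner_smul_left, real_inner_smul_left,
        hK0 s, hdc s]
      ring
    have hb' : ∀ s, HasDerivAt b (-(T s) * c) s := by
      intro s
      have h := HasDerivAt.inner ℝ (hdv s) (hasDerivAt_const s d)
      refine h.congr_deriv (Eq.symm ?_)
      rw [inner_zero_right, inner_sub_left, real_inner_smul_left, real_inner_smul_left,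
        hK0 s, hdc s]
      ring
    have hμd' : ∀ s, HasDerivAt (fun s => (inner ℝ (μ s) d : ℝ)) (-(G s) * a s + T s * b s) s := by
      intro s
      have h := HasDerivAt.inner ℝ (hdμ s) (hasDerivAt_const s d)
      refine h.congr_deriv (Eq.symm ?_)
      rw [inner_zero_right, inner_add_left, real_inner_smul_left, real_inner_smul_left]
      ring
    have hconst : (fun s => (inner ℝ (μ s) d : ℝ)) = fun _ => c := funext hdc
    have key1 : ∀ s, -(G s) * a s + T s * b s = 0 := by
      intro s
      exact (hμd' s).unique (hconst ▸ hasDerivAt_const s c)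
    set p : ℝ → ℝ := fun s => T s * a s + G s * b s with hpdef
    have hp' : ∀ s, HasDerivAt p (deriv T s * a s + deriv G s * b s) s := by
      intro s
      have h := ((hT' s).mul (ha' s)).add ((hG' s).mul (hb' s))
      refine h.congr_deriv (Eq.symm ?_)
      ring
    have key2 : ∀ s, -(deriv G s) * a s + deriv T s * b s - (G s ^ 2 + T s ^ 2) * c = 0 := by
      intro s
      have hq' : HasDerivAt (fun s => -(G s) * a s + T s * b s)
          ((-(deriv G s)) * a s + (-(G s)) * (G s * c) + (deriv T s * b s + T s * (-(T s) * c))) s :=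
        (((hG' s).neg).mul (ha' s)).add ((hT' s).mul (hb' s))
      have h0 : HasDerivAt (fun s => -(G s) * a s + T s * b s) 0 s := by
        have : (fun s => -(G s) * a s + T s * b s) = fun _ => (0:ℝ) := funext key1
        rw [this]
        exact hasDerivAt_const s 0
      have := hq'.unique h0
      linear_combination this
    have ha2 : ∀ s, (G s ^ 2 + T s ^ 2) * a s = T s * p s := by
      intro s
      simp only [hpdef]
      linear_combination (-(G s)) * key1 s
    have hb2 : ∀ s, (G s ^ 2 + T s ^ 2) * b s = G s * p s := by
      intro s
      simp only [hpdef]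
      linear_combination (T s) * key1 s
    have key3 : ∀ s, (deriv T s * G s - T s * deriv G s) * p s = (G s ^ 2 + T s ^ 2) ^ 2 * c := by
      intro s
      linear_combination (deriv G s) * ha2 s - (deriv T s) * hb2 s + (G s ^ 2 + T s ^ 2) * key2 s
    set P : ℝ → ℝ := fun s => p s / ρ s with hPdef
    have hP' : ∀ s, HasDerivAt P 0 s := by
      intro s
      have h := (hp' s).div (hρd s) (hρpos s).ne'
      refine h.congr_deriv (Eq.symm ?_)
      rw [eq_comm, div_eq_zero_iff]
      left
      have h1 := ha2 s
      have h2 := hb2 s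
      have h3 := hρsq s
      have hρne := (hρpos s).ne'
      field_simp
      linear_combination deriv T s * h1 + deriv G s * h2 + (deriv T s * a s + deriv G s * b s) * h3
    have hPc : ∀ s, P s = P 0 :=
      fun s => is_const_of_deriv_eq_zero (fun x => (hP' x).differentiableAt)
        (fun x => (hP' x).deriv) s 0
    by_cases hP0 : P 0 = 0
    · exfalso
      have hp0 : ∀ s, p s = 0 := by
        intro s
        have h := hPc s
        rw [hP0] at h
        simp only [hPdef] at h
        exact (div_eq_zero_iff.mp h).resolve_right (hρpos s).ne'
      have hc0 : c = 0 := by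
        have h := key3 0
        rw [hp0 0, mul_zero] at h
        exact ((mul_eq_zero.mp h.symm).resolve_left (pow_ne_zero 2 (hGT 0)))
      have ha0 : a 0 = 0 := by
        have h := ha2 0
        rw [hp0 0, mul_zero] at h
        exact (mul_eq_zero.mp h).resolve_left (hGT 0)
      have hb0 : b 0 = 0 := by
        have h := hb2 0
        rw [hp0 0, mul_zero] at h
        exact (mul_eq_zero.mp h).resolve_left (hGT 0)
      -- Parseval
      set g : Fin 3 → EuclideanSpace ℝ (Fin 3) := ![ξ 0, μ 0, v 0] with hgdef
      have hON : Orthonormal ℝ g := by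
        constructor
        · intro i
          fin_cases i
          · exact huξ 0
          · exact huμ 0
          · exact huv 0
        · intro i j hij
          fin_cases i <;> fin_cases j <;>
            first
              | exact absurd rfl hij
              | exact hξμ 0
              | exact hξv 0
              | exact hμv 0
              | exact hμξ 0
              | exact hvξ 0
              | exact hvμ 0
      have hcard : Fintype.card (Fin 3) = Module.finrank ℝ (EuclideanSpace ℝ (Fin 3)) := by
        simp
      have hspan : ⊤ ≤ Submodule.span ℝ (Set.range g) :=
        le_of_eq (hON.linearIndependent.span_eq_top_of_card_eq_finrank hcard).symm
      set B : OrthonormalBasis (Fin 3) ℝ (EuclideanSpace ℝ (Fin 3)) :=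
        OrthonormalBasis.mk hON hspan with hBdef
      have hpar := B.sum_inner_mul_inner d d
      rw [Fin.sum_univ_three] at hpar
      have hB : ∀ i, B i = g i := fun i => by rw [hBdef, OrthonormalBasis.coe_mk]
      rw [hB 0, hB 1, hB 2] at hpar
      have hg0 : g 0 = ξ 0 := rfl
      have hg1 : g 1 = μ 0 := rfl
      have hg2 : g 2 = v 0 := rfl
      rw [hg0, hg1, hg2] at hpar
      rw [real_inner_comm (ξ 0) d, real_inner_comm (μ 0) d, real_inner_comm (v 0) d] at hpar
      have hdd : (inner ℝ d d : ℝ) = 1 := by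
        rw [real_inner_self_eq_norm_sq, hd1]; norm_num
      rw [hdd, hdc 0] at hpar
      have haa : (inner ℝ (ξ 0) d : ℝ) = a 0 := rfl
      have hbb : (inner ℝ (v 0) d : ℝ) = b 0 := rfl
      rw [haa, hbb, ha0, hb0] at hpar
      rw [hc0] at hpar
      norm_num at hpar
    · intro s₁ s₂
      simp only
      have hkey : ∀ s, (deriv T s * G s - T s * deriv G s) / (G s ^ 2 + T s ^ 2) ^ ((3:ℝ)/2)
          = c / P 0 := by
        intro s
        have hPs : P s = P 0 := hPc s
        have hps : p s ≠ 0 := by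
          intro h0
          apply hP0
          rw [← hPs]
          simp only [hPdef, h0, zero_div]
        rw [hr s, ← hPs]
        simp only [hPdef]
        have h3 := key3 s
        have hsqq := hρsq s
        have hρne := (hρpos s).ne'
        rw [div_div_eq_mul_div, div_eq_div_iff (pow_ne_zero 3 hρne) hps]
        linear_combination h3 - c * (ρ s ^ 2 + G s ^ 2 + T s ^ 2) * hsqq
      rw [hkey s₁, hkey s₂]
  · -- converse
    intro hm
    set m₀ : ℝ := (deriv T 0 * G 0 - T 0 * deriv G 0) / (G 0 ^ 2 + T 0 ^ 2) ^ ((3:ℝ)/2) with hm₀def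
    have hm' : ∀ s, m₀ * ρ s ^ 3 = deriv T s * G s - T s * deriv G s := by
      intro s
      have h := hm s 0
      simp only at h
      rw [hm₀def, ← h, hr s]
      rw [div_mul_eq_mul_div, mul_div_assoc, div_self (pow_ne_zero 3 (hρpos s).ne'), mul_one]
    clear_value m₀
    clear hm₀def
    -- W and f
    set W : ℝ → EuclideanSpace ℝ (Fin 3) := fun s => (ρ s)⁻¹ • (T s • ξ s + G s • v s) with hWdef
    set f : ℝ → EuclideanSpace ℝ (Fin 3) := fun s => m₀ • μ s + W s with hfdef
    have hf' : ∀ s, HasDerivAt f 0 s := by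
      intro s
      have h1 := ((hT' s).smul (hdξ s)).add ((hG' s).smul (hdv s))
      have h2 : HasDerivAt (fun s => (ρ s)⁻¹)
          (-((G s * deriv G s + T s * deriv T s) / ρ s) / (ρ s) ^ 2) s := (hρd s).inv (hρpos s).ne'
      have h3 := ((hdμ s).const_smul m₀).add (h2.smul h1)
      refine h3.congr_deriv (Eq.symm ?_)
      have hk := hK0 s
      have hmk := hm' s
      have hsq := hρsq s
      have hρne := (hρpos s).ne'
      rw [hk, Pi.add_apply, Pi.smul_apply', Pi.smul_apply']
      match_scalars
      · field_simp
        linear_combination (G s) * hmk + (-(deriv T s)) * hsq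
      · field_simp
        linear_combination (-(T s)) * hmk + (-(deriv G s)) * hsq
      · ring
    have hfc : ∀ s, f s = f 0 :=
      fun s => is_const_of_deriv_eq_zero (fun x => (hf' x).differentiableAt)
        (fun x => (hf' x).deriv) s 0
    have hμW : ∀ s, (inner ℝ (μ s) (W s) : ℝ) = 0 := by
      intro s
      show (inner ℝ (μ s) ((ρ s)⁻¹ • (T s • ξ s + G s • v s)) : ℝ) = 0
      simp only [inner_add_right, real_inner_smul_right]
      rw [hμv s, hμξ s]
      ring
    have hμf : ∀ s, (inner ℝ (μ s) (f s) : ℝ) = m₀ := by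
      intro s
      show (inner ℝ (μ s) (m₀ • μ s + W s) : ℝ) = m₀
      rw [inner_add_right, real_inner_smul_right, hμW s, hμμ s]
      ring
    have hWn : ∀ s, (inner ℝ (W s) (W s) : ℝ) = 1 := by
      intro s
      show (inner ℝ ((ρ s)⁻¹ • (T s • ξ s + G s • v s)) ((ρ s)⁻¹ • (T s • ξ s + G s • v s)) : ℝ) = 1
      simp only [inner_add_right, inner_add_left, real_inner_smul_right, real_inner_smul_left,
        hξv s, hvξ s, hξξ s, hvv s]
      have h := hρsq s
      have hρne := (hρpos s).ne'
      field_simp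
      linear_combination (-1 : ℝ) * h
    have hfn : ∀ s, ‖f s‖ = Real.sqrt (m₀ ^ 2 + 1) := by
      intro s
      have h2 : (inner ℝ (f s) (f s) : ℝ) = m₀ ^ 2 + 1 := by
        show (inner ℝ (m₀ • μ s + W s) (m₀ • μ s + W s) : ℝ) = _
        have hWμ : (inner ℝ (W s) (μ s) : ℝ) = 0 := by rw [real_inner_comm]; exact hμW s
        simp only [inner_add_left, inner_add_right, real_inner_smul_left,
          real_inner_smul_right, hμW s, hWμ, hμμ s, hWn s]
        ring
      have h3 : ‖f s‖ ^ 2 = m₀ ^ 2 + 1 := by rw [← real_inner_self_eq_norm_sq]; exact h2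
      rw [← h3, Real.sqrt_sq (norm_nonneg _)]
    set L : ℝ := Real.sqrt (m₀ ^ 2 + 1) with hLdef
    have hL : 0 < L := Real.sqrt_pos.mpr (by positivity)
    have hL2 : L ^ 2 = m₀ ^ 2 + 1 := Real.sq_sqrt (by positivity)
    refine ⟨L⁻¹ • f 0, Real.arccos (m₀ / L), ?_, ?_⟩
    · rw [norm_smul, hfn 0, norm_inv, Real.norm_eq_abs, abs_of_pos hL]
      exact inv_mul_cancel₀ hL.ne'
    · intro s
      have hb1 : -1 ≤ m₀ / L := by
        rw [le_div_iff₀ hL]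
        nlinarith [hL2, hL, sq_nonneg (m₀ + L)]
      have hb2 : m₀ / L ≤ 1 := by
        rw [div_le_iff₀ hL]
        nlinarith [hL2, hL, sq_nonneg (m₀ - L)]
      rw [Real.cos_arccos hb1 hb2, real_inner_smul_right, ← hfc s, hμf s]
      rw [inv_mul_eq_div]
end

section
/- Let ξ, μ, v be a Darboux frame with invariants G, K, T satisfying the Darboux equations, with G ≡ 0 and T never vanishing. Then the curve is a μ-helix if and only if K/T is constant. -/
open Real

lemma ortho3_eq_zero {x y z d : EuclideanSpace ℝ (Fin 3)}
    (hx : ‖x‖ = 1) (hy : ‖y‖ = 1) (hz : ‖z‖ = 1)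
    (hxy : (inner ℝ x y : ℝ) = 0) (hxz : (inner ℝ x z : ℝ) = 0) (hyz : (inner ℝ y z : ℝ) = 0)
    (h1 : (inner ℝ x d : ℝ) = 0) (h2 : (inner ℝ y d : ℝ) = 0) (h3 : (inner ℝ z d : ℝ) = 0) :
    d = 0 := by
  set f : Fin 3 → EuclideanSpace ℝ (Fin 3) := ![x, y, z] with hf
  have hon : Orthonormal ℝ f := by
    rw [orthonormal_iff_ite]
    intro i j
    have hxx : (inner ℝ x x : ℝ) = 1 := by rw [real_inner_self_eq_norm_sq, hx]; norm_num
    have hyy : (inner ℝ y y : ℝ) = 1 := by rw [real_inner_self_eq_norm_sq, hy]; norm_num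
    have hzz : (inner ℝ z z : ℝ) = 1 := by rw [real_inner_self_eq_norm_sq, hz]; norm_num
    fin_cases i <;> fin_cases j <;>
      simp [hf, hx, hy, hz, hxx, hyy, hzz, hxy, hxz, hyz, -PiLp.inner_apply,
        real_inner_comm x y, real_inner_comm x z, real_inner_comm y z]
  have hcard : Fintype.card (Fin 3) = Module.finrank ℝ (EuclideanSpace ℝ (Fin 3)) := by
    simp
  set B0 := basisOfOrthonormalOfCardEqFinrank hon hcard with hB0
  have hcoe : (B0 : Fin 3 → EuclideanSpace ℝ (Fin 3)) = f :=
    coe_basisOfOrthonormalOfCardEqFinrank hon hcard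
  have honB : Orthonormal ℝ (B0 : Fin 3 → EuclideanSpace ℝ (Fin 3)) := by rw [hcoe]; exact hon
  set B := B0.toOrthonormalBasis honB with hB
  have hBi : ∀ i, B i = f i := by
    intro i
    rw [hB, Module.Basis.coe_toOrthonormalBasis, hcoe]
  have := B.sum_repr' d
  rw [← this]
  apply Finset.sum_eq_zero
  intro i _
  fin_cases i <;> simp [hBi, hf, h1, h2, h3, -PiLp.inner_apply]

theorem stmt13
    (ξ μ v : ℝ → EuclideanSpace ℝ (Fin 3)) (G K T : ℝ → ℝ)
    (hξs : ContDiff ℝ (⊤ : ℕ∞) ξ) (hμs : ContDiff ℝ (⊤ : ℕ∞) μ) (hvs : ContDiff ℝ (⊤ : ℕ∞) v)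
    (hGs : ContDiff ℝ (⊤ : ℕ∞) G) (hKs : ContDiff ℝ (⊤ : ℕ∞) K) (hTs : ContDiff ℝ (⊤ : ℕ∞) T)
    (huξ : ∀ s, ‖ξ s‖ = 1) (huμ : ∀ s, ‖μ s‖ = 1) (huv : ∀ s, ‖v s‖ = 1)
    (hξμ : ∀ s, (inner ℝ (ξ s) (μ s) : ℝ) = 0)
    (hξv : ∀ s, (inner ℝ (ξ s) (v s) : ℝ) = 0)
    (hμv : ∀ s, (inner ℝ (μ s) (v s) : ℝ) = 0)
    (hdξ : ∀ s, HasDerivAt ξ (G s • μ s + K s • v s) s)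
    (hdμ : ∀ s, HasDerivAt μ (-(G s) • ξ s + T s • v s) s)
    (hdv : ∀ s, HasDerivAt v (-(K s) • ξ s - T s • μ s) s)
    (hG0 : ∀ s, G s = 0) (hT0 : ∀ s, T s ≠ 0) :
    (∃ (d : EuclideanSpace ℝ (Fin 3)) (η : ℝ), ‖d‖ = 1 ∧ ∀ s, (inner ℝ (μ s) d : ℝ) = Real.cos η) ↔ (∀ s₁ s₂ : ℝ, (fun s => K s / T s) s₁ = (fun s => K s / T s) s₂) := by
  constructor
  · rintro ⟨d, η, hd1, hb⟩
    -- b ≡ cos η ; show K/T constant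
    have hbconst : (fun s => (inner ℝ (μ s) d : ℝ)) = fun _ => Real.cos η := funext hb
    -- c := ⟪v, d⟫ vanishes
    have hc0 : ∀ s, (inner ℝ (v s) d : ℝ) = 0 := by
      intro s
      have h1 := (hdμ s).inner ℝ (hasDerivAt_const s d)
      have h2 : HasDerivAt (fun t => (inner ℝ (μ t) d : ℝ)) 0 s := by
        rw [hbconst]; exact hasDerivAt_const s _
      have h3 := h1.unique h2
      simp only [inner_zero_right, inner_add_left, inner_smul_left, hG0,
        RCLike.inner_apply, conj_trivial, zero_add, neg_zero, zero_mul] at h3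
      rcases mul_eq_zero.mp h3 with h | h
      · exact absurd h (hT0 s)
      · exact h
    have hcconst : (fun s => (inner ℝ (v s) d : ℝ)) = fun _ => (0 : ℝ) := funext hc0
    -- key relation K a + T cos η = 0
    have key : ∀ s, K s * (inner ℝ (ξ s) d : ℝ) + T s * Real.cos η = 0 := by
      intro s
      have h1 := (hdv s).inner ℝ (hasDerivAt_const s d)
      have h2 : HasDerivAt (fun t => (inner ℝ (v t) d : ℝ)) 0 s := by
        rw [hcconst]; exact hasDerivAt_const s _
      have h3 := h1.unique h2
      simp only [inner_zero_right, inner_sub_left, inner_smul_left,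
        RCLike.inner_apply, conj_trivial, zero_add, hb s] at h3
      linarith
    -- a := ⟪ξ, d⟫ is constant
    have hda : ∀ s, HasDerivAt (fun t => (inner ℝ (ξ t) d : ℝ)) 0 s := by
      intro s
      have h1 := (hdξ s).inner ℝ (hasDerivAt_const s d)
      have : (inner ℝ (ξ s) (0 : EuclideanSpace ℝ (Fin 3)) : ℝ)
          + (inner ℝ (G s • μ s + K s • v s) d : ℝ) = 0 := by
        simp [inner_add_left, inner_smul_left, hG0, hc0 s, -PiLp.inner_apply]
      rwa [this] at h1
    have ha : ∀ s, (inner ℝ (ξ s) d : ℝ) = (inner ℝ (ξ 0) d : ℝ) := by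
      intro s
      exact is_const_of_deriv_eq_zero (fun t => (hda t).differentiableAt)
        (fun t => (hda t).deriv) s 0
    intro s₁ s₂
    by_cases h0 : (inner ℝ (ξ 0) d : ℝ) = 0
    · -- then cos η = 0 and d ⊥ frame at 0, contradiction with ‖d‖ = 1
      have hcos : Real.cos η = 0 := by
        have hk := key 0
        rw [h0] at hk
        simp at hk
        rcases hk with h | h
        · exact absurd h (hT0 0)
        · exact h
      have hd0 : d = 0 :=
        ortho3_eq_zero (huξ 0) (huμ 0) (huv 0) (hξμ 0) (hξv 0) (hμv 0)
          h0 (by rw [hb 0, hcos]) (hc0 0)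
      rw [hd0, norm_zero] at hd1
      norm_num at hd1
    · have hfs : ∀ s, K s / T s = -(Real.cos η) / (inner ℝ (ξ 0) d : ℝ) := by
        intro s
        have hk := key s
        rw [ha s] at hk
        rw [div_eq_div_iff (hT0 s) h0]
        linear_combination hk
      simp only [hfs s₁, hfs s₂]
  · intro h
    set c := K 0 / T 0 with hc
    have hK : ∀ s, K s = c * T s := by
      intro s
      have h1 : K s / T s = c := h s 0
      exact (div_eq_iff (hT0 s)).mp h1
    set w : ℝ → EuclideanSpace ℝ (Fin 3) := fun s => ξ s - c • μ s with hwdef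
    have hw : ∀ s, HasDerivAt w 0 s := by
      intro s
      have h1 := (hdξ s).sub ((hdμ s).const_smul c)
      have h2 : G s • μ s + K s • v s - c • (-(G s) • ξ s + T s • v s) = 0 := by
        rw [hG0, hK s]
        simp [smul_smul]
      rwa [h2] at h1
    have hwconst : ∀ s, w s = w 0 := fun s =>
      is_const_of_deriv_eq_zero (fun t => (hw t).differentiableAt)
        (fun t => (hw t).deriv) s 0
    set r := Real.sqrt (1 + c ^ 2) with hr
    have hrpos : 0 < r := Real.sqrt_pos.mpr (by positivity)
    have hinner_w : ∀ s, (inner ℝ (w s) (w s) : ℝ) = 1 + c ^ 2 := by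
      intro s
      have h1 : (inner ℝ (ξ s) (ξ s) : ℝ) = 1 := by
        rw [real_inner_self_eq_norm_sq, huξ s]; norm_num
      have h2 : (inner ℝ (μ s) (μ s) : ℝ) = 1 := by
        rw [real_inner_self_eq_norm_sq, huμ s]; norm_num
      have h3 : (inner ℝ (μ s) (ξ s) : ℝ) = 0 := by
        rw [real_inner_comm]; exact hξμ s
      simp only [hwdef, inner_sub_left, inner_sub_right, inner_smul_left, inner_smul_right,
        RCLike.inner_apply, conj_trivial, h1, h2, h3, hξμ s]
      ring
    have hnw : ∀ s, ‖w s‖ = r := by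
      intro s
      rw [norm_eq_sqrt_real_inner, hinner_w s]
    refine ⟨r⁻¹ • w 0, Real.arccos (-c / r), ?_, ?_⟩
    · rw [norm_smul, hnw 0]
      rw [norm_inv, Real.norm_eq_abs, abs_of_pos hrpos]
      field_simp
    · intro s
      have hineq : |(-c) / r| ≤ 1 := by
        rw [abs_div, abs_of_pos hrpos, div_le_one hrpos, abs_neg]
        calc |c| = Real.sqrt (c ^ 2) := (Real.sqrt_sq_eq_abs c).symm
        _ ≤ r := Real.sqrt_le_sqrt (by nlinarith)
      rw [Real.cos_arccos (by linarith [abs_le.mp hineq]) (by linarith [abs_le.mp hineq])]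
      have h2 : (inner ℝ (μ s) (μ s) : ℝ) = 1 := by
        rw [real_inner_self_eq_norm_sq, huμ s]; norm_num
      have h3 : (inner ℝ (μ s) (ξ s) : ℝ) = 0 := by
        rw [real_inner_comm]; exact hξμ s
      rw [← hwconst s]
      simp only [hwdef, inner_smul_right, inner_sub_right, inner_smul_right,
        RCLike.inner_apply, conj_trivial, h2, h3]
      field_simp
      ring
end

section
/- Let ξ, μ, v be a Darboux frame with invariants G, K, T satisfying the Darboux equations, with T ≡ 0 and G never vanishing. Then the curve is a μ-helix if and only if K/G is constant. -/
open Real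

theorem stmt14
    (ξ μ v : ℝ → EuclideanSpace ℝ (Fin 3)) (G K T : ℝ → ℝ)
    (hξs : ContDiff ℝ (⊤ : ℕ∞) ξ) (hμs : ContDiff ℝ (⊤ : ℕ∞) μ) (hvs : ContDiff ℝ (⊤ : ℕ∞) v)
    (hGs : ContDiff ℝ (⊤ : ℕ∞) G) (hKs : ContDiff ℝ (⊤ : ℕ∞) K) (hTs : ContDiff ℝ (⊤ : ℕ∞) T)
    (huξ : ∀ s, ‖ξ s‖ = 1) (huμ : ∀ s, ‖μ s‖ = 1) (huv : ∀ s, ‖v s‖ = 1)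
    (hξμ : ∀ s, (inner ℝ (ξ s) (μ s) : ℝ) = 0)
    (hξv : ∀ s, (inner ℝ (ξ s) (v s) : ℝ) = 0)
    (hμv : ∀ s, (inner ℝ (μ s) (v s) : ℝ) = 0)
    (hdξ : ∀ s, HasDerivAt ξ (G s • μ s + K s • v s) s)
    (hdμ : ∀ s, HasDerivAt μ (-(G s) • ξ s + T s • v s) s)
    (hdv : ∀ s, HasDerivAt v (-(K s) • ξ s - T s • μ s) s)
    (hT0 : ∀ s, T s = 0) (hG0 : ∀ s, G s ≠ 0) :
    (∃ (d : EuclideanSpace ℝ (Fin 3)) (η : ℝ), ‖d‖ = 1 ∧ ∀ s, (inner ℝ (μ s) d : ℝ) = Real.cos η) ↔ (∀ s₁ s₂ : ℝ, (fun s => K s / G s) s₁ = (fun s => K s / G s) s₂) := by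
  have hξξ : ∀ s, (inner ℝ (ξ s) (ξ s) : ℝ) = 1 := fun s => by
    rw [real_inner_self_eq_norm_sq, huξ s]; norm_num
  have hμμ : ∀ s, (inner ℝ (μ s) (μ s) : ℝ) = 1 := fun s => by
    rw [real_inner_self_eq_norm_sq, huμ s]; norm_num
  have hvv : ∀ s, (inner ℝ (v s) (v s) : ℝ) = 1 := fun s => by
    rw [real_inner_self_eq_norm_sq, huv s]; norm_num
  constructor
  · rintro ⟨d, η, hd1, hμd⟩
    -- derivative of ⟪μ s, d⟫ is -G s * ⟪ξ s, d⟫, but the function is constant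
    have hξd : ∀ s, (inner ℝ (ξ s) d : ℝ) = 0 := by
      intro s
      have h1 : HasDerivAt (fun s => (inner ℝ (μ s) d : ℝ))
          (inner ℝ (μ s) (0 : EuclideanSpace ℝ (Fin 3)) + inner ℝ (-(G s) • ξ s + T s • v s) d) s :=
        (hdμ s).inner ℝ (hasDerivAt_const s d)
      have h2 : HasDerivAt (fun s => (inner ℝ (μ s) d : ℝ)) 0 s := by
        have : (fun s => (inner ℝ (μ s) d : ℝ)) = fun _ => Real.cos η := funext hμd
        rw [this]; exact hasDerivAt_const s _
      have h3 := h1.unique h2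
      rw [hT0] at h3
      simp only [inner_zero_right, zero_add, zero_smul, add_zero, inner_add_left,
        real_inner_smul_left, neg_mul, neg_eq_zero] at h3
      exact (mul_eq_zero.mp h3).resolve_left (hG0 s)
    -- ⟪v s, d⟫ is constant
    have hdvd : ∀ s, HasDerivAt (fun s => (inner ℝ (v s) d : ℝ)) 0 s := by
      intro s
      have h1 : HasDerivAt (fun s => (inner ℝ (v s) d : ℝ))
          (inner ℝ (v s) (0 : EuclideanSpace ℝ (Fin 3)) + inner ℝ (-(K s) • ξ s - T s • μ s) d) s :=
        (hdv s).inner ℝ (hasDerivAt_const s d)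
      convert h1 using 1
      rw [hT0]
      simp only [inner_zero_right, zero_add, zero_smul, sub_zero, real_inner_smul_left,
        hξd s, mul_zero, neg_zero]
    have hvconst : ∀ s, (inner ℝ (v s) d : ℝ) = (inner ℝ (v 0) d : ℝ) := by
      intro s
      exact is_const_of_deriv_eq_zero (fun x => ((hdvd x).differentiableAt))
        (fun x => (hdvd x).deriv) s 0
    set c : ℝ := (inner ℝ (v 0) d : ℝ) with hc
    -- derivative of ⟪ξ s, d⟫ = 0 gives G cos η + K c = 0
    have hkey : ∀ s, G s * Real.cos η + K s * c = 0 := by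
      intro s
      have h1 : HasDerivAt (fun s => (inner ℝ (ξ s) d : ℝ))
          (inner ℝ (ξ s) (0 : EuclideanSpace ℝ (Fin 3)) + inner ℝ (G s • μ s + K s • v s) d) s :=
        (hdξ s).inner ℝ (hasDerivAt_const s d)
      have h2 : HasDerivAt (fun s => (inner ℝ (ξ s) d : ℝ)) 0 s := by
        have : (fun s => (inner ℝ (ξ s) d : ℝ)) = fun _ => (0 : ℝ) := funext hξd
        rw [this]; exact hasDerivAt_const s _
      have h3 := h1.unique h2
      simp only [inner_zero_right, zero_add, inner_add_left, real_inner_smul_left,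
        hμd s, hvconst s] at h3
      exact h3
    by_cases hc0 : c = 0
    · -- then cos η = 0 and d is orthogonal to the frame: contradiction
      exfalso
      have hcos : Real.cos η = 0 := by
        have h4 := hkey 0
        rw [hc0, mul_zero, add_zero] at h4
        exact (mul_eq_zero.mp h4).resolve_left (hG0 0)
      have hμd0 : (inner ℝ (μ 0) d : ℝ) = 0 := by rw [hμd 0, hcos]
      have hvd0 : (inner ℝ (v 0) d : ℝ) = 0 := hc0
      have hdd : (inner ℝ d d : ℝ) = 1 := by
        rw [real_inner_self_eq_norm_sq, hd1]; norm_num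
      -- orthonormal family of 4 vectors in a 3-dim space
      set w : Fin 4 → EuclideanSpace ℝ (Fin 3) := ![ξ 0, μ 0, v 0, d] with hw
      have hon : Orthonormal ℝ w := by
        rw [orthonormal_iff_ite]
        intro i j
        fin_cases i <;> fin_cases j <;>
          first
            | (rw [if_pos rfl]; first
                | exact hξξ 0 | exact hμμ 0 | exact hvv 0 | exact hdd)
            | (rw [if_neg (by decide)]; first
                | exact hξμ 0 | exact hξv 0 | exact hμv 0
                | exact hξd 0 | exact hμd0 | exact hvd0
                | (rw [real_inner_comm]; first
                    | exact hξμ 0 | exact hξv 0 | exact hμv 0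
                    | exact hξd 0 | exact hμd0 | exact hvd0))
      have hli := hon.linearIndependent
      have hcard := hli.fintype_card_le_finrank
      rw [finrank_euclideanSpace_fin] at hcard
      simp at hcard
    · intro s₁ s₂
      have h : ∀ s, K s / G s = -Real.cos η / c := by
        intro s
        rw [div_eq_div_iff (hG0 s) hc0]
        linarith [hkey s]
      simp only
      rw [h s₁, h s₂]
  · intro hconst
    set lam : ℝ := K 0 / G 0 with hlam
    have hK : ∀ s, K s = lam * G s := by
      intro s
      have := hconst s 0
      simp only at this
      field_simp [hlam]
      field_simp [hG0 s] at this
      rw [this, hlam]; ring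
    set r : ℝ := Real.sqrt (1 + lam ^ 2) with hr
    have hr2 : r ^ 2 = 1 + lam ^ 2 := Real.sq_sqrt (by positivity)
    have hrpos : 0 < r := Real.sqrt_pos.mpr (by positivity)
    -- D := v - lam • μ is constant
    set D : ℝ → EuclideanSpace ℝ (Fin 3) := fun s => v s - lam • μ s with hD
    have hdD : ∀ s, HasDerivAt D 0 s := by
      intro s
      have h1 : HasDerivAt D ((-(K s) • ξ s - T s • μ s) - lam • (-(G s) • ξ s + T s • v s)) s :=
        (hdv s).sub ((hdμ s).const_smul lam)
      convert h1 using 1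
      rw [hT0, hK]
      module
    have hDconst : ∀ s, D s = D 0 := fun s =>
      is_const_of_deriv_eq_zero (fun x => (hdD x).differentiableAt)
        (fun x => (hdD x).deriv) s 0
    have hvm : (inner ℝ (v 0) (μ 0) : ℝ) = 0 := by rw [real_inner_comm]; exact hμv 0
    have hnD : ‖D 0‖ = r := by
      have h1 : (inner ℝ (D 0) (D 0) : ℝ) = 1 + lam ^ 2 := by
        simp only [hD, inner_sub_left, inner_sub_right, real_inner_smul_left,
          real_inner_smul_right, hvv 0, hμμ 0, hμv 0, hvm]
        ring
      have h2 : ‖D 0‖ ^ 2 = r ^ 2 := by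
        rw [← real_inner_self_eq_norm_sq, h1, hr2]
      nlinarith [norm_nonneg (D 0)]
    refine ⟨r⁻¹ • D 0, Real.arccos (-lam / r), ?_, ?_⟩
    · rw [norm_smul, hnD]
      simp [abs_of_pos hrpos, inv_mul_cancel₀ (ne_of_gt hrpos)]
    · intro s
      have hbound : -1 ≤ -lam / r ∧ -lam / r ≤ 1 := by
        constructor
        · rw [le_div_iff₀ hrpos]; nlinarith
        · rw [div_le_iff₀ hrpos]; nlinarith
      rw [Real.cos_arccos hbound.1 hbound.2]
      have hmD : (inner ℝ (μ s) (D 0) : ℝ) = -lam := by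
        rw [← hDconst s]
        simp only [hD, inner_sub_right, real_inner_smul_right, hμv s, hμμ s]
        ring
      rw [real_inner_smul_right, hmD]
      field_simp
end

section
/- Let ξ, μ, v be a Darboux frame with invariants G, K, T and G² + T² never zero, and let W_r = Tξ + Gv be the rectifying-type Darboux vector with unit vector W̄_r = W_r/‖W_r‖. Then the curve is a W_r-helix (W̄_r makes a constant angle with a fixed unit direction) if and only if it is a μ-helix (μ makes a constant angle with a fixed unit direction). -/
open Real Topology Filter

set_option maxHeartbeats 1000000 in
theorem stmt15
    (ξ μ v : ℝ → EuclideanSpace ℝ (Fin 3)) (G K T : ℝ → ℝ)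
    (hξs : ContDiff ℝ (⊤ : ℕ∞) ξ) (hμs : ContDiff ℝ (⊤ : ℕ∞) μ) (hvs : ContDiff ℝ (⊤ : ℕ∞) v)
    (hGs : ContDiff ℝ (⊤ : ℕ∞) G) (hKs : ContDiff ℝ (⊤ : ℕ∞) K) (hTs : ContDiff ℝ (⊤ : ℕ∞) T)
    (huξ : ∀ s, ‖ξ s‖ = 1) (huμ : ∀ s, ‖μ s‖ = 1) (huv : ∀ s, ‖v s‖ = 1)
    (hξμ : ∀ s, (inner ℝ (ξ s) (μ s) : ℝ) = 0)
    (hξv : ∀ s, (inner ℝ (ξ s) (v s) : ℝ) = 0)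
    (hμv : ∀ s, (inner ℝ (μ s) (v s) : ℝ) = 0)
    (hdξ : ∀ s, HasDerivAt ξ (G s • μ s + K s • v s) s)
    (hdμ : ∀ s, HasDerivAt μ (-(G s) • ξ s + T s • v s) s)
    (hdv : ∀ s, HasDerivAt v (-(K s) • ξ s - T s • μ s) s)
    (hGT : ∀ s, G s ^ 2 + T s ^ 2 ≠ 0) :
    (∃ (l : EuclideanSpace ℝ (Fin 3)) (ϑ : ℝ), ‖l‖ = 1 ∧
        ∀ s, (inner ℝ ((Real.sqrt (T s ^ 2 + G s ^ 2))⁻¹ • (T s • ξ s + G s • v s)) l : ℝ) = Real.cos ϑ) ↔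
      (∃ (d : EuclideanSpace ℝ (Fin 3)) (η : ℝ), ‖d‖ = 1 ∧ ∀ s, (inner ℝ (μ s) d : ℝ) = Real.cos η) := by
  have hT' : ∀ s, HasDerivAt T (deriv T s) s := fun s => ((hTs.differentiable (by simp)) s).hasDerivAt
  have hG' : ∀ s, HasDerivAt G (deriv G s) s := fun s => ((hGs.differentiable (by simp)) s).hasDerivAt
  have hpos : ∀ s, 0 < T s ^ 2 + G s ^ 2 := by
    intro s
    rcases lt_or_eq_of_le (by positivity : (0:ℝ) ≤ T s ^ 2 + G s ^ 2) with h | h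
    · exact h
    · exact absurd (by linarith : G s ^ 2 + T s ^ 2 = 0) (hGT s)
  have hFpos : ∀ s, 0 < Real.sqrt (T s ^ 2 + G s ^ 2) := fun s => Real.sqrt_pos.mpr (hpos s)
  have hF2 : ∀ s, Real.sqrt (T s ^ 2 + G s ^ 2) ^ 2 = T s ^ 2 + G s ^ 2 :=
    fun s => Real.sq_sqrt (hpos s).le
  have hPXI : ∀ (d : EuclideanSpace ℝ (Fin 3)) (s : ℝ),
      HasDerivAt (fun t => (inner ℝ (ξ t) d : ℝ))
        (G s * (inner ℝ (μ s) d : ℝ) + K s * (inner ℝ (v s) d : ℝ)) s := by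
    intro d s
    have h := HasDerivAt.inner ℝ (hdξ s) (hasDerivAt_const s d)
    have h2 : ((inner ℝ (ξ s) (0:EuclideanSpace ℝ (Fin 3)) : ℝ) +
        (inner ℝ (G s • μ s + K s • v s) d : ℝ)) = G s * (inner ℝ (μ s) d : ℝ) + K s * (inner ℝ (v s) d : ℝ) := by
      simp only [inner_zero_right, inner_add_left, real_inner_smul_left, zero_add]
    rw [h2] at h
    exact h
  have hPMU : ∀ (d : EuclideanSpace ℝ (Fin 3)) (s : ℝ),
      HasDerivAt (fun t => (inner ℝ (μ t) d : ℝ))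
        (-(G s * (inner ℝ (ξ s) d : ℝ) - T s * (inner ℝ (v s) d : ℝ))) s := by
    intro d s
    have h := HasDerivAt.inner ℝ (hdμ s) (hasDerivAt_const s d)
    have h2 : ((inner ℝ (μ s) (0:EuclideanSpace ℝ (Fin 3)) : ℝ) +
        (inner ℝ (-(G s) • ξ s + T s • v s) d : ℝ)) = -(G s * (inner ℝ (ξ s) d : ℝ) - T s * (inner ℝ (v s) d : ℝ)) := by
      simp only [inner_zero_right, inner_add_left, real_inner_smul_left, zero_add]
      ring
    rw [h2] at h
    exact h
  have hPV : ∀ (d : EuclideanSpace ℝ (Fin 3)) (s : ℝ),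
      HasDerivAt (fun t => (inner ℝ (v t) d : ℝ))
        (-(K s * (inner ℝ (ξ s) d : ℝ)) - T s * (inner ℝ (μ s) d : ℝ)) s := by
    intro d s
    have h := HasDerivAt.inner ℝ (hdv s) (hasDerivAt_const s d)
    have h2 : ((inner ℝ (v s) (0:EuclideanSpace ℝ (Fin 3)) : ℝ) +
        (inner ℝ (-(K s) • ξ s - T s • μ s) d : ℝ)) = -(K s * (inner ℝ (ξ s) d : ℝ)) - T s * (inner ℝ (μ s) d : ℝ) := by
      simp only [inner_zero_right, inner_sub_left, real_inner_smul_left, zero_add]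
      ring
    rw [h2] at h
    exact h
  -- C tilde derivative
  have hCt : ∀ (d : EuclideanSpace ℝ (Fin 3)) (s : ℝ),
      HasDerivAt (fun t => T t * (inner ℝ (ξ t) d : ℝ) + G t * (inner ℝ (v t) d : ℝ))
        (deriv T s * (inner ℝ (ξ s) d : ℝ) + deriv G s * (inner ℝ (v s) d : ℝ)
          - K s * (G s * (inner ℝ (ξ s) d : ℝ) - T s * (inner ℝ (v s) d : ℝ))) s := by
    intro d s
    have h := ((hT' s).mul (hPXI d s)).add ((hG' s).mul (hPV d s))
    refine h.congr_deriv ?_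
    ring
  have hQt : ∀ (d : EuclideanSpace ℝ (Fin 3)) (s : ℝ),
      HasDerivAt (fun t => G t * (inner ℝ (ξ t) d : ℝ) - T t * (inner ℝ (v t) d : ℝ))
        (deriv G s * (inner ℝ (ξ s) d : ℝ) - deriv T s * (inner ℝ (v s) d : ℝ)
          + (T s ^ 2 + G s ^ 2) * (inner ℝ (μ s) d : ℝ)
          + K s * (T s * (inner ℝ (ξ s) d : ℝ) + G s * (inner ℝ (v s) d : ℝ))) s := by
    intro d s
    have h := ((hG' s).mul (hPXI d s)).sub ((hT' s).mul (hPV d s))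
    refine h.congr_deriv ?_
    ring
  -- derivative of sqrt(T^2+G^2)
  have hTG : ∀ s, HasDerivAt (fun t => T t ^ 2 + G t ^ 2)
      (2 * T s * deriv T s + 2 * G s * deriv G s) s := by
    intro s
    have h := ((hT' s).pow 2).add ((hG' s).pow 2)
    refine h.congr_deriv ?_
    push_cast
    ring
  have hFd : ∀ s, HasDerivAt (fun t => Real.sqrt (T t ^ 2 + G t ^ 2))
      ((T s * deriv T s + G s * deriv G s) / Real.sqrt (T s ^ 2 + G s ^ 2)) s := by
    intro s
    have h := (hTG s).sqrt (hpos s).ne'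
    convert h using 1
    have h0 := (hFpos s).ne'
    field_simp
  -- derivative of the W-inner function
  have hW : ∀ (d : EuclideanSpace ℝ (Fin 3)) (s : ℝ),
      HasDerivAt (fun t => (Real.sqrt (T t ^ 2 + G t ^ 2))⁻¹ * (T t * (inner ℝ (ξ t) d : ℝ) + G t * (inner ℝ (v t) d : ℝ)))
        (-((T s * deriv T s + G s * deriv G s) / Real.sqrt (T s ^ 2 + G s ^ 2)) / Real.sqrt (T s ^ 2 + G s ^ 2) ^ 2
            * (T s * (inner ℝ (ξ s) d : ℝ) + G s * (inner ℝ (v s) d : ℝ))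
          + (Real.sqrt (T s ^ 2 + G s ^ 2))⁻¹ *
            (deriv T s * (inner ℝ (ξ s) d : ℝ) + deriv G s * (inner ℝ (v s) d : ℝ)
              - K s * (G s * (inner ℝ (ξ s) d : ℝ) - T s * (inner ℝ (v s) d : ℝ)))) s :=
    fun d s => ((hFd s).inv (hFpos s).ne').mul (hCt d s)
  -- generalized algebra lemmas with F opaque
  have halg1 : ∀ (F Ts Gs Ks T' G' px pv : ℝ), F ≠ 0 → F ^ 2 = Ts ^ 2 + Gs ^ 2 →
      Gs * px - Ts * pv = 0 →
      -((Ts * T' + Gs * G') / F) / F ^ 2 * (Ts * px + Gs * pv)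
        + F⁻¹ * (T' * px + G' * pv - Ks * (Gs * px - Ts * pv)) = 0 := by
    intro F Ts Gs Ks T' G' px pv h0 h2 hq
    have hrw : -((Ts * T' + Gs * G') / F) / F ^ 2 * (Ts * px + Gs * pv)
        + F⁻¹ * (T' * px + G' * pv - Ks * (Gs * px - Ts * pv))
        = (F ^ 2 * (T' * px + G' * pv - Ks * (Gs * px - Ts * pv))
            - (Ts * T' + Gs * G') * (Ts * px + Gs * pv)) / F ^ 3 := by
      field_simp
      ring
    rw [hrw, div_eq_zero_iff]
    left
    rw [hq, mul_zero, sub_zero]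
    linear_combination (T' * px + G' * pv) * h2 + (T' * Gs - G' * Ts) * hq
  have halg2 : ∀ (F Ts Gs Ks T' G' px pv : ℝ), F ≠ 0 → F ^ 2 = Ts ^ 2 + Gs ^ 2 →
      -((Ts * T' + Gs * G') / F) / F ^ 2 * (Ts * px + Gs * pv)
        + F⁻¹ * (T' * px + G' * pv - Ks * (Gs * px - Ts * pv)) = 0 →
      (T' * Gs - G' * Ts - Ks * (Ts ^ 2 + Gs ^ 2)) * (Gs * px - Ts * pv) = 0 := by
    intro F Ts Gs Ks T' G' px pv h0 h2 h
    have hrw : -((Ts * T' + Gs * G') / F) / F ^ 2 * (Ts * px + Gs * pv)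
        + F⁻¹ * (T' * px + G' * pv - Ks * (Gs * px - Ts * pv))
        = (F ^ 2 * (T' * px + G' * pv - Ks * (Gs * px - Ts * pv))
            - (Ts * T' + Gs * G') * (Ts * px + Gs * pv)) / F ^ 3 := by
      field_simp
      ring
    rw [hrw, div_eq_zero_iff] at h
    rcases h with h | h
    · linear_combination h + (Ks * (Gs * px - Ts * pv) - (T' * px + G' * pv)) * h2
    · exact absurd h (pow_ne_zero 3 h0)
  -- derivative of J
  have hJ : ∀ (d : EuclideanSpace ℝ (Fin 3)) (s : ℝ),
      HasDerivAt (fun t => (inner ℝ (μ t) d : ℝ) ^ 2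
          + (G t * (inner ℝ (ξ t) d : ℝ) - T t * (inner ℝ (v t) d : ℝ)) ^ 2 / (T t ^ 2 + G t ^ 2))
        ((-2) * (((deriv T s * G s - deriv G s * T s - K s * (T s ^ 2 + G s ^ 2))
            * (G s * (inner ℝ (ξ s) d : ℝ) - T s * (inner ℝ (v s) d : ℝ)))
            * (T s * (inner ℝ (ξ s) d : ℝ) + G s * (inner ℝ (v s) d : ℝ))) / (T s ^ 2 + G s ^ 2) ^ 2) s := by
    intro d s
    have h := ((hPMU d s).pow 2).add (((hQt d s).pow 2).div (hTG s) (hpos s).ne')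
    refine h.congr_deriv ?_
    simp only [Pi.pow_apply]
    have h0 := (hpos s).ne'
    field_simp
    ring
  -- norm of the unit rectifying Darboux vector
  have hWnorm : ∀ s, ‖(Real.sqrt (T s ^ 2 + G s ^ 2))⁻¹ • (T s • ξ s + G s • v s)‖ = 1 := by
    intro s
    have hn2 : ‖T s • ξ s + G s • v s‖ ^ 2 = T s ^ 2 + G s ^ 2 := by
      rw [norm_add_sq_real]
      rw [norm_smul, norm_smul, real_inner_smul_left, real_inner_smul_right, hξv s]
      rw [huξ s, huv s]
      simp [Real.norm_eq_abs, mul_pow, sq_abs]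
    have hn : ‖T s • ξ s + G s • v s‖ = Real.sqrt (T s ^ 2 + G s ^ 2) := by
      rw [← Real.sqrt_sq (norm_nonneg (T s • ξ s + G s • v s)), hn2]
    rw [norm_smul, hn, norm_inv, Real.norm_eq_abs, abs_of_pos (hFpos s),
      inv_mul_cancel₀ (hFpos s).ne']
  -- inner with the unit rectifying Darboux vector, scalar form
  have hWinner : ∀ (d : EuclideanSpace ℝ (Fin 3)) (s : ℝ),
      (inner ℝ ((Real.sqrt (T s ^ 2 + G s ^ 2))⁻¹ • (T s • ξ s + G s • v s)) d : ℝ)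
        = (Real.sqrt (T s ^ 2 + G s ^ 2))⁻¹ * (T s * (inner ℝ (ξ s) d : ℝ) + G s * (inner ℝ (v s) d : ℝ)) := by
    intro d s
    rw [real_inner_smul_left, inner_add_left, real_inner_smul_left, real_inner_smul_left]
  -- backward direction test
  have bwd : (∃ (d : EuclideanSpace ℝ (Fin 3)) (η : ℝ), ‖d‖ = 1 ∧ ∀ s, (inner ℝ (μ s) d : ℝ) = Real.cos η) →
      (∃ (l : EuclideanSpace ℝ (Fin 3)) (ϑ : ℝ), ‖l‖ = 1 ∧
        ∀ s, (inner ℝ ((Real.sqrt (T s ^ 2 + G s ^ 2))⁻¹ • (T s • ξ s + G s • v s)) l : ℝ) = Real.cos ϑ) := by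
    rintro ⟨d, η, hd1, hη⟩
    have hp0 : ∀ s, HasDerivAt (fun t => (inner ℝ (μ t) d : ℝ)) 0 s := by
      intro s
      have he : (fun t => (inner ℝ (μ t) d : ℝ)) = fun _ => Real.cos η := funext hη
      rw [he]
      exact hasDerivAt_const s _
    have hq0 : ∀ s, G s * (inner ℝ (ξ s) d : ℝ) - T s * (inner ℝ (v s) d : ℝ) = 0 := by
      intro s
      have h := (hPMU d s).unique (hp0 s)
      linarith
    have hWc : ∀ s, HasDerivAt (fun t => (Real.sqrt (T t ^ 2 + G t ^ 2))⁻¹ *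
        (T t * (inner ℝ (ξ t) d : ℝ) + G t * (inner ℝ (v t) d : ℝ))) 0 s := by
      intro s
      have h := hW d s
      rw [halg1 _ _ _ _ _ _ _ _ (hFpos s).ne' (hF2 s) (hq0 s)] at h
      exact h
    have hconst : ∀ s, (Real.sqrt (T s ^ 2 + G s ^ 2))⁻¹ *
        (T s * (inner ℝ (ξ s) d : ℝ) + G s * (inner ℝ (v s) d : ℝ))
        = (Real.sqrt (T 0 ^ 2 + G 0 ^ 2))⁻¹ *
        (T 0 * (inner ℝ (ξ 0) d : ℝ) + G 0 * (inner ℝ (v 0) d : ℝ)) := by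
      intro s
      have := is_const_of_deriv_eq_zero (fun t => (hWc t).differentiableAt)
        (fun t => (hWc t).deriv) s 0
      simpa using this
    have hb : |(Real.sqrt (T 0 ^ 2 + G 0 ^ 2))⁻¹ *
        (T 0 * (inner ℝ (ξ 0) d : ℝ) + G 0 * (inner ℝ (v 0) d : ℝ))| ≤ 1 := by
      rw [← hWinner d 0]
      have h := abs_real_inner_le_norm ((Real.sqrt (T 0 ^ 2 + G 0 ^ 2))⁻¹ • (T 0 • ξ 0 + G 0 • v 0)) d
      rw [hWnorm 0, hd1] at h
      simpa using h
    obtain ⟨hb1, hb2⟩ := abs_le.mp hb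
    refine ⟨d, Real.arccos ((Real.sqrt (T 0 ^ 2 + G 0 ^ 2))⁻¹ *
        (T 0 * (inner ℝ (ξ 0) d : ℝ) + G 0 * (inner ℝ (v 0) d : ℝ))), hd1, fun s => ?_⟩
    rw [hWinner d s, hconst s, Real.cos_arccos hb1 hb2]
  -- forward direction
  have fwd : (∃ (l : EuclideanSpace ℝ (Fin 3)) (ϑ : ℝ), ‖l‖ = 1 ∧
        ∀ s, (inner ℝ ((Real.sqrt (T s ^ 2 + G s ^ 2))⁻¹ • (T s • ξ s + G s • v s)) l : ℝ) = Real.cos ϑ) →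
      (∃ (d : EuclideanSpace ℝ (Fin 3)) (η : ℝ), ‖d‖ = 1 ∧ ∀ s, (inner ℝ (μ s) d : ℝ) = Real.cos η) := by
    rintro ⟨l, ϑ, hl, hϑ⟩
    have hc : ∀ s, (Real.sqrt (T s ^ 2 + G s ^ 2))⁻¹ *
        (T s * (inner ℝ (ξ s) l : ℝ) + G s * (inner ℝ (v s) l : ℝ)) = Real.cos ϑ :=
      fun s => (hWinner l s).symm.trans (hϑ s)
    have hW0 : ∀ s, HasDerivAt (fun t => (Real.sqrt (T t ^ 2 + G t ^ 2))⁻¹ *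
        (T t * (inner ℝ (ξ t) l : ℝ) + G t * (inner ℝ (v t) l : ℝ))) 0 s := by
      intro s
      have he : (fun t => (Real.sqrt (T t ^ 2 + G t ^ 2))⁻¹ *
          (T t * (inner ℝ (ξ t) l : ℝ) + G t * (inner ℝ (v t) l : ℝ))) = fun _ => Real.cos ϑ :=
        funext hc
      rw [he]
      exact hasDerivAt_const s _
    have hNQ : ∀ s, (deriv T s * G s - deriv G s * T s - K s * (T s ^ 2 + G s ^ 2)) *
        (G s * (inner ℝ (ξ s) l : ℝ) - T s * (inner ℝ (v s) l : ℝ)) = 0 :=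
      fun s => halg2 _ _ _ _ _ _ _ _ (hFpos s).ne' (hF2 s) ((hW l s).unique (hW0 s))
    by_cases hq : ∀ s, G s * (inner ℝ (ξ s) l : ℝ) - T s * (inner ℝ (v s) l : ℝ) = 0
    · have hp0 : ∀ s, HasDerivAt (fun t => (inner ℝ (μ t) l : ℝ)) 0 s := by
        intro s
        have h := hPMU l s
        rw [hq s] at h
        simpa using h
      have hpc : ∀ s, (inner ℝ (μ s) l : ℝ) = (inner ℝ (μ 0) l : ℝ) := by
        intro s
        have := is_const_of_deriv_eq_zero (fun t => (hp0 t).differentiableAt)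
          (fun t => (hp0 t).deriv) s 0
        simpa using this
      have hb : |(inner ℝ (μ 0) l : ℝ)| ≤ 1 := by
        have h := abs_real_inner_le_norm (μ 0) l
        rw [huμ 0, hl] at h
        simpa using h
      obtain ⟨hb1, hb2⟩ := abs_le.mp hb
      exact ⟨l, Real.arccos (inner ℝ (μ 0) l), hl,
        fun s => by rw [hpc s, Real.cos_arccos hb1 hb2]⟩
    · push_neg at hq
      obtain ⟨s₀, hs₀⟩ := hq
      have hJ0 : ∀ s, HasDerivAt (fun t => (inner ℝ (μ t) l : ℝ) ^ 2
          + (G t * (inner ℝ (ξ t) l : ℝ) - T t * (inner ℝ (v t) l : ℝ)) ^ 2 / (T t ^ 2 + G t ^ 2)) 0 s := by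
        intro s
        have h := hJ l s
        rw [hNQ s] at h
        simpa using h
      have hJc : ∀ x y : ℝ, (inner ℝ (μ x) l : ℝ) ^ 2
          + (G x * (inner ℝ (ξ x) l : ℝ) - T x * (inner ℝ (v x) l : ℝ)) ^ 2 / (T x ^ 2 + G x ^ 2)
          = (inner ℝ (μ y) l : ℝ) ^ 2
          + (G y * (inner ℝ (ξ y) l : ℝ) - T y * (inner ℝ (v y) l : ℝ)) ^ 2 / (T y ^ 2 + G y ^ 2) := by
        intro x y
        have := is_const_of_deriv_eq_zero (fun t => (hJ0 t).differentiableAt)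
          (fun t => (hJ0 t).deriv) x y
        simpa using this
      have hmem : ∀ s, G s * (inner ℝ (ξ s) l : ℝ) - T s * (inner ℝ (v s) l : ℝ) ≠ 0 →
          deriv T s * G s - deriv G s * T s - K s * (T s ^ 2 + G s ^ 2) = 0 :=
        fun s h => (mul_eq_zero.mp (hNQ s)).resolve_right h
      have hQcont : Continuous (fun s => G s * (inner ℝ (ξ s) l : ℝ) - T s * (inner ℝ (v s) l : ℝ)) :=
        Differentiable.continuous (fun s => ((hQt l s).differentiableAt))
      have hNcont : Continuous (fun s => deriv T s * G s - deriv G s * T s - K s * (T s ^ 2 + G s ^ 2)) := by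
        have h1 : Continuous (deriv T) := hTs.continuous_deriv (by simp)
        have h2 : Continuous (deriv G) := hGs.continuous_deriv (by simp)
        exact ((h1.mul hGs.continuous).sub (h2.mul hTs.continuous)).sub
          (hKs.continuous.mul ((hTs.continuous.pow 2).add (hGs.continuous.pow 2)))
      have hopen : IsOpen {s : ℝ | deriv T s * G s - deriv G s * T s - K s * (T s ^ 2 + G s ^ 2) = 0} := by
        rw [isOpen_iff_mem_nhds]
        intro a ha
        have ha' : deriv T a * G a - deriv G a * T a - K a * (T a ^ 2 + G a ^ 2) = 0 := ha
        by_cases hqa : G a * (inner ℝ (ξ a) l : ℝ) - T a * (inner ℝ (v a) l : ℝ) = 0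
        · have hpa : (inner ℝ (μ a) l : ℝ) ≠ 0 := by
            intro h0
            have h1 := hJc a s₀
            rw [hqa, h0] at h1
            have h2 : 0 < (G s₀ * (inner ℝ (ξ s₀) l : ℝ) - T s₀ * (inner ℝ (v s₀) l : ℝ)) ^ 2 :=
              lt_of_le_of_ne (sq_nonneg _) (Ne.symm (pow_ne_zero 2 hs₀))
            have h3 : 0 < (G s₀ * (inner ℝ (ξ s₀) l : ℝ) - T s₀ * (inner ℝ (v s₀) l : ℝ)) ^ 2
                / (T s₀ ^ 2 + G s₀ ^ 2) := div_pos h2 (hpos s₀)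
            have h4 := sq_nonneg (inner ℝ (μ s₀) l : ℝ)
            have h5 : ((0:ℝ)) ^ 2 + (0:ℝ) ^ 2 / (T a ^ 2 + G a ^ 2) = 0 := by
              norm_num
            rw [h5] at h1
            linarith
          have hzero : deriv G a * (inner ℝ (ξ a) l : ℝ) - deriv T a * (inner ℝ (v a) l : ℝ)
              + K a * (T a * (inner ℝ (ξ a) l : ℝ) + G a * (inner ℝ (v a) l : ℝ)) = 0 := by
            have h5 : (T a ^ 2 + G a ^ 2) * (deriv G a * (inner ℝ (ξ a) l : ℝ)
                - deriv T a * (inner ℝ (v a) l : ℝ)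
                + K a * (T a * (inner ℝ (ξ a) l : ℝ) + G a * (inner ℝ (v a) l : ℝ))) = 0 := by
              linear_combination (G a * deriv G a + T a * deriv T a) * hqa
                - (T a * (inner ℝ (ξ a) l : ℝ) + G a * (inner ℝ (v a) l : ℝ)) * ha'
            exact (mul_eq_zero.mp h5).resolve_left (hpos a).ne'
          have hQd : HasDerivAt (fun t => G t * (inner ℝ (ξ t) l : ℝ) - T t * (inner ℝ (v t) l : ℝ))
              ((T a ^ 2 + G a ^ 2) * (inner ℝ (μ a) l : ℝ)) a := by
            have h := hQt l a
            rw [show deriv G a * (inner ℝ (ξ a) l : ℝ) - deriv T a * (inner ℝ (v a) l : ℝ)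
                + (T a ^ 2 + G a ^ 2) * (inner ℝ (μ a) l : ℝ)
                + K a * (T a * (inner ℝ (ξ a) l : ℝ) + G a * (inner ℝ (v a) l : ℝ))
                = (T a ^ 2 + G a ^ 2) * (inner ℝ (μ a) l : ℝ) from by linear_combination hzero] at h
            exact h
          have hne := hQd.eventually_ne (c := G a * (inner ℝ (ξ a) l : ℝ) - T a * (inner ℝ (v a) l : ℝ)) (mul_ne_zero (hpos a).ne' hpa)
          have hev : ∀ᶠ z in 𝓝[≠] a,
              z ∈ {s : ℝ | deriv T s * G s - deriv G s * T s - K s * (T s ^ 2 + G s ^ 2) = 0} := by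
            filter_upwards [hne] with z hz
            exact hmem z (fun h0 => hz (h0.trans hqa.symm))
          rw [← nhdsNE_sup_pure a, Filter.mem_sup]
          exact ⟨hev, by simpa using ha⟩
        · have hev : ∀ᶠ z in 𝓝 a,
              G z * (inner ℝ (ξ z) l : ℝ) - T z * (inner ℝ (v z) l : ℝ) ≠ 0 :=
            hQcont.continuousAt.eventually_ne hqa
          exact hev.mono (fun z hz => hmem z hz)
      have hclosed : IsClosed {s : ℝ | deriv T s * G s - deriv G s * T s - K s * (T s ^ 2 + G s ^ 2) = 0} :=
        isClosed_eq hNcont continuous_const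
      have huniv := IsClopen.eq_univ ⟨hclosed, hopen⟩ ⟨s₀, hmem s₀ hs₀⟩
      have hN : ∀ s, deriv T s * G s - deriv G s * T s - K s * (T s ^ 2 + G s ^ 2) = 0 :=
        fun s => Set.eq_univ_iff_forall.mp huniv s
      -- the fixed axis : W at time 0
      refine ⟨(Real.sqrt (T 0 ^ 2 + G 0 ^ 2))⁻¹ • (T 0 • ξ 0 + G 0 • v 0), Real.pi / 2, hWnorm 0, ?_⟩
      set d : EuclideanSpace ℝ (Fin 3) := (Real.sqrt (T 0 ^ 2 + G 0 ^ 2))⁻¹ • (T 0 • ξ 0 + G 0 • v 0) with hd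
      have hξξ : (inner ℝ (ξ 0) (ξ 0) : ℝ) = 1 := by
        rw [real_inner_self_eq_norm_sq, huξ 0]; norm_num
      have hvv : (inner ℝ (v 0) (v 0) : ℝ) = 1 := by
        rw [real_inner_self_eq_norm_sq, huv 0]; norm_num
      have hpξ0 : (inner ℝ (ξ 0) d : ℝ) = (Real.sqrt (T 0 ^ 2 + G 0 ^ 2))⁻¹ * T 0 := by
        rw [hd, real_inner_smul_right, inner_add_right, real_inner_smul_right, real_inner_smul_right,
          hξξ, hξv 0]
        ring
      have hpv0 : (inner ℝ (v 0) d : ℝ) = (Real.sqrt (T 0 ^ 2 + G 0 ^ 2))⁻¹ * G 0 := by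
        rw [hd, real_inner_smul_right, inner_add_right, real_inner_smul_right, real_inner_smul_right,
          hvv, real_inner_comm (ξ 0) (v 0), hξv 0]
        ring
      have hpμ0 : (inner ℝ (μ 0) d : ℝ) = 0 := by
        rw [hd, real_inner_smul_right, inner_add_right, real_inner_smul_right, real_inner_smul_right,
          real_inner_comm (ξ 0) (μ 0), hξμ 0, hμv 0]
        ring
      have hq20 : G 0 * (inner ℝ (ξ 0) d : ℝ) - T 0 * (inner ℝ (v 0) d : ℝ) = 0 := by
        rw [hpξ0, hpv0]; ring
      have hJ20 : ∀ s, HasDerivAt (fun t => (inner ℝ (μ t) d : ℝ) ^ 2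
          + (G t * (inner ℝ (ξ t) d : ℝ) - T t * (inner ℝ (v t) d : ℝ)) ^ 2 / (T t ^ 2 + G t ^ 2)) 0 s := by
        intro s
        have h := hJ d s
        rw [hN s] at h
        simpa using h
      have hJzero : ∀ s, (inner ℝ (μ s) d : ℝ) ^ 2
          + (G s * (inner ℝ (ξ s) d : ℝ) - T s * (inner ℝ (v s) d : ℝ)) ^ 2 / (T s ^ 2 + G s ^ 2) = 0 := by
        intro s
        have h := is_const_of_deriv_eq_zero (fun t => (hJ20 t).differentiableAt)
          (fun t => (hJ20 t).deriv) s 0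
        rw [hpμ0, hq20] at h
        simpa using h
      intro s
      rw [Real.cos_pi_div_two]
      have h := hJzero s
      have h2 : 0 ≤ (G s * (inner ℝ (ξ s) d : ℝ) - T s * (inner ℝ (v s) d : ℝ)) ^ 2 / (T s ^ 2 + G s ^ 2) :=
        div_nonneg (sq_nonneg _) (hpos s).le
      have h3 : (inner ℝ (μ s) d : ℝ) ^ 2 = 0 := by nlinarith [sq_nonneg (inner ℝ (μ s) d : ℝ)]
      exact pow_eq_zero_iff (two_ne_zero) |>.mp h3
  exact ⟨fwd, bwd⟩
end

section
/- Let ξ, μ, v be a Darboux frame with invariants G, K, T and T² + K² never zero, and suppose the curve is a v-helix with constant angle ω (⟨v, d⟩ = cos ω for a fixed unit vector d). Then the axis is d = ∓(sin ω)(T/√(T²+K²)) ξ ± (sin ω)(K/√(T²+K²)) μ + (cos ω) v. -/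
open Real

theorem stmt17
    (ξ μ v : ℝ → EuclideanSpace ℝ (Fin 3)) (G K T : ℝ → ℝ)
    (hξs : ContDiff ℝ (⊤ : ℕ∞) ξ) (hμs : ContDiff ℝ (⊤ : ℕ∞) μ) (hvs : ContDiff ℝ (⊤ : ℕ∞) v)
    (hGs : ContDiff ℝ (⊤ : ℕ∞) G) (hKs : ContDiff ℝ (⊤ : ℕ∞) K) (hTs : ContDiff ℝ (⊤ : ℕ∞) T)
    (huξ : ∀ s, ‖ξ s‖ = 1) (huμ : ∀ s, ‖μ s‖ = 1) (huv : ∀ s, ‖v s‖ = 1)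
    (hξμ : ∀ s, (inner ℝ (ξ s) (μ s) : ℝ) = 0)
    (hξv : ∀ s, (inner ℝ (ξ s) (v s) : ℝ) = 0)
    (hμv : ∀ s, (inner ℝ (μ s) (v s) : ℝ) = 0)
    (hdξ : ∀ s, HasDerivAt ξ (G s • μ s + K s • v s) s)
    (hdμ : ∀ s, HasDerivAt μ (-(G s) • ξ s + T s • v s) s)
    (hdv : ∀ s, HasDerivAt v (-(K s) • ξ s - T s • μ s) s)
    (hTK : ∀ s, T s ^ 2 + K s ^ 2 ≠ 0)
    (d : EuclideanSpace ℝ (Fin 3)) (ω : ℝ) (hd : ‖d‖ = 1)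
    (hhelix : ∀ s, (inner ℝ (v s) d : ℝ) = Real.cos ω) :
    ∃ ε : ℝ, (ε = 1 ∨ ε = -1) ∧ ∀ s,
      d = -(ε * Real.sin ω * (T s / Real.sqrt (T s ^ 2 + K s ^ 2))) • ξ s
          + (ε * Real.sin ω * (K s / Real.sqrt (T s ^ 2 + K s ^ 2))) • μ s
          + Real.cos ω • v s := by
  have hsym : ∀ x y : EuclideanSpace ℝ (Fin 3), (inner ℝ x y : ℝ) = inner ℝ y x :=
    fun x y => real_inner_comm y x
  have hn : ∀ x : EuclideanSpace ℝ (Fin 3), ‖x‖ = 1 → (inner ℝ x x : ℝ) = 1 := by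
    intro x hx; rw [real_inner_self_eq_norm_sq, hx]; norm_num
  set f : ℝ → ℝ := fun s => (inner ℝ (ξ s) d : ℝ) with hf
  set g : ℝ → ℝ := fun s => (inner ℝ (μ s) d : ℝ) with hg
  -- Step A
  have hA : ∀ s, K s * f s + T s * g s = 0 := by
    intro s
    have h1 : HasDerivAt (fun t => (inner ℝ (v t) d : ℝ))
        ((inner ℝ (v s) (0:EuclideanSpace ℝ (Fin 3)) : ℝ) + (inner ℝ (-(K s) • ξ s - T s • μ s) d : ℝ)) s :=
      (hdv s).inner ℝ (hasDerivAt_const s d)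
    have h2 : HasDerivAt (fun t => (inner ℝ (v t) d : ℝ)) 0 s := by
      have : (fun t => (inner ℝ (v t) d : ℝ)) = fun _ => Real.cos ω := funext hhelix
      rw [this]; exact hasDerivAt_const s _
    have h3 := h1.unique h2
    rw [inner_zero_right, inner_sub_left, real_inner_smul_left, real_inner_smul_left,
      zero_add] at h3
    simp only [hf, hg]
    nlinarith [h3]
  -- Step B : expansion
  have hB : ∀ s, d = f s • ξ s + g s • μ s + Real.cos ω • v s := by
    intro s
    obtain ⟨r, hr⟩ : ∃ r : EuclideanSpace ℝ (Fin 3),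
        r = d - f s • ξ s - g s • μ s - Real.cos ω • v s := ⟨_, rfl⟩
    have hrξ : (inner ℝ (ξ s) r : ℝ) = 0 := by
      rw [hr, inner_sub_right, inner_sub_right, inner_sub_right, real_inner_smul_right,
        real_inner_smul_right, real_inner_smul_right, hn _ (huξ s), hξμ s, hξv s]
      simp only [hf]; ring
    have hrμ : (inner ℝ (μ s) r : ℝ) = 0 := by
      rw [hr, inner_sub_right, inner_sub_right, inner_sub_right, real_inner_smul_right,
        real_inner_smul_right, real_inner_smul_right, hn _ (huμ s), hsym (μ s) (ξ s), hξμ s, hμv s]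
      simp only [hg]; ring
    have hrv : (inner ℝ (v s) r : ℝ) = 0 := by
      rw [hr, inner_sub_right, inner_sub_right, inner_sub_right, real_inner_smul_right,
        real_inner_smul_right, real_inner_smul_right, hn _ (huv s), hsym (v s) (ξ s),
        hsym (v s) (μ s), hξv s, hμv s, hhelix s]
      ring
    have hon : Orthonormal ℝ ![ξ s, μ s, v s] := by
      rw [orthonormal_iff_ite]
      intro i j
      fin_cases i <;> fin_cases j <;>
        simp [hn _ (huξ s), hn _ (huμ s), hn _ (huv s), hξμ s, hξv s, hμv s,
          hsym (μ s) (ξ s), hsym (v s) (ξ s), hsym (v s) (μ s), huξ s, huμ s, huv s]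
    have hsp : Submodule.span ℝ (Set.range ![ξ s, μ s, v s]) = ⊤ := by
      apply Submodule.eq_top_of_finrank_eq
      rw [finrank_span_eq_card hon.linearIndependent]
      simp [finrank_euclideanSpace_fin]
    have hrmem : r ∈ Submodule.span ℝ (Set.range ![ξ s, μ s, v s]) := by
      rw [hsp]; trivial
    have hall : ∀ x ∈ Submodule.span ℝ (Set.range ![ξ s, μ s, v s]), (inner ℝ x r : ℝ) = 0 := by
      intro x hx
      induction hx using Submodule.span_induction with
      | mem y hy =>
          obtain ⟨i, rfl⟩ := hy
          fin_cases i
          · simpa using hrξ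
          · simpa using hrμ
          · simpa using hrv
      | zero => simp
      | add y z hy hz ihy ihz => rw [inner_add_left, ihy, ihz]; ring
      | smul c y hy ihy => rw [real_inner_smul_left, ihy]; ring
    have hrr : (inner ℝ r r : ℝ) = 0 := hall r hrmem
    have hr0 := inner_self_eq_zero.mp hrr
    rw [hr] at hr0
    rw [sub_sub, sub_sub] at hr0
    have := sub_eq_zero.mp hr0
    rw [this, add_assoc]
  -- Step C
  have hC : ∀ s, f s ^ 2 + g s ^ 2 = Real.sin ω ^ 2 := by
    intro s
    have h1 : (inner ℝ d d : ℝ) = 1 := hn d hd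
    rw [hB s] at h1
    simp only [inner_add_left, inner_add_right, real_inner_smul_left, real_inner_smul_right,
      hn _ (huξ s), hn _ (huμ s), hn _ (huv s), hξμ s, hξv s, hμv s,
      hsym (μ s) (ξ s), hsym (v s) (ξ s), hsym (v s) (μ s)] at h1
    nlinarith [Real.sin_sq_add_cos_sq ω, h1]
  have hTKpos : ∀ s, 0 < T s ^ 2 + K s ^ 2 :=
    fun s => lt_of_le_of_ne (by positivity) (Ne.symm (hTK s))
  have hsq : ∀ s, Real.sqrt (T s ^ 2 + K s ^ 2) ^ 2 = T s ^ 2 + K s ^ 2 :=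
    fun s => Real.sq_sqrt (hTKpos s).le
  have hsqpos : ∀ s, 0 < Real.sqrt (T s ^ 2 + K s ^ 2) :=
    fun s => Real.sqrt_pos.mpr (hTKpos s)
  set lam : ℝ → ℝ := fun s => (K s * g s - T s * f s) / (T s ^ 2 + K s ^ 2) with hlam
  have e1 : ∀ s, f s = -(T s * lam s) := by
    intro s
    show f s = -(T s * ((K s * g s - T s * f s) / (T s ^ 2 + K s ^ 2)))
    rw [mul_div_assoc', ← neg_div, eq_div_iff (hTK s)]
    linear_combination K s * hA s
  have e2 : ∀ s, g s = K s * lam s := by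
    intro s
    show g s = K s * ((K s * g s - T s * f s) / (T s ^ 2 + K s ^ 2))
    rw [mul_div_assoc', eq_div_iff (hTK s)]
    linear_combination T s * hA s
  have fcont : Continuous f := hξs.continuous.inner continuous_const
  have gcont : Continuous g := hμs.continuous.inner continuous_const
  have hXcont : Continuous (fun s => T s ^ 2 + K s ^ 2) :=
    (hTs.continuous.pow 2).add (hKs.continuous.pow 2)
  have lamcont : Continuous lam :=
    ((hKs.continuous.mul gcont).sub (hTs.continuous.mul fcont)).div hXcont hTK
  set h : ℝ → ℝ := fun s => lam s * Real.sqrt (T s ^ 2 + K s ^ 2) with hh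
  have hcont : Continuous h := lamcont.mul (Real.continuous_sqrt.comp hXcont)
  have hh2 : ∀ s, h s ^ 2 = Real.sin ω ^ 2 := by
    intro s
    have hCs := hC s
    rw [e1 s, e2 s] at hCs
    show (lam s * Real.sqrt (T s ^ 2 + K s ^ 2)) ^ 2 = Real.sin ω ^ 2
    linear_combination (lam s) ^ 2 * hsq s + hCs
  by_cases hsin : Real.sin ω = 0
  · refine ⟨1, Or.inl rfl, fun s => ?_⟩
    have hf0 : f s = 0 := by nlinarith [hC s, sq_nonneg (f s), sq_nonneg (g s)]
    have hg0 : g s = 0 := by nlinarith [hC s, sq_nonneg (f s), sq_nonneg (g s)]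
    have := hB s
    rw [hf0, hg0] at this
    rw [this]
    simp [hsin]
  · have hne : ∀ s, h s ≠ 0 := by
      intro s hs
      apply hsin
      have := hh2 s
      rw [hs] at this
      nlinarith [this]
    have hconst : ∀ s, h s = h 0 := by
      intro s
      by_contra hne2
      have hopp : h s = -(h 0) := by
        have h1 := hh2 s
        have h2 := hh2 0
        have : (h s - h 0) * (h s + h 0) = 0 := by nlinarith
        rcases mul_eq_zero.mp this with h3 | h3
        · exact absurd (by linarith) hne2
        · linarith
      have hmem : (0:ℝ) ∈ Set.uIcc (h 0) (h s) := by
        rw [hopp]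
        rcases le_total (h 0) 0 with h4 | h4 <;>
          simp [Set.mem_uIcc] <;> [left; right] <;>
            first
            | linarith
            | (constructor <;> linarith)
      obtain ⟨t, _, ht⟩ := intermediate_value_uIcc (hcont.continuousOn (s := Set.uIcc 0 s)) hmem
      exact hne t ht
    refine ⟨h 0 / Real.sin ω, ?_, fun s => ?_⟩
    · have hsq0 : (h 0 / Real.sin ω) ^ 2 = 1 := by
        rw [div_pow, hh2 0, div_self (pow_ne_zero 2 hsin)]
      have : (h 0 / Real.sin ω - 1) * (h 0 / Real.sin ω + 1) = 0 := by nlinarith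
      rcases mul_eq_zero.mp this with h3 | h3
      · exact Or.inl (by linarith)
      · exact Or.inr (by linarith)
    · have hlamval : lam s = h 0 / Real.sqrt (T s ^ 2 + K s ^ 2) := by
        rw [eq_div_iff (hsqpos s).ne']
        exact hconst s
      have hcancel : h 0 / Real.sin ω * Real.sin ω = h 0 := div_mul_cancel₀ _ hsin
      have hfval : f s = -(h 0 / Real.sin ω * Real.sin ω * (T s / Real.sqrt (T s ^ 2 + K s ^ 2))) := by
        rw [e1 s, hlamval, hcancel]; ring
      have hgval : g s = h 0 / Real.sin ω * Real.sin ω * (K s / Real.sqrt (T s ^ 2 + K s ^ 2)) := by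
        rw [e2 s, hlamval, hcancel]; ring
      have := hB s
      rw [hfval, hgval] at this
      exact this
end

section
/- Let ξ, μ, v be a Darboux frame with invariants G, K, T and T² + K² never zero, and let W_o = Tξ - Kμ be the osculating-type Darboux vector with unit vector W̄_o = W_o/‖W_o‖. Then the curve is a W_o-helix (W̄_o makes a constant angle with a fixed unit direction) if and only if it is a v-helix (v makes a constant angle with a fixed unit direction). -/
open Real


lemma orth3 (x y z w : EuclideanSpace ℝ (Fin 3))
    (hx : ‖x‖ = 1) (hy : ‖y‖ = 1) (hz : ‖z‖ = 1)
    (hxy : (inner ℝ x y : ℝ) = 0) (hxz : (inner ℝ x z : ℝ) = 0) (hyz : (inner ℝ y z : ℝ) = 0)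
    (hwx : (inner ℝ x w : ℝ) = 0) (hwy : (inner ℝ y w : ℝ) = 0) (hwz : (inner ℝ z w : ℝ) = 0) :
    w = 0 := by
  have hxx : (inner ℝ x x : ℝ) = 1 := by
    rw [real_inner_self_eq_norm_mul_norm, hx]; norm_num
  have hyy : (inner ℝ y y : ℝ) = 1 := by
    rw [real_inner_self_eq_norm_mul_norm, hy]; norm_num
  have hzz : (inner ℝ z z : ℝ) = 1 := by
    rw [real_inner_self_eq_norm_mul_norm, hz]; norm_num
  have hon : Orthonormal ℝ ![x, y, z] := by
    rw [orthonormal_iff_ite]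
    intro i j
    fin_cases i <;> fin_cases j
    · show (inner ℝ x x : ℝ) = _ ; rw [if_pos rfl, hxx]
    · show (inner ℝ x y : ℝ) = _ ; rw [if_neg (by decide), hxy]
    · show (inner ℝ x z : ℝ) = _ ; rw [if_neg (by decide), hxz]
    · show (inner ℝ y x : ℝ) = _ ; rw [if_neg (by decide), real_inner_comm, hxy]
    · show (inner ℝ y y : ℝ) = _ ; rw [if_pos rfl, hyy]
    · show (inner ℝ y z : ℝ) = _ ; rw [if_neg (by decide), hyz]
    · show (inner ℝ z x : ℝ) = _ ; rw [if_neg (by decide), real_inner_comm, hxz]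
    · show (inner ℝ z y : ℝ) = _ ; rw [if_neg (by decide), real_inner_comm, hyz]
    · show (inner ℝ z z : ℝ) = _ ; rw [if_pos rfl, hzz]
  have hcard : Fintype.card (Fin 3) = Module.finrank ℝ (EuclideanSpace ℝ (Fin 3)) := by
    simp [finrank_euclideanSpace_fin]
  have hrep := (basisOfOrthonormalOfCardEqFinrank hon hcard).sum_repr w
  have hw : (inner ℝ w w : ℝ) = 0 := by
    nth_rw 1 [← hrep]
    rw [sum_inner, Fin.sum_univ_three]
    rw [show ((basisOfOrthonormalOfCardEqFinrank hon hcard) : Fin 3 → EuclideanSpace ℝ (Fin 3)) = ![x,y,z] from coe_basisOfOrthonormalOfCardEqFinrank hon hcard]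
    have e0 : (![x,y,z] : Fin 3 → EuclideanSpace ℝ (Fin 3)) 0 = x := rfl
    have e1 : (![x,y,z] : Fin 3 → EuclideanSpace ℝ (Fin 3)) 1 = y := rfl
    have e2 : (![x,y,z] : Fin 3 → EuclideanSpace ℝ (Fin 3)) 2 = z := rfl
    rw [e0, e1, e2, real_inner_smul_left, real_inner_smul_left, real_inner_smul_left,
      hwx, hwy, hwz]
    ring
  exact inner_self_eq_zero.mp hw


lemma coreA (al ρ b e : ℝ → ℝ) (A p q : ℝ)
    (halc : Continuous al) (hρc : Continuous ρ) (hρ : ∀ s, 0 < ρ s)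
    (h1 : ∀ s, al s * b s = 0)
    (h2 : ∀ s, HasDerivAt e (-(ρ s * b s)) s)
    (h3 : ∀ s, HasDerivAt b (-(al s * A) + ρ s * e s) s)
    (hpq : p < q) (hap : al p = 0) (hne : ∀ s ∈ Set.Ioc p q, al s ≠ 0) :
    A = 0 ∧ e q = 0 := by
  have hb0 : ∀ s ∈ Set.Ioc p q, b s = 0 := by
    intro s hs
    rcases mul_eq_zero.mp (h1 s) with h | h
    · exact absurd h (hne s hs)
    · exact h
  -- e is constant on Ioc p q with value e q
  have he_const : ∀ s ∈ Set.Ioc p q, e s = e q := by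
    intro s hs
    have hcont : ContinuousOn e (Set.Icc s q) :=
      fun x _ => ((h2 x).continuousAt).continuousWithinAt
    have hderiv : ∀ x ∈ Set.Ico s q, HasDerivWithinAt e 0 (Set.Ici x) x := by
      intro x hx
      have hbx : b x = 0 := hb0 x ⟨lt_of_lt_of_le hs.1 hx.1, hx.2.le⟩
      have := h2 x
      rw [hbx, mul_zero, neg_zero] at this
      exact this.hasDerivWithinAt
    have := constant_of_has_deriv_right_zero hcont hderiv q (Set.right_mem_Icc.2 hs.2)
    exact this.symm
  -- derivative of b is 0 on Ioo p q
  have hb'0 : ∀ s ∈ Set.Ioo p q, -(al s * A) + ρ s * e s = 0 := by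
    intro s hs
    have hev : b =ᶠ[nhds s] fun _ => (0 : ℝ) := by
      filter_upwards [Ioo_mem_nhds hs.1 hs.2] with x hx
      exact hb0 x ⟨hx.1, hx.2.le⟩
    have hzero : HasDerivAt b 0 s := (hasDerivAt_const s (0:ℝ)).congr_of_eventuallyEq hev
    exact ((h3 s).unique hzero)
  have hF : Set.EqOn (fun s => -(al s * A) + ρ s * e q) (fun _ => (0:ℝ)) (Set.Icc p q) := by
    have heq : Set.EqOn (fun s => -(al s * A) + ρ s * e q) (fun _ => (0:ℝ)) (Set.Ioo p q) := by
      intro s hs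
      have := hb'0 s hs
      rw [he_const s ⟨hs.1, hs.2.le⟩] at this
      exact this
    have hcl := heq.closure (by continuity) continuous_const
    rwa [closure_Ioo (ne_of_lt hpq)] at hcl
  have heq0 : e q = 0 := by
    have := hF (Set.left_mem_Icc.2 hpq.le)
    simp only [hap, zero_mul, neg_zero, zero_add] at this
    exact (mul_eq_zero.mp this).resolve_left (ne_of_gt (hρ p))
  constructor
  · have hmid : (p + q) / 2 ∈ Set.Ioo p q := ⟨by linarith, by linarith⟩
    have := hF (Set.mem_Icc_of_Ioo hmid)
    simp only [heq0, mul_zero, add_zero, neg_eq_zero] at this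
    exact (mul_eq_zero.mp this).resolve_left (hne _ ⟨hmid.1, hmid.2.le⟩)
  · exact heq0

lemma coreB (al ρ b e : ℝ → ℝ) (A s₀ s₁ : ℝ)
    (halc : Continuous al) (hρc : Continuous ρ) (hρ : ∀ s, 0 < ρ s)
    (h1 : ∀ s, al s * b s = 0)
    (h2 : ∀ s, HasDerivAt e (-(ρ s * b s)) s)
    (h3 : ∀ s, HasDerivAt b (-(al s * A) + ρ s * e s) s)
    (hlt : s₀ < s₁) (hb : b s₀ ≠ 0) (ha : al s₁ ≠ 0) :
    A = 0 ∧ e s₁ = 0 := by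
  have ha0 : al s₀ = 0 := by
    rcases mul_eq_zero.mp (h1 s₀) with h | h
    · exact h
    · exact absurd h hb
  set Z : Set ℝ := {s | s ∈ Set.Icc s₀ s₁ ∧ al s = 0} with hZ
  have hZne : Z.Nonempty := ⟨s₀, ⟨Set.left_mem_Icc.2 hlt.le, ha0⟩⟩
  have hZbdd : BddAbove Z := ⟨s₁, fun s hs => hs.1.2⟩
  have hZclosed : IsClosed Z := by
    have : Z = Set.Icc s₀ s₁ ∩ al ⁻¹' {0} := by
      ext s; simp [hZ, Set.mem_Icc, and_comm]
    rw [this]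
    exact isClosed_Icc.inter (isClosed_singleton.preimage halc)
  set p := sSup Z with hp
  have hpZ : p ∈ Z := hZclosed.csSup_mem hZne hZbdd
  have hps : p < s₁ := lt_of_le_of_ne hpZ.1.2 (by intro h; exact ha (h ▸ hpZ.2))
  have hne : ∀ s ∈ Set.Ioc p s₁, al s ≠ 0 := by
    intro s hs hals
    have hsZ : s ∈ Z := ⟨⟨le_trans hpZ.1.1 hs.1.le, hs.2⟩, hals⟩
    exact absurd (le_csSup hZbdd hsZ) (not_le.2 hs.1)
  exact coreA al ρ b e A p s₁ halc hρc hρ h1 h2 h3 hps hpZ.2 hne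

lemma coreC (al ρ b e : ℝ → ℝ) (A s₀ s₁ : ℝ)
    (halc : Continuous al) (hρc : Continuous ρ) (hρ : ∀ s, 0 < ρ s)
    (h1 : ∀ s, al s * b s = 0)
    (h2 : ∀ s, HasDerivAt e (-(ρ s * b s)) s)
    (h3 : ∀ s, HasDerivAt b (-(al s * A) + ρ s * e s) s)
    (hb : b s₀ ≠ 0) (ha : al s₁ ≠ 0) :
    A = 0 ∧ e s₁ = 0 := by
  rcases lt_trichotomy s₀ s₁ with h | h | h
  · exact coreB al ρ b e A s₀ s₁ halc hρc hρ h1 h2 h3 h hb ha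
  · exfalso; apply ha; subst h
    exact ((mul_eq_zero.mp (h1 s₀)).resolve_right hb)
  · -- reflect
    have key := coreB (fun t => al (-t)) (fun t => ρ (-t)) (fun t => -(b (-t)))
      (fun t => e (-t)) A (-s₀) (-s₁)
      (halc.comp continuous_neg) (hρc.comp continuous_neg) (fun s => hρ (-s))
      (by intro s; simp [h1 (-s)])
      (by
        intro t
        have := (h2 (-t)).comp t (hasDerivAt_neg t)
        refine this.congr_deriv ?_; symm
        ring)
      (by
        intro t
        have := ((h3 (-t)).comp t (hasDerivAt_neg t)).neg
        refine this.congr_deriv ?_; symm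
        ring)
      (by linarith) (by simpa using hb) (by simpa using ha)
    simpa using key

lemma key (ξ μ v : ℝ → EuclideanSpace ℝ (Fin 3)) (c k G ρ c' k' : ℝ → ℝ)
    (huξ : ∀ s, ‖ξ s‖ = 1) (huμ : ∀ s, ‖μ s‖ = 1) (huv : ∀ s, ‖v s‖ = 1)
    (hξμ : ∀ s, (inner ℝ (ξ s) (μ s) : ℝ) = 0)
    (hξv : ∀ s, (inner ℝ (ξ s) (v s) : ℝ) = 0)
    (hμv : ∀ s, (inner ℝ (μ s) (v s) : ℝ) = 0)
    (hGc : Continuous G) (hρc : Continuous ρ) (hc'c : Continuous c') (hk'c : Continuous k')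
    (hρ : ∀ s, 0 < ρ s)
    (hc' : ∀ s, HasDerivAt c (c' s) s) (hk' : ∀ s, HasDerivAt k (k' s) s)
    (hck1 : ∀ s, c s ^ 2 + k s ^ 2 = 1)
    (hck2 : ∀ s, c s * c' s + k s * k' s = 0)
    (hdξ : ∀ s, HasDerivAt ξ (G s • μ s + (ρ s * k s) • v s) s)
    (hdμ : ∀ s, HasDerivAt μ (-(G s) • ξ s + (ρ s * c s) • v s) s)
    (hdv : ∀ s, HasDerivAt v (-(ρ s * k s) • ξ s - (ρ s * c s) • μ s) s) :
    (∃ (l : EuclideanSpace ℝ (Fin 3)) (ε : ℝ), ‖l‖ = 1 ∧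
        ∀ s, (inner ℝ (c s • ξ s - k s • μ s) l : ℝ) = Real.cos ε) ↔
      (∃ (d : EuclideanSpace ℝ (Fin 3)) (ω : ℝ), ‖d‖ = 1 ∧
        ∀ s, (inner ℝ (v s) d : ℝ) = Real.cos ω) := by
  set Wb : ℝ → EuclideanSpace ℝ (Fin 3) := fun s => c s • ξ s - k s • μ s with hWb
  set uu : ℝ → EuclideanSpace ℝ (Fin 3) := fun s => k s • ξ s + c s • μ s with huu
  set al : ℝ → ℝ := fun s => k s * c' s - c s * k' s + G s with hal
  have hcc : Continuous c := by
    rw [continuous_iff_continuousAt]; exact fun s => (hc' s).differentiableAt.continuousAt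
  have hkc : Continuous k := by
    rw [continuous_iff_continuousAt]; exact fun s => (hk' s).differentiableAt.continuousAt
  have halc : Continuous al := ((hkc.mul hc'c).sub (hcc.mul hk'c)).add hGc
  -- frame derivatives
  have hWd : ∀ s, HasDerivAt Wb (al s • uu s) s := by
    intro s
    have h := ((hc' s).smul (hdξ s)).sub ((hk' s).smul (hdμ s))
    refine h.congr_deriv ?_; symm
    match_scalars
    · linear_combination (c' s) * hck1 s - c s * hck2 s
    · linear_combination k s * hck2 s - k' s * hck1 s
    · ring
  have hud : ∀ s, HasDerivAt uu ((-(al s)) • Wb s + ρ s • v s) s := by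
    intro s
    have h := ((hk' s).smul (hdξ s)).add ((hc' s).smul (hdμ s))
    refine h.congr_deriv ?_; symm
    match_scalars
    · linear_combination (k' s) * hck1 s - k s * hck2 s
    · linear_combination c' s * hck1 s - c s * hck2 s
    · linear_combination (-(ρ s)) * hck1 s
  have hvd : ∀ s, HasDerivAt v ((-(ρ s)) • uu s) s := by
    intro s
    convert hdv s using 1
    match_scalars <;> ring
  -- inner product derivatives against a fixed vector
  have ha : ∀ (n : EuclideanSpace ℝ (Fin 3)) (s : ℝ),
      HasDerivAt (fun t => (inner ℝ (Wb t) n : ℝ)) (al s * (inner ℝ (uu s) n : ℝ)) s := by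
    intro n s
    have h := HasDerivAt.inner ℝ (hWd s) (hasDerivAt_const s n)
    refine h.congr_deriv ?_; symm
    rw [inner_zero_right, real_inner_smul_left]
    ring
  have hb : ∀ (n : EuclideanSpace ℝ (Fin 3)) (s : ℝ),
      HasDerivAt (fun t => (inner ℝ (uu t) n : ℝ))
        (-(al s * (inner ℝ (Wb s) n : ℝ)) + ρ s * (inner ℝ (v s) n : ℝ)) s := by
    intro n s
    have h := HasDerivAt.inner ℝ (hud s) (hasDerivAt_const s n)
    refine h.congr_deriv ?_; symm
    rw [inner_zero_right, inner_add_left, real_inner_smul_left, real_inner_smul_left]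
    ring
  have he : ∀ (n : EuclideanSpace ℝ (Fin 3)) (s : ℝ),
      HasDerivAt (fun t => (inner ℝ (v t) n : ℝ)) (-(ρ s * (inner ℝ (uu s) n : ℝ))) s := by
    intro n s
    have h := HasDerivAt.inner ℝ (hvd s) (hasDerivAt_const s n)
    refine h.congr_deriv ?_; symm
    rw [inner_zero_right, real_inner_smul_left]
    ring
  -- basic geometric facts
  have hWnorm : ∀ s, ‖Wb s‖ = 1 := by
    intro s
    have h2 : ‖Wb s‖ ^ 2 = 1 := by
      rw [hWb]
      rw [norm_sub_sq_real, real_inner_smul_left, real_inner_smul_right, hξμ s,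
        norm_smul, norm_smul, huξ s, huμ s]
      simp [mul_pow, sq_abs]
      nlinarith [hck1 s]
    nlinarith [norm_nonneg (Wb s), h2]
  have hvξ : ∀ s, (inner ℝ (v s) (ξ s) : ℝ) = 0 := by
    intro s; rw [real_inner_comm]; exact hξv s
  have hvμ : ∀ s, (inner ℝ (v s) (μ s) : ℝ) = 0 := by
    intro s; rw [real_inner_comm]; exact hμv s
  have hWv : ∀ s, (inner ℝ (v s) (Wb s) : ℝ) = 0 := by
    intro s
    rw [hWb]
    simp only [inner_sub_right, real_inner_smul_right]
    rw [hvξ s, hvμ s]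
    ring
  constructor
  · -- W_o-helix → v-helix
    rintro ⟨l, ε, hl, hlc⟩
    have hlc' : ∀ s, (inner ℝ (Wb s) l : ℝ) = Real.cos ε := hlc
    -- a' = 0, hence al * b = 0 everywhere
    have haconstfun : (fun t => (inner ℝ (Wb t) l : ℝ)) = fun _ => Real.cos ε := funext hlc'
    have hab : ∀ s, al s * (inner ℝ (uu s) l : ℝ) = 0 := by
      intro s
      have h0 : HasDerivAt (fun t => (inner ℝ (Wb t) l : ℝ)) 0 s := by
        rw [haconstfun]; exact hasDerivAt_const s _
      exact (ha l s).unique h0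
    by_cases hball : ∀ s, (inner ℝ (uu s) l : ℝ) = 0
    · -- e' = 0, so e is constant
      have hed : ∀ s, HasDerivAt (fun t => (inner ℝ (v t) l : ℝ)) 0 s := by
        intro s
        have := he l s
        rw [hball s, mul_zero, neg_zero] at this
        exact this
      have hconst : ∀ s, (inner ℝ (v s) l : ℝ) = (inner ℝ (v 0) l : ℝ) := by
        intro s
        exact is_const_of_deriv_eq_zero (fun x => (hed x).differentiableAt)
          (fun x => (hed x).deriv) s 0
      refine ⟨l, Real.arccos (inner ℝ (v 0) l : ℝ), hl, fun s => ?_⟩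
      rw [hconst s, Real.cos_arccos]
      · have := abs_real_inner_le_norm (v 0) l
        rw [huv 0, hl] at this
        simp only [one_mul] at this
        linarith [abs_le.mp this]
      · have := abs_real_inner_le_norm (v 0) l
        rw [huv 0, hl] at this
        simp only [one_mul] at this
        linarith [abs_le.mp this]
    · push_neg at hball
      obtain ⟨s₀, hbs₀⟩ := hball
      by_cases halal : ∀ s, al s = 0
      · -- Wb is constant; use it as the axis
        have hWconst : ∀ s, Wb s = Wb 0 := by
          intro s
          have hWd0 : ∀ x, HasDerivAt Wb 0 x := by
            intro x
            have := hWd x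
            rw [halal x, zero_smul] at this
            exact this
          exact is_const_of_deriv_eq_zero (fun x => (hWd0 x).differentiableAt)
            (fun x => (hWd0 x).deriv) s 0
        refine ⟨Wb 0, π / 2, hWnorm 0, fun s => ?_⟩
        rw [Real.cos_pi_div_two, ← hWconst s]
        exact hWv s
      · push_neg at halal
        obtain ⟨s₁, has₁⟩ := halal
        exfalso
        have hcore := coreC al ρ (fun s => (inner ℝ (uu s) l : ℝ)) (fun s => (inner ℝ (v s) l : ℝ))
          (Real.cos ε) s₀ s₁ halc hρc hρ hab (he l)
          (by
            intro s
            have := hb l s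
            rw [hlc' s] at this
            exact this)
          hbs₀ has₁
        have hbz : (inner ℝ (uu s₁) l : ℝ) = 0 :=
          (mul_eq_zero.mp (hab s₁)).resolve_left has₁
        have haz : (inner ℝ (Wb s₁) l : ℝ) = 0 := by rw [hlc' s₁, hcore.1]
        have hez : (inner ℝ (v s₁) l : ℝ) = 0 := hcore.2
        -- l is orthogonal to the full frame at s₁, contradiction
        have hξl : (inner ℝ (ξ s₁) l : ℝ) = 0 := by
          have hexp : ξ s₁ = c s₁ • Wb s₁ + k s₁ • uu s₁ := by
            rw [hWb, huu]
            match_scalars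
            · first | ring1 | linear_combination -hck1 s₁
            · first | ring1 | linear_combination -hck1 s₁
          rw [hexp, inner_add_left, real_inner_smul_left, real_inner_smul_left, haz, hbz]
          ring
        have hμl : (inner ℝ (μ s₁) l : ℝ) = 0 := by
          have hexp : μ s₁ = (-(k s₁)) • Wb s₁ + c s₁ • uu s₁ := by
            rw [hWb, huu]
            match_scalars
            · first | ring1 | linear_combination -hck1 s₁
            · first | ring1 | linear_combination -hck1 s₁
          rw [hexp, inner_add_left, real_inner_smul_left, real_inner_smul_left, haz, hbz]
          ring
        have := orth3 (ξ s₁) (μ s₁) (v s₁) l (huξ s₁) (huμ s₁) (huv s₁)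
          (hξμ s₁) (hξv s₁) (hμv s₁) hξl hμl hez
        rw [this] at hl
        simp at hl
  · -- v-helix → W_o-helix
    rintro ⟨d, ω, hd, hdc⟩
    have hdconstfun : (fun t => (inner ℝ (v t) d : ℝ)) = fun _ => Real.cos ω := funext hdc
    have hbz : ∀ s, (inner ℝ (uu s) d : ℝ) = 0 := by
      intro s
      have h0 : HasDerivAt (fun t => (inner ℝ (v t) d : ℝ)) 0 s := by
        rw [hdconstfun]; exact hasDerivAt_const s _
      have h1 := (he d s).unique h0
      have h2 : ρ s * (inner ℝ (uu s) d : ℝ) = 0 := by linarith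
      exact (mul_eq_zero.mp h2).resolve_left (ne_of_gt (hρ s))
    have had : ∀ s, HasDerivAt (fun t => (inner ℝ (Wb t) d : ℝ)) 0 s := by
      intro s
      have := ha d s
      rw [hbz s, mul_zero] at this
      exact this
    have hconst : ∀ s, (inner ℝ (Wb s) d : ℝ) = (inner ℝ (Wb 0) d : ℝ) := by
      intro s
      exact is_const_of_deriv_eq_zero (fun x => (had x).differentiableAt)
        (fun x => (had x).deriv) s 0
    refine ⟨d, Real.arccos (inner ℝ (Wb 0) d : ℝ), hd, fun s => ?_⟩
    have hb1 : |(inner ℝ (Wb 0) d : ℝ)| ≤ 1 := by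
      have := abs_real_inner_le_norm (Wb 0) d
      rw [hWnorm 0, hd] at this
      simpa using this
    have := hconst s
    rw [hWb] at this ⊢
    rw [this, Real.cos_arccos (by linarith [abs_le.mp hb1]) (by linarith [abs_le.mp hb1])]


theorem stmt18
    (ξ μ v : ℝ → EuclideanSpace ℝ (Fin 3)) (G K T : ℝ → ℝ)
    (hξs : ContDiff ℝ (⊤ : ℕ∞) ξ) (hμs : ContDiff ℝ (⊤ : ℕ∞) μ) (hvs : ContDiff ℝ (⊤ : ℕ∞) v)
    (hGs : ContDiff ℝ (⊤ : ℕ∞) G) (hKs : ContDiff ℝ (⊤ : ℕ∞) K) (hTs : ContDiff ℝ (⊤ : ℕ∞) T)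
    (huξ : ∀ s, ‖ξ s‖ = 1) (huμ : ∀ s, ‖μ s‖ = 1) (huv : ∀ s, ‖v s‖ = 1)
    (hξμ : ∀ s, (inner ℝ (ξ s) (μ s) : ℝ) = 0)
    (hξv : ∀ s, (inner ℝ (ξ s) (v s) : ℝ) = 0)
    (hμv : ∀ s, (inner ℝ (μ s) (v s) : ℝ) = 0)
    (hdξ : ∀ s, HasDerivAt ξ (G s • μ s + K s • v s) s)
    (hdμ : ∀ s, HasDerivAt μ (-(G s) • ξ s + T s • v s) s)
    (hdv : ∀ s, HasDerivAt v (-(K s) • ξ s - T s • μ s) s)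
    (hTK : ∀ s, T s ^ 2 + K s ^ 2 ≠ 0) :
    (∃ (l : EuclideanSpace ℝ (Fin 3)) (ε : ℝ), ‖l‖ = 1 ∧
        ∀ s, (inner ℝ ((Real.sqrt (T s ^ 2 + K s ^ 2))⁻¹ • (T s • ξ s - K s • μ s)) l : ℝ) = Real.cos ε) ↔
      (∃ (d : EuclideanSpace ℝ (Fin 3)) (ω : ℝ), ‖d‖ = 1 ∧ ∀ s, (inner ℝ (v s) d : ℝ) = Real.cos ω) := by
  set ρ : ℝ → ℝ := fun s => Real.sqrt (T s ^ 2 + K s ^ 2) with hρdef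
  have hNpos : ∀ s, 0 < T s ^ 2 + K s ^ 2 := by
    intro s
    rcases lt_or_eq_of_le (by positivity : (0:ℝ) ≤ T s ^ 2 + K s ^ 2) with h | h
    · exact h
    · exact absurd h.symm (hTK s)
  have hρ : ∀ s, 0 < ρ s := fun s => Real.sqrt_pos.2 (hNpos s)
  have hρne : ∀ s, ρ s ≠ 0 := fun s => ne_of_gt (hρ s)
  have hρsq : ∀ s, ρ s ^ 2 = T s ^ 2 + K s ^ 2 := fun s => Real.sq_sqrt (hNpos s).le
  set c : ℝ → ℝ := fun s => T s / ρ s with hcdef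
  set k : ℝ → ℝ := fun s => K s / ρ s with hkdef
  -- smoothness of ρ, c, k
  have hρCD : ContDiff ℝ (⊤ : ℕ∞) ρ := by
    rw [contDiff_iff_contDiffAt]
    intro s
    exact (Real.contDiffAt_sqrt (ne_of_gt (hNpos s))).comp s
      (((hTs.contDiffAt).pow 2).add ((hKs.contDiffAt).pow 2))
  have hcCD : ContDiff ℝ (⊤ : ℕ∞) c := hTs.div hρCD hρne
  have hkCD : ContDiff ℝ (⊤ : ℕ∞) k := hKs.div hρCD hρne
  have hc' : ∀ s, HasDerivAt c (deriv c s) s :=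
    fun s => ((hcCD.differentiable (by simp)) s).hasDerivAt
  have hk' : ∀ s, HasDerivAt k (deriv k s) s :=
    fun s => ((hkCD.differentiable (by simp)) s).hasDerivAt
  have hc'c : Continuous (deriv c) := hcCD.continuous_deriv (by simp)
  have hk'c : Continuous (deriv k) := hkCD.continuous_deriv (by simp)
  have hck1 : ∀ s, c s ^ 2 + k s ^ 2 = 1 := by
    intro s
    rw [hcdef, hkdef, div_pow, div_pow, ← add_div, hρsq s]
    exact div_self (ne_of_gt (hNpos s))
  have hck2 : ∀ s, c s * deriv c s + k s * deriv k s = 0 := by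
    intro s
    have hder : HasDerivAt (fun t => c t ^ 2 + k t ^ 2)
        ((2:ℕ) * c s ^ 1 * deriv c s + (2:ℕ) * k s ^ 1 * deriv k s) s :=
      ((hc' s).pow 2).add ((hk' s).pow 2)
    have hfun : (fun t => c t ^ 2 + k t ^ 2) = fun _ => (1:ℝ) := funext hck1
    rw [hfun] at hder
    have h0 := hder.unique (hasDerivAt_const s 1)
    simp only [pow_one, Nat.cast_ofNat] at h0
    linarith
  have hTc : ∀ s, ρ s * c s = T s := by
    intro s
    rw [hcdef, mul_comm, div_mul_cancel₀ _ (hρne s)]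
  have hKk : ∀ s, ρ s * k s = K s := by
    intro s
    rw [hkdef, mul_comm, div_mul_cancel₀ _ (hρne s)]
  have hdξ' : ∀ s, HasDerivAt ξ (G s • μ s + (ρ s * k s) • v s) s := by
    intro s; rw [hKk s]; exact hdξ s
  have hdμ' : ∀ s, HasDerivAt μ (-(G s) • ξ s + (ρ s * c s) • v s) s := by
    intro s; rw [hTc s]; exact hdμ s
  have hdv' : ∀ s, HasDerivAt v (-(ρ s * k s) • ξ s - (ρ s * c s) • μ s) s := by
    intro s; rw [hKk s, hTc s]; exact hdv s
  have hWrw : ∀ s, (Real.sqrt (T s ^ 2 + K s ^ 2))⁻¹ • (T s • ξ s - K s • μ s)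
      = c s • ξ s - k s • μ s := by
    intro s
    rw [smul_sub, smul_smul, smul_smul]
    rw [hcdef, hkdef]
    rw [inv_mul_eq_div, inv_mul_eq_div]
  simp only [hWrw]
  exact key ξ μ v c k G ρ (deriv c) (deriv k) huξ huμ huv hξμ hξv hμv
    hGs.continuous (Real.continuous_sqrt.comp ((hTs.continuous.pow 2).add (hKs.continuous.pow 2)))
    hc'c hk'c hρ hc' hk' hck1 hck2 hdξ' hdμ' hdv'
end
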